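/- arXiv:1705.06604 — 7 statements merged into one kernel-verified Lean document; each statement's English description precedes it below -/
import Mathlib

section
/- The set Ω = {x ∈ ℝ^{2N} : x ≥ 0 componentwise and x_i + x_{N+i} ≤ 1 for all i = 1,…,N} is positively invariant for the generic URTU model: every solution (R(t), T(t)) of the system whose initial value (R(0), T(0)) lies in Ω satisfies (R(t), T(t)) ∈ Ω for all t ≥ 0. -/
open Filter Topology
open Set



/-- A function independent of coordinate `j` has zero directional derivative in
direction `Pi.single j 1`. -/
lemma urtu_fderiv_single_zero {N : ℕ} (F : (Fin N → ℝ) → ℝ) (hF : Differentiable ℝ F)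
    (j : Fin N) (hdep : ∀ x y : Fin N → ℝ, (∀ k, k ≠ j → x k = y k) → F x = F y)
    (p : Fin N → ℝ) : fderiv ℝ F p (Pi.single j 1) = 0 := by
  have hline : HasDerivAt (fun s : ℝ => p + s • (Pi.single j 1 : Fin N → ℝ)) (Pi.single j 1) 0 := by
    simpa using ((hasDerivAt_id (0:ℝ)).smul_const ((Pi.single j 1 : Fin N → ℝ))).const_add p
  have hcomp : HasDerivAt (fun s : ℝ => F (p + s • (Pi.single j 1 : Fin N → ℝ)))
      (fderiv ℝ F p (Pi.single j 1)) 0 := by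
    have h := (hF (p + (0:ℝ) • (Pi.single j 1 : Fin N → ℝ))).hasFDerivAt.comp_hasDerivAt 0 hline
    simp only [zero_smul, add_zero] at h
    exact h
  have hconst : (fun s : ℝ => F (p + s • (Pi.single j 1 : Fin N → ℝ))) = fun _ => F p := by
    funext s
    apply hdep
    intro k hk
    simp [Pi.single_eq_of_ne hk]
  rw [hconst] at hcomp
  exact hcomp.unique (hasDerivAt_const 0 (F p))

/-- Directional derivative in a nonnegative direction is nonnegative at a nonnegative point. -/
lemma urtu_fderiv_dir_nonneg {N : ℕ} (F : (Fin N → ℝ) → ℝ) (hF : Differentiable ℝ F)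
    (P : Fin N → Prop)
    (hpos : ∀ j, P j → ∀ x : Fin N → ℝ, (∀ k, 0 ≤ x k) →
      0 < fderiv ℝ F x (Pi.single j 1))
    (hdep : ∀ j, ¬ P j → ∀ x y : Fin N → ℝ, (∀ k, k ≠ j → x k = y k) → F x = F y)
    (p v : Fin N → ℝ) (hp : ∀ k, 0 ≤ p k) (hv : ∀ k, 0 ≤ v k) :
    0 ≤ fderiv ℝ F p v := by
  classical
  have hvsum : v = ∑ j : Fin N, v j • (Pi.single j 1 : Fin N → ℝ) := by
    funext k
    simp [Finset.sum_apply, Pi.single_apply]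
  rw [hvsum, map_sum]
  refine Finset.sum_nonneg fun j _ => ?_
  rw [map_smul]
  by_cases hPj : P j
  · exact mul_nonneg (hv j) (le_of_lt (hpos j hPj p hp))
  · rw [urtu_fderiv_single_zero F hF j (hdep j hPj) p]
    simp

/-- Nonnegativity of the spreading-rate component on the nonnegative orthant. -/
lemma urtu_nonneg_on_orthant {N : ℕ} (F : (Fin N → ℝ) → ℝ) (hF : Differentiable ℝ F)
    (hz : F 0 = 0) (P : Fin N → Prop)
    (hpos : ∀ j, P j → ∀ x : Fin N → ℝ, (∀ k, 0 ≤ x k) →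
      0 < fderiv ℝ F x (Pi.single j 1))
    (hdep : ∀ j, ¬ P j → ∀ x y : Fin N → ℝ, (∀ k, k ≠ j → x k = y k) → F x = F y)
    (x : Fin N → ℝ) (hx : ∀ k, 0 ≤ x k) : 0 ≤ F x := by
  have hds : ∀ s : ℝ, HasDerivAt (fun s : ℝ => F (s • x)) (fderiv ℝ F (s • x) x) s := by
    intro s
    have hline : HasDerivAt (fun s : ℝ => s • x) x s := by
      simpa using (hasDerivAt_id s).smul_const x
    exact (hF (s • x)).hasFDerivAt.comp_hasDerivAt s hline
  have hmono : MonotoneOn (fun s : ℝ => F (s • x)) (Icc (0:ℝ) 1) := by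
    apply monotoneOn_of_deriv_nonneg (convex_Icc 0 1)
    · exact (hF.continuous.comp (continuous_id.smul continuous_const)).continuousOn
    · intro s _
      exact (hds s).differentiableAt.differentiableWithinAt
    · intro s hs
      rw [interior_Icc] at hs
      rw [(hds s).deriv]
      exact urtu_fderiv_dir_nonneg F hF P hpos hdep (s • x) x
        (fun k => mul_nonneg (le_of_lt hs.1) (hx k)) hx
  have h01 := hmono (left_mem_Icc.2 zero_le_one) (right_mem_Icc.2 zero_le_one) zero_le_one
  simpa [hz] using h01

/-- Continuity of a finite sup' of continuous functions. -/
lemma urtu_continuousOn_sup' {ι : Type*} {s : Finset ι} (hs : s.Nonempty)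
    {f : ι → ℝ → ℝ} {t : Set ℝ} (h : ∀ i ∈ s, ContinuousOn (f i) t) :
    ContinuousOn (fun x => s.sup' hs (fun i => f i x)) t :=
  ContinuousOn.finset_sup'_apply hs h



/-- The `3N` constraint functions of the set `Ω`. -/
def URTUg {N : ℕ} (R T : ℝ → Fin N → ℝ) : Fin N ⊕ (Fin N ⊕ Fin N) → ℝ → ℝ
  | Sum.inl i, t => -R t i
  | Sum.inr (Sum.inl i), t => -T t i
  | Sum.inr (Sum.inr i), t => R t i + T t i - 1

/-- The time derivatives of the constraint functions along a solution. -/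
def URTUd {N : ℕ} (δR δT : Fin N → ℝ) (fU fT gU gR : (Fin N → ℝ) → (Fin N → ℝ))
    (R T : ℝ → Fin N → ℝ) : Fin N ⊕ (Fin N ⊕ Fin N) → ℝ → ℝ
  | Sum.inl i, t => -((1 - R t i - T t i) * fU (R t) i - δR i * R t i
      + T t i * fT (R t) i - R t i * gR (T t) i)
  | Sum.inr (Sum.inl i), t => -((1 - R t i - T t i) * gU (T t) i - δT i * T t i
      + R t i * gR (T t) i - T t i * fT (R t) i)
  | Sum.inr (Sum.inr i), t =>
      ((1 - R t i - T t i) * fU (R t) i - δR i * R t i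
        + T t i * fT (R t) i - R t i * gR (T t) i)
      + ((1 - R t i - T t i) * gU (T t) i - δT i * T t i
        + R t i * gR (T t) i - T t i * fT (R t) i)

lemma urtu_univ_nonempty {N : ℕ} (hN : 0 < N) :
    (Finset.univ : Finset (Fin N ⊕ (Fin N ⊕ Fin N))).Nonempty :=
  ⟨Sum.inl ⟨0, hN⟩, Finset.mem_univ _⟩

/-- The maximal constraint violation. -/
noncomputable def URTUphi {N : ℕ} (hN : 0 < N) (R T : ℝ → Fin N → ℝ) (t : ℝ) : ℝ :=
  Finset.univ.sup' (urtu_univ_nonempty hN) (fun k => URTUg R T k t)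

lemma URTUg_le_phi {N : ℕ} (hN : 0 < N) (R T : ℝ → Fin N → ℝ)
    (k : Fin N ⊕ (Fin N ⊕ Fin N)) (t : ℝ) :
    URTUg R T k t ≤ URTUphi hN R T t := by
  exact Finset.le_sup' (α := ℝ) (fun k => URTUg R T k t) (Finset.mem_univ k)

open Classical in
/-- The active set at time `t`. -/
noncomputable def URTUactive {N : ℕ} (hN : 0 < N) (R T : ℝ → Fin N → ℝ) (t : ℝ) :
    Finset (Fin N ⊕ (Fin N ⊕ Fin N)) :=
  Finset.univ.filter (fun k => URTUg R T k t = URTUphi hN R T t)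

lemma URTUactive_nonempty {N : ℕ} (hN : 0 < N) (R T : ℝ → Fin N → ℝ) (t : ℝ) :
    (URTUactive hN R T t).Nonempty := by
  classical
  obtain ⟨k, hk, hk2⟩ := Finset.exists_mem_eq_sup' (urtu_univ_nonempty hN)
    (fun k => URTUg R T k t)
  refine ⟨k, ?_⟩
  simp only [URTUactive, Finset.mem_filter, Finset.mem_univ, true_and]
  exact hk2.symm

lemma URTUactive_mem {N : ℕ} (hN : 0 < N) (R T : ℝ → Fin N → ℝ) (t : ℝ)
    {k : Fin N ⊕ (Fin N ⊕ Fin N)} (hk : k ∈ URTUactive hN R T t) :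
    URTUg R T k t = URTUphi hN R T t := by
  classical
  simpa only [URTUactive, Finset.mem_filter, Finset.mem_univ, true_and] using hk

/-- The Dini-type derivative bound: max of the derivatives of the active constraints. -/
noncomputable def URTUD {N : ℕ} (hN : 0 < N) (δR δT : Fin N → ℝ)
    (fU fT gU gR : (Fin N → ℝ) → (Fin N → ℝ)) (R T : ℝ → Fin N → ℝ) (t : ℝ) : ℝ :=
  (URTUactive hN R T t).sup' (URTUactive_nonempty hN R T t)
    (fun k => URTUd δR δT fU fT gU gR R T k t)

lemma URTUd_le_D {N : ℕ} (hN : 0 < N) (δR δT : Fin N → ℝ)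
    (fU fT gU gR : (Fin N → ℝ) → (Fin N → ℝ)) (R T : ℝ → Fin N → ℝ) (t : ℝ)
    {k : Fin N ⊕ (Fin N ⊕ Fin N)} (hk : k ∈ URTUactive hN R T t) :
    URTUd δR δT fU fT gU gR R T k t ≤ URTUD hN δR δT fU fT gU gR R T t := by
  exact Finset.le_sup' (α := ℝ) (fun k => URTUd δR δT fU fT gU gR R T k t) hk

set_option maxHeartbeats 1000000 in
/-- Positive invariance of Ω for the generic URTU model. -/
theorem URTU_Omega_positively_invariant
    {N : ℕ} (hN : 0 < N)
    (ER ET : Fin N → Fin N → Prop)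
    (hERconn : ∀ i j : Fin N, Relation.ReflTransGen ER i j)
    (hETconn : ∀ i j : Fin N, Relation.ReflTransGen ET i j)
    (δR δT : Fin N → ℝ) (hδR : ∀ i, 0 < δR i) (hδT : ∀ i, 0 < δT i)
    (fU fT gU gR : (Fin N → ℝ) → (Fin N → ℝ))
    (hfUsm : ContDiff ℝ 2 fU)
    (hfTsm : ContDiff ℝ 2 fT)
    (hgUsm : ContDiff ℝ 2 gU)
    (hgRsm : ContDiff ℝ 2 gR)
    (hfUdep : ∀ (i j : Fin N), ¬ ER i j → ∀ x y : Fin N → ℝ,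
      (∀ k, k ≠ j → x k = y k) → fU x i = fU y i)
    (hfTdep : ∀ (i j : Fin N), ¬ ER i j → ∀ x y : Fin N → ℝ,
      (∀ k, k ≠ j → x k = y k) → fT x i = fT y i)
    (hgUdep : ∀ (i j : Fin N), ¬ ET i j → ∀ x y : Fin N → ℝ,
      (∀ k, k ≠ j → x k = y k) → gU x i = gU y i)
    (hgRdep : ∀ (i j : Fin N), ¬ ET i j → ∀ x y : Fin N → ℝ,
      (∀ k, k ≠ j → x k = y k) → gR x i = gR y i)
    (hfUz : fU 0 = 0) (hfTz : fT 0 = 0) (hgUz : gU 0 = 0) (hgRz : gR 0 = 0)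
    (hfUpos : ∀ (i j : Fin N), ER i j → ∀ x : Fin N → ℝ, (∀ k, 0 ≤ x k) →
      0 < fderiv ℝ (fun z => fU z i) x (Pi.single j 1))
    (hfTpos : ∀ (i j : Fin N), ER i j → ∀ x : Fin N → ℝ, (∀ k, 0 ≤ x k) →
      0 < fderiv ℝ (fun z => fT z i) x (Pi.single j 1))
    (hgUpos : ∀ (i j : Fin N), ET i j → ∀ x : Fin N → ℝ, (∀ k, 0 ≤ x k) →
      0 < fderiv ℝ (fun z => gU z i) x (Pi.single j 1))
    (hgRpos : ∀ (i j : Fin N), ET i j → ∀ x : Fin N → ℝ, (∀ k, 0 ≤ x k) →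
      0 < fderiv ℝ (fun z => gR z i) x (Pi.single j 1))
    (hfUconc : ∀ (i j k : Fin N), ∀ x : Fin N → ℝ, (∀ l, 0 ≤ x l) →
      fderiv ℝ (fun z => fderiv ℝ (fun w => fU w i) z (Pi.single j 1)) x
        (Pi.single k 1) ≤ 0)
    (hfTconc : ∀ (i j k : Fin N), ∀ x : Fin N → ℝ, (∀ l, 0 ≤ x l) →
      fderiv ℝ (fun z => fderiv ℝ (fun w => fT w i) z (Pi.single j 1)) x
        (Pi.single k 1) ≤ 0)
    (hgUconc : ∀ (i j k : Fin N), ∀ x : Fin N → ℝ, (∀ l, 0 ≤ x l) →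
      fderiv ℝ (fun z => fderiv ℝ (fun w => gU w i) z (Pi.single j 1)) x
        (Pi.single k 1) ≤ 0)
    (hgRconc : ∀ (i j k : Fin N), ∀ x : Fin N → ℝ, (∀ l, 0 ≤ x l) →
      fderiv ℝ (fun z => fderiv ℝ (fun w => gR w i) z (Pi.single j 1)) x
        (Pi.single k 1) ≤ 0)
    (hford : ∀ (x : Fin N → ℝ) (i : Fin N), fT x i ≤ fU x i)
    (hgord : ∀ (x : Fin N → ℝ) (i : Fin N), gR x i ≤ gU x i)
    (R T : ℝ → Fin N → ℝ)
    (hsolR : ∀ (i : Fin N) (t : ℝ), 0 ≤ t → HasDerivAt (fun τ => R τ i)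
      ((1 - R t i - T t i) * fU (R t) i - δR i * R t i
        + T t i * fT (R t) i - R t i * gR (T t) i) t)
    (hsolT : ∀ (i : Fin N) (t : ℝ), 0 ≤ t → HasDerivAt (fun τ => T τ i)
      ((1 - R t i - T t i) * gU (T t) i - δT i * T t i
        + R t i * gR (T t) i - T t i * fT (R t) i) t)
    (hinit : ∀ i : Fin N, 0 ≤ R 0 i ∧ 0 ≤ T 0 i ∧ R 0 i + T 0 i ≤ 1)
    :
    ∀ t : ℝ, 0 ≤ t → ∀ i : Fin N, 0 ≤ R t i ∧ 0 ≤ T t i ∧ R t i + T t i ≤ 1 := by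
  classical
  -- Derivatives of the constraint functions along the solution.
  have hgd : ∀ (k : Fin N ⊕ (Fin N ⊕ Fin N)) (t : ℝ), 0 ≤ t →
      HasDerivAt (fun τ => URTUg R T k τ) (URTUd δR δT fU fT gU gR R T k t) t := by
    rintro (i | i | i) t ht
    · exact (hsolR i t ht).neg
    · exact (hsolT i t ht).neg
    · exact ((hsolR i t ht).add (hsolT i t ht)).sub_const 1
  -- Differentiability of components.
  have hdiff : ∀ (F : (Fin N → ℝ) → (Fin N → ℝ)), ContDiff ℝ 2 F →
      ∀ i, Differentiable ℝ (fun z => F z i) := fun F hF i =>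
    (contDiff_pi.mp hF i).differentiable (by norm_num)
  -- Nonnegativity of the spreading rates on the nonnegative orthant.
  have hfUnn : ∀ x : Fin N → ℝ, (∀ k, 0 ≤ x k) → ∀ i, 0 ≤ fU x i := by
    intro x hx i
    exact urtu_nonneg_on_orthant (fun z => fU z i) (hdiff fU hfUsm i)
      (by show fU 0 i = 0; rw [hfUz]; rfl) (fun j => ER i j)
      (fun j hj => hfUpos i j hj) (fun j hj => hfUdep i j hj) x hx
  have hfTnn : ∀ x : Fin N → ℝ, (∀ k, 0 ≤ x k) → ∀ i, 0 ≤ fT x i := by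
    intro x hx i
    exact urtu_nonneg_on_orthant (fun z => fT z i) (hdiff fT hfTsm i)
      (by show fT 0 i = 0; rw [hfTz]; rfl) (fun j => ER i j)
      (fun j hj => hfTpos i j hj) (fun j hj => hfTdep i j hj) x hx
  have hgUnn : ∀ x : Fin N → ℝ, (∀ k, 0 ≤ x k) → ∀ i, 0 ≤ gU x i := by
    intro x hx i
    exact urtu_nonneg_on_orthant (fun z => gU z i) (hdiff gU hgUsm i)
      (by show gU 0 i = 0; rw [hgUz]; rfl) (fun j => ET i j)
      (fun j hj => hgUpos i j hj) (fun j hj => hgUdep i j hj) x hx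
  have hgRnn : ∀ x : Fin N → ℝ, (∀ k, 0 ≤ x k) → ∀ i, 0 ≤ gR x i := by
    intro x hx i
    exact urtu_nonneg_on_orthant (fun z => gR z i) (hdiff gR hgRsm i)
      (by show gR 0 i = 0; rw [hgRz]; rfl) (fun j => ET i j)
      (fun j hj => hgRpos i j hj) (fun j hj => hgRdep i j hj) x hx
  -- The compact convex box [-1,3]^N.
  have hboxmem : ∀ x : Fin N → ℝ, (∀ j, -1 ≤ x j ∧ x j ≤ 3) →
      x ∈ Metric.closedBall (fun _ => (1:ℝ)) 2 := by
    intro x hx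
    rw [Metric.mem_closedBall, dist_pi_le_iff (by norm_num : (0:ℝ) ≤ 2)]
    intro j
    rw [Real.dist_eq, abs_le]
    exact ⟨by linarith [(hx j).1], by linarith [(hx j).2]⟩
  -- Uniform bounds and Lipschitz estimates on the box.
  have hkey : ∀ F : (Fin N → ℝ) → (Fin N → ℝ), ContDiff ℝ 2 F →
      ∃ C : ℝ, 0 ≤ C ∧ (∀ x ∈ Metric.closedBall (fun _ => (1:ℝ)) 2, ∀ i, |F x i| ≤ C) ∧
        (∀ x ∈ Metric.closedBall (fun _ => (1:ℝ)) 2,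
          ∀ y ∈ Metric.closedBall (fun _ => (1:ℝ)) 2,
          ∀ i, |F x i - F y i| ≤ C * dist x y) := by
    intro F hF
    obtain ⟨M0, hM0⟩ := (isCompact_closedBall (fun _ => (1:ℝ)) 2).exists_bound_of_continuousOn
      hF.continuous.continuousOn
    obtain ⟨C0, hC0⟩ := (isCompact_closedBall (fun _ => (1:ℝ)) 2).exists_bound_of_continuousOn
      ((hF.continuous_fderiv (by norm_num)).continuousOn)
    refine ⟨max (max M0 C0) 0, le_max_right _ _, ?_, ?_⟩
    · intro x hx i
      have h1 : ‖F x i‖ ≤ ‖F x‖ := norm_le_pi_norm (F x) i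
      rw [Real.norm_eq_abs] at h1
      exact h1.trans ((hM0 x hx).trans (le_max_of_le_left (le_max_left _ _)))
    · intro x hx y hy i
      have h2 : ‖F x - F y‖ ≤ max (max M0 C0) 0 * ‖x - y‖ :=
        (convex_closedBall _ _).norm_image_sub_le_of_norm_fderiv_le
          (fun z _ => (hF.differentiable (by norm_num)) z)
          (fun z hz => (hC0 z hz).trans (le_max_of_le_left (le_max_right _ _))) hy hx
      have h3 : ‖(F x - F y) i‖ ≤ ‖F x - F y‖ := norm_le_pi_norm (F x - F y) i
      rw [Real.norm_eq_abs] at h3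
      simp only [Pi.sub_apply] at h3
      rw [dist_eq_norm]
      exact h3.trans h2
  obtain ⟨CU, hCU0, hCUb, hCUl⟩ := hkey fU hfUsm
  obtain ⟨CT, hCT0, hCTb, hCTl⟩ := hkey fT hfTsm
  obtain ⟨CGU, hCGU0, hCGUb, hCGUl⟩ := hkey gU hgUsm
  obtain ⟨CGR, hCGR0, hCGRb, hCGRl⟩ := hkey gR hgRsm
  set M : ℝ := max (max CU CT) (max CGU CGR) with hMdef
  have hCUM : CU ≤ M := le_max_of_le_left (le_max_left _ _)
  have hCTM : CT ≤ M := le_max_of_le_left (le_max_right _ _)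
  have hCGUM : CGU ≤ M := le_max_of_le_right (le_max_left _ _)
  have hCGRM : CGR ≤ M := le_max_of_le_right (le_max_right _ _)
  have hM0 : 0 ≤ M := hCU0.trans hCUM
  have hMfU : ∀ x ∈ Metric.closedBall (fun _ => (1:ℝ)) 2, ∀ i, |fU x i| ≤ M :=
    fun x hx i => (hCUb x hx i).trans hCUM
  have hMfT : ∀ x ∈ Metric.closedBall (fun _ => (1:ℝ)) 2, ∀ i, |fT x i| ≤ M :=
    fun x hx i => (hCTb x hx i).trans hCTM
  have hMgU : ∀ x ∈ Metric.closedBall (fun _ => (1:ℝ)) 2, ∀ i, |gU x i| ≤ M :=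
    fun x hx i => (hCGUb x hx i).trans hCGUM
  have hMgR : ∀ x ∈ Metric.closedBall (fun _ => (1:ℝ)) 2, ∀ i, |gR x i| ≤ M :=
    fun x hx i => (hCGRb x hx i).trans hCGRM
  have hMfUl : ∀ x ∈ Metric.closedBall (fun _ => (1:ℝ)) 2,
      ∀ y ∈ Metric.closedBall (fun _ => (1:ℝ)) 2, ∀ i, |fU x i - fU y i| ≤ M * dist x y :=
    fun x hx y hy i => (hCUl x hx y hy i).trans (mul_le_mul_of_nonneg_right hCUM dist_nonneg)
  have hMfTl : ∀ x ∈ Metric.closedBall (fun _ => (1:ℝ)) 2,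
      ∀ y ∈ Metric.closedBall (fun _ => (1:ℝ)) 2, ∀ i, |fT x i - fT y i| ≤ M * dist x y :=
    fun x hx y hy i => (hCTl x hx y hy i).trans (mul_le_mul_of_nonneg_right hCTM dist_nonneg)
  have hMgUl : ∀ x ∈ Metric.closedBall (fun _ => (1:ℝ)) 2,
      ∀ y ∈ Metric.closedBall (fun _ => (1:ℝ)) 2, ∀ i, |gU x i - gU y i| ≤ M * dist x y :=
    fun x hx y hy i => (hCGUl x hx y hy i).trans (mul_le_mul_of_nonneg_right hCGUM dist_nonneg)
  have hMgRl : ∀ x ∈ Metric.closedBall (fun _ => (1:ℝ)) 2,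
      ∀ y ∈ Metric.closedBall (fun _ => (1:ℝ)) 2, ∀ i, |gR x i - gR y i| ≤ M * dist x y :=
    fun x hx y hy i => (hCGRl x hx y hy i).trans (mul_le_mul_of_nonneg_right hCGRM dist_nonneg)
  -- Clamping estimate: values at slightly-negative points.
  have hclamp : ∀ (F : (Fin N → ℝ) → (Fin N → ℝ)),
      (∀ x ∈ Metric.closedBall (fun _ => (1:ℝ)) 2, ∀ i, |F x i| ≤ M) →
      (∀ x ∈ Metric.closedBall (fun _ => (1:ℝ)) 2,
        ∀ y ∈ Metric.closedBall (fun _ => (1:ℝ)) 2, ∀ i, |F x i - F y i| ≤ M * dist x y) →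
      (∀ x : Fin N → ℝ, (∀ k, 0 ≤ x k) → ∀ i, 0 ≤ F x i) →
      ∀ η : ℝ, 0 < η → η ≤ 1 → ∀ v : Fin N → ℝ, (∀ j, -η ≤ v j ∧ v j ≤ 3) →
      ∀ i, |F v i| ≤ M ∧ -(M * η) ≤ F v i := by
    intro F hb hl hnn η hη hη1 v hv i
    have hvbox : v ∈ Metric.closedBall (fun _ => (1:ℝ)) 2 :=
      hboxmem v (fun j => ⟨by linarith [(hv j).1], (hv j).2⟩)
    have hwb : ∀ j, (-1:ℝ) ≤ max (v j) 0 ∧ max (v j) 0 ≤ 3 :=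
      fun j => ⟨le_trans (by norm_num) (le_max_right _ _), max_le (hv j).2 (by norm_num)⟩
    have hwbox := hboxmem (fun j => max (v j) 0) hwb
    have hdist : dist v (fun j => max (v j) 0) ≤ η := by
      rw [dist_pi_le_iff hη.le]
      intro j
      rw [Real.dist_eq, abs_le]
      rcases le_or_gt (v j) 0 with h | h
      · rw [max_eq_right h]
        constructor
        · linarith [(hv j).1]
        · linarith
      · rw [max_eq_left h.le]
        constructor
        · linarith
        · linarith
    refine ⟨hb v hvbox i, ?_⟩
    have h1 := hl v hvbox (fun j => max (v j) 0) hwbox i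
    have h2 := hnn (fun j => max (v j) 0) (fun k => le_max_right _ _) i
    have h3 : M * dist v (fun j => max (v j) 0) ≤ M * η :=
      mul_le_mul_of_nonneg_left hdist hM0
    have h4 := abs_le.mp (h1.trans h3)
    linarith [h4.1]
  -- The Gronwall constant K.
  have hNne : (Finset.univ : Finset (Fin N)).Nonempty := ⟨⟨0, hN⟩, Finset.mem_univ _⟩
  set Δ : ℝ := Finset.univ.sup' hNne (fun i => δR i + δT i) with hΔdef
  have hΔ : ∀ i, δR i + δT i ≤ Δ :=
    fun i => Finset.le_sup' (fun i => δR i + δT i) (Finset.mem_univ i)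
  have hΔ0 : 0 ≤ Δ :=
    le_trans (add_pos (hδR ⟨0, hN⟩) (hδT ⟨0, hN⟩)).le (hΔ ⟨0, hN⟩)
  set K : ℝ := 11 * M + Δ + 1 with hKdef
  have hK0 : 0 ≤ K := by rw [hKdef]; linarith
  -- Main fencing estimate.
  have main : ∀ b ε : ℝ, 0 < ε → ε ≤ Real.exp (-(K * b)) →
      ∀ t ∈ Set.Icc (0:ℝ) b, URTUphi hN R T t ≤ ε * Real.exp (K * t) := by
    intro b ε hε hεb t ht
    refine image_le_of_liminf_slope_right_lt_deriv_boundary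
      (f := URTUphi hN R T) (f' := URTUD hN δR δT fU fT gU gR R T)
      (B := fun t => ε * Real.exp (K * t)) (B' := fun x => K * (ε * Real.exp (K * x)))
      (a := 0) (b := b) ?_ ?_ ?_ ?_ ?_ ht
    · -- continuity of φ
      unfold URTUphi
      exact urtu_continuousOn_sup' _
        (fun k _ => fun τ hτ => ((hgd k τ hτ.1).continuousAt.continuousWithinAt))
    · -- slope condition
      intro x hx r hr
      have hx0 : (0:ℝ) ≤ x := hx.1
      have hEV : ∀ᶠ z in 𝓝[>] x, ∀ k, URTUg R T k z < URTUphi hN R T x + r * (z - x) := by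
        rw [eventually_all]
        intro k
        by_cases hk : URTUg R T k x = URTUphi hN R T x
        · have hkmem : k ∈ URTUactive hN R T x := by
            simp only [URTUactive, Finset.mem_filter, Finset.mem_univ, true_and]
            exact hk
          have hdr : URTUd δR δT fU fT gU gR R T k x < r :=
            lt_of_le_of_lt (URTUd_le_D hN δR δT fU fT gU gR R T x hkmem) hr
          have hslope := hasDerivAt_iff_tendsto_slope.mp (hgd k x hx0)
          have h2 : ∀ᶠ z in 𝓝[≠] x, slope (fun τ => URTUg R T k τ) x z < r :=
            hslope.eventually_lt_const hdr
          have h3 := h2.filter_mono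
            (nhdsWithin_mono x (fun z hz => Set.mem_compl_singleton_iff.mpr (ne_of_gt hz)))
          filter_upwards [h3, self_mem_nhdsWithin] with z hz1 hz2
          have hzx : (0:ℝ) < z - x := sub_pos.2 hz2
          rw [slope_def_field] at hz1
          have h5 := (div_lt_iff₀ hzx).mp hz1
          rw [hk] at h5
          linarith
        · have hlt : URTUg R T k x < URTUphi hN R T x :=
            lt_of_le_of_ne (URTUg_le_phi hN R T k x) hk
          have h1 : Tendsto (fun z => URTUg R T k z) (𝓝[>] x) (𝓝 (URTUg R T k x)) :=
            (hgd k x hx0).continuousAt.continuousWithinAt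
          have h2 : Tendsto (fun z : ℝ => r * (z - x)) (𝓝[>] x) (𝓝 0) := by
            have h3 : Tendsto (fun z : ℝ => r * (z - x)) (𝓝 x) (𝓝 (r * (x - x))) :=
              (continuous_const.mul (continuous_id.sub continuous_const)).tendsto x
            simpa using h3.mono_left nhdsWithin_le_nhds
          have h4 : Tendsto (fun z => URTUg R T k z - r * (z - x)) (𝓝[>] x)
              (𝓝 (URTUg R T k x)) := by
            simpa using h1.sub h2
          filter_upwards [h4.eventually_lt_const hlt] with z hz
          linarith
      have hEV2 : ∀ᶠ z in 𝓝[>] x, slope (URTUphi hN R T) x z < r := by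
        filter_upwards [hEV, self_mem_nhdsWithin] with z hz1 hz2
        have hzx : (0:ℝ) < z - x := sub_pos.2 hz2
        rw [slope_def_field, div_lt_iff₀ hzx]
        have h7 : URTUphi hN R T z < URTUphi hN R T x + r * (z - x) := by
          have h8 : ∀ k ∈ (Finset.univ : Finset (Fin N ⊕ (Fin N ⊕ Fin N))),
              URTUg R T k z < URTUphi hN R T x + r * (z - x) := fun k _ => hz1 k
          rw [show URTUphi hN R T z = Finset.univ.sup' (urtu_univ_nonempty hN)
            (fun k => URTUg R T k z) from rfl]
          exact (Finset.sup'_lt_iff (urtu_univ_nonempty hN)).mpr h8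
        linarith
      exact hEV2.frequently
    · -- initial condition
      have h0 : URTUphi hN R T 0 ≤ 0 := by
        rw [show URTUphi hN R T 0 = Finset.univ.sup' (urtu_univ_nonempty hN)
          (fun k => URTUg R T k 0) from rfl, Finset.sup'_le_iff]
        rintro (i | i | i) _
        · have := (hinit i).1
          show -R 0 i ≤ 0
          linarith
        · have := (hinit i).2.1
          show -T 0 i ≤ 0
          linarith
        · have := (hinit i).2.2
          show R 0 i + T 0 i - 1 ≤ 0
          linarith
      have h1 : (0:ℝ) < ε * Real.exp (K * 0) := by positivity
      show URTUphi hN R T 0 ≤ ε * Real.exp (K * 0)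
      linarith
    · -- derivative of B
      intro x
      have h1 : HasDerivAt (fun t : ℝ => K * t) K x := by
        simpa using (hasDerivAt_id x).const_mul K
      have h2 := (h1.exp).const_mul ε
      exact h2.congr_deriv (by ring)
    · -- the key derivative bound at contact points
      intro x hx hφB
      have hη : (0:ℝ) < ε * Real.exp (K * x) := by positivity
      have hη1 : ε * Real.exp (K * x) ≤ 1 := by
        have h1 : Real.exp (K * x) ≤ Real.exp (K * b) :=
          Real.exp_le_exp.mpr (mul_le_mul_of_nonneg_left hx.2.le hK0)
        calc ε * Real.exp (K * x) ≤ Real.exp (-(K * b)) * Real.exp (K * b) :=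
              mul_le_mul hεb h1 (Real.exp_pos _).le (Real.exp_pos _).le
          _ = 1 := by rw [← Real.exp_add]; simp
      set η := ε * Real.exp (K * x) with hηdef
      have hcb : ∀ k, URTUg R T k x ≤ η :=
        fun k => (URTUg_le_phi hN R T k x).trans hφB.le
      have hRl : ∀ i, -η ≤ R x i := by
        intro i
        have h : -R x i ≤ η := hcb (Sum.inl i)
        linarith
      have hTl : ∀ i, -η ≤ T x i := by
        intro i
        have h : -T x i ≤ η := hcb (Sum.inr (Sum.inl i))
        linarith
      have hSu : ∀ i, R x i + T x i ≤ 1 + η := by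
        intro i
        have h : R x i + T x i - 1 ≤ η := hcb (Sum.inr (Sum.inr i))
        linarith
      have hRu : ∀ i, R x i ≤ 3 := by
        intro i
        have h1 := hTl i
        have h2 := hSu i
        linarith
      have hTu : ∀ i, T x i ≤ 3 := by
        intro i
        have h1 := hRl i
        have h2 := hSu i
        linarith
      have hfUc := hclamp fU hMfU hMfUl hfUnn η hη hη1 (R x) (fun j => ⟨hRl j, hRu j⟩)
      have hfTc := hclamp fT hMfT hMfTl hfTnn η hη hη1 (R x) (fun j => ⟨hRl j, hRu j⟩)
      have hgUc := hclamp gU hMgU hMgUl hgUnn η hη hη1 (T x) (fun j => ⟨hTl j, hTu j⟩)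
      have hgRc := hclamp gR hMgR hMgRl hgRnn η hη hη1 (T x) (fun j => ⟨hTl j, hTu j⟩)
      show URTUD hN δR δT fU fT gU gR R T x < K * η
      rw [show URTUD hN δR δT fU fT gU gR R T x = (URTUactive hN R T x).sup'
        (URTUactive_nonempty hN R T x) (fun k => URTUd δR δT fU fT gU gR R T k x) from rfl,
        Finset.sup'_lt_iff]
      intro k hk
      have hkact : URTUg R T k x = η := (URTUactive_mem hN R T x hk).trans hφB
      rcases k with i | i | i
      · -- R x i = -η
        have hact : -R x i = η := hkact
        have hRi : R x i = -η := by linarith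
        obtain ⟨hF1b, hF1l⟩ := hfUc i
        obtain ⟨hF2b, hF2l⟩ := hfTc i
        obtain ⟨hF4b, _⟩ := hgRc i
        have hF1u := (abs_le.mp hF1b).2
        have hF2u := (abs_le.mp hF2b).2
        have hF4l := (abs_le.mp hF4b).1
        have hTi1 := hTl i
        have hTi2 : T x i ≤ 1 + 2 * η := by
          have := hSu i
          linarith
        show -((1 - R x i - T x i) * fU (R x) i - δR i * R x i
          + T x i * fT (R x) i - R x i * gR (T x) i) < K * η
        rw [hRi, hKdef]
        nlinarith [mul_nonneg (by linarith : (0:ℝ) ≤ 1 + 2*η - T x i)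
            (by linarith : (0:ℝ) ≤ fU (R x) i + M * η),
          mul_nonneg (by linarith : (0:ℝ) ≤ T x i + η)
            (by linarith : (0:ℝ) ≤ fT (R x) i + M * η),
          mul_nonneg (by linarith : (0:ℝ) ≤ T x i + η) (mul_nonneg hM0 hη.le),
          mul_nonneg (by linarith : (0:ℝ) ≤ 1 + 2*η - T x i) (mul_nonneg hM0 hη.le),
          mul_nonneg hη.le (by linarith : (0:ℝ) ≤ M - fU (R x) i),
          mul_nonneg hη.le (by linarith : (0:ℝ) ≤ M - fT (R x) i),
          mul_nonneg hη.le (by linarith : (0:ℝ) ≤ M + gR (T x) i),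
          mul_nonneg (mul_nonneg hM0 hη.le) (by linarith : (0:ℝ) ≤ 1 - η),
          mul_pos (hδR i) hη, mul_nonneg hΔ0 hη.le]
      · -- T x i = -η
        have hact : -T x i = η := hkact
        have hTi : T x i = -η := by linarith
        obtain ⟨hG1b, hG1l⟩ := hgUc i
        obtain ⟨hG4b, hG4l⟩ := hgRc i
        obtain ⟨hF2b, _⟩ := hfTc i
        have hG1u := (abs_le.mp hG1b).2
        have hG4u := (abs_le.mp hG4b).2
        have hF2l' := (abs_le.mp hF2b).1
        have hRi1 := hRl i
        have hRi2 : R x i ≤ 1 + 2 * η := by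
          have := hSu i
          linarith
        show -((1 - R x i - T x i) * gU (T x) i - δT i * T x i
          + R x i * gR (T x) i - T x i * fT (R x) i) < K * η
        rw [hTi, hKdef]
        nlinarith [mul_nonneg (by linarith : (0:ℝ) ≤ 1 + 2*η - R x i)
            (by linarith : (0:ℝ) ≤ gU (T x) i + M * η),
          mul_nonneg (by linarith : (0:ℝ) ≤ R x i + η)
            (by linarith : (0:ℝ) ≤ gR (T x) i + M * η),
          mul_nonneg (by linarith : (0:ℝ) ≤ R x i + η) (mul_nonneg hM0 hη.le),
          mul_nonneg (by linarith : (0:ℝ) ≤ 1 + 2*η - R x i) (mul_nonneg hM0 hη.le),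
          mul_nonneg hη.le (by linarith : (0:ℝ) ≤ M - gU (T x) i),
          mul_nonneg hη.le (by linarith : (0:ℝ) ≤ M - gR (T x) i),
          mul_nonneg hη.le (by linarith : (0:ℝ) ≤ M + fT (R x) i),
          mul_nonneg (mul_nonneg hM0 hη.le) (by linarith : (0:ℝ) ≤ 1 - η),
          mul_pos (hδT i) hη, mul_nonneg hΔ0 hη.le]
      · -- R x i + T x i = 1 + η
        have hact : R x i + T x i - 1 = η := hkact
        have h1RT : (1:ℝ) - R x i - T x i = -η := by linarith
        obtain ⟨hF1b, _⟩ := hfUc i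
        obtain ⟨hG1b, _⟩ := hgUc i
        have hF1l' := (abs_le.mp hF1b).1
        have hG1l' := (abs_le.mp hG1b).1
        have hRi1 := hRl i
        have hTi1 := hTl i
        show ((1 - R x i - T x i) * fU (R x) i - δR i * R x i
            + T x i * fT (R x) i - R x i * gR (T x) i)
          + ((1 - R x i - T x i) * gU (T x) i - δT i * T x i
            + R x i * gR (T x) i - T x i * fT (R x) i) < K * η
        rw [h1RT, hKdef]
        nlinarith [mul_nonneg hη.le (by linarith : (0:ℝ) ≤ M + fU (R x) i),
          mul_nonneg hη.le (by linarith : (0:ℝ) ≤ M + gU (T x) i),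
          mul_nonneg (hδR i).le (by linarith : (0:ℝ) ≤ R x i + η),
          mul_nonneg (hδT i).le (by linarith : (0:ℝ) ≤ T x i + η),
          mul_nonneg (by linarith [hΔ i] : (0:ℝ) ≤ Δ - δR i - δT i) hη.le,
          mul_nonneg hM0 hη.le, hη]
  -- φ is nonpositive for all nonnegative times.
  have hφ0 : ∀ t : ℝ, 0 ≤ t → URTUphi hN R T t ≤ 0 := by
    intro t ht
    by_contra hcon
    push_neg at hcon
    have hexp : (0:ℝ) < Real.exp (K * t) := Real.exp_pos _
    have hεpos : 0 < min (Real.exp (-(K * t))) (URTUphi hN R T t / (2 * Real.exp (K * t))) :=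
      lt_min (Real.exp_pos _) (div_pos hcon (by positivity))
    have h1 := main t _ hεpos (min_le_left _ _) t ⟨ht, le_refl t⟩
    have h2 : min (Real.exp (-(K * t))) (URTUphi hN R T t / (2 * Real.exp (K * t)))
        ≤ URTUphi hN R T t / (2 * Real.exp (K * t)) := min_le_right _ _
    have h3 : min (Real.exp (-(K * t))) (URTUphi hN R T t / (2 * Real.exp (K * t)))
        * Real.exp (K * t) ≤ URTUphi hN R T t / 2 := by
      have h4 := mul_le_mul_of_nonneg_right h2 hexp.le
      have h5 : URTUphi hN R T t / (2 * Real.exp (K * t)) * Real.exp (K * t)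
          = URTUphi hN R T t / 2 := by
        field_simp
      linarith
    linarith
  -- Conclusion.
  intro t ht i
  have h := hφ0 t ht
  refine ⟨?_, ?_, ?_⟩
  · have h1 : -R t i ≤ 0 := le_trans (URTUg_le_phi hN R T (Sum.inl i) t) h
    linarith
  · have h1 : -T t i ≤ 0 := le_trans (URTUg_le_phi hN R T (Sum.inr (Sum.inl i)) t) h
    linarith
  · have h1 : R t i + T t i - 1 ≤ 0 :=
      le_trans (URTUg_le_phi hN R T (Sum.inr (Sum.inr i)) t) h
    linarith
end

section
/- Define H : (0,1]^N → (0,1]^N by H_i(x) = f_i^U(x) / (δ_i^R + f_i^U(x)). Then H is monotonically increasing (x ≤ y componentwise implies H(x) ≤ H(y) componentwise), and H has at most one fixed point in (0,1]^N. -/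
open Filter Topology

section URTUHelpers

variable {N : ℕ}

private lemma urtu_pi_decomp (v : Fin N → ℝ) :
    v = ∑ j, v j • (Pi.single j 1 : Fin N → ℝ) := by
  ext k
  simp [Finset.sum_apply, Pi.single_apply]

private lemma urtu_clm_apply_sum {M : Type*} [AddCommGroup M] [Module ℝ M]
    [TopologicalSpace M] (L : (Fin N → ℝ) →L[ℝ] M) (v : Fin N → ℝ) :
    L v = ∑ j, v j • L (Pi.single j 1) := by
  conv_lhs => rw [urtu_pi_decomp v]
  rw [map_sum]
  simp

private lemma urtu_hasDerivAt_line (a w : Fin N → ℝ) (t : ℝ) :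
    HasDerivAt (fun s : ℝ => a + s • w) w t := by
  simpa using ((hasDerivAt_id t).smul_const w).const_add a

private lemma urtu_hasDerivAt_comp_line {M : Type*} [NormedAddCommGroup M]
    [NormedSpace ℝ M] {F : (Fin N → ℝ) → M} (hF : Differentiable ℝ F)
    (a w : Fin N → ℝ) (t : ℝ) :
    HasDerivAt (fun s => F (a + s • w)) (fderiv ℝ F (a + t • w) w) t :=
  ((hF (a + t • w)).hasFDerivAt).comp_hasDerivAt t (urtu_hasDerivAt_line a w t)

private lemma urtu_fderiv_C1 {F : (Fin N → ℝ) → ℝ} (hF : ContDiff ℝ 2 F) :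
    Differentiable ℝ (fderiv ℝ F) :=
  (hF.fderiv_right (m := 1) (by norm_num)).differentiable one_ne_zero

private lemma urtu_diff_fderiv_apply {F : (Fin N → ℝ) → ℝ} (hF : ContDiff ℝ 2 F)
    (v : Fin N → ℝ) : Differentiable ℝ (fun z => fderiv ℝ F z v) :=
  ((ContinuousLinearMap.apply ℝ ℝ v).differentiable.comp (urtu_fderiv_C1 hF) : _)

private lemma urtu_fderiv_fderiv_apply {F : (Fin N → ℝ) → ℝ} (hF : ContDiff ℝ 2 F)
    (p v w : Fin N → ℝ) :
    fderiv ℝ (fun z => fderiv ℝ F z v) p w = fderiv ℝ (fderiv ℝ F) p w v := by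
  have hB : HasFDerivAt (fderiv ℝ F) (fderiv ℝ (fderiv ℝ F) p) p :=
    (urtu_fderiv_C1 hF p).hasFDerivAt
  have hA : HasFDerivAt (fun z => fderiv ℝ F z v)
      ((ContinuousLinearMap.apply ℝ ℝ v).comp (fderiv ℝ (fderiv ℝ F) p)) p :=
    (ContinuousLinearMap.apply ℝ ℝ v).hasFDerivAt.comp p hB
  rw [hA.fderiv]
  rfl

/-- Monotone map `t ↦ t/(δ+t)` on nonneg reals. -/
private lemma urtu_g_mono {δ a b : ℝ} (hδ : 0 < δ) (ha : 0 ≤ a) (hab : a ≤ b) :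
    a / (δ + a) ≤ b / (δ + b) := by
  have h1 : 0 < δ + a := by linarith
  have h2 : 0 < δ + b := by linarith
  rw [div_le_div_iff₀ h1 h2]
  nlinarith

private lemma urtu_g_strict {δ θ t : ℝ} (hδ : 0 < δ) (hθ : 1 < θ) (ht : 0 < t) :
    (θ * t) / (δ + θ * t) < θ * (t / (δ + t)) := by
  rw [← mul_div_assoc]
  apply div_lt_div_of_pos_left
  · positivity
  · linarith
  · nlinarith

end URTUHelpers

/-- The map `H i x = fᵢᵁ(x)/(δᵢᴿ + fᵢᵁ(x))` on `(0,1]^N` is monotonically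
increasing and has at most one fixed point in `(0,1]^N`. -/
theorem URTU_H_monotone_and_unique_fixed_point
    {N : ℕ} (hN : 0 < N)
    (ER : Fin N → Fin N → Prop)
    (hERconn : ∀ i j : Fin N, Relation.ReflTransGen ER i j)
    (δR : Fin N → ℝ) (hδR : ∀ i, 0 < δR i)
    (fU : (Fin N → ℝ) → (Fin N → ℝ))
    (hfUsm : ContDiff ℝ 2 fU)
    (hfUdep : ∀ (i j : Fin N), ¬ ER i j → ∀ x y : Fin N → ℝ,
      (∀ k, k ≠ j → x k = y k) → fU x i = fU y i)
    (hfUz : fU 0 = 0)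
    (hfUpos : ∀ (i j : Fin N), ER i j → ∀ x : Fin N → ℝ, (∀ k, 0 ≤ x k) →
      0 < fderiv ℝ (fun z => fU z i) x (Pi.single j 1))
    (hfUconc : ∀ (i j k : Fin N), ∀ x : Fin N → ℝ, (∀ l, 0 ≤ x l) →
      fderiv ℝ (fun z => fderiv ℝ (fun w => fU w i) z (Pi.single j 1)) x
        (Pi.single k 1) ≤ 0)
    :
    (∀ x y : Fin N → ℝ, (∀ i, 0 < x i ∧ x i ≤ 1) → (∀ i, 0 < y i ∧ y i ≤ 1) →
      (∀ i, x i ≤ y i) →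
      ∀ i : Fin N, fU x i / (δR i + fU x i) ≤ fU y i / (δR i + fU y i)) ∧
    (∀ x y : Fin N → ℝ, (∀ i, 0 < x i ∧ x i ≤ 1) → (∀ i, 0 < y i ∧ y i ≤ 1) →
      (∀ i : Fin N, x i = fU x i / (δR i + fU x i)) →
      (∀ i : Fin N, y i = fU y i / (δR i + fU y i)) → x = y) := by
  classical
  -- coordinate functions are C²
  have hFc : ∀ i : Fin N, ContDiff ℝ 2 (fun z => fU z i) := fun i =>
    contDiff_pi.mp hfUsm i
  have hFd : ∀ i : Fin N, Differentiable ℝ (fun z => fU z i) := fun i =>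
    (hFc i).differentiable (by norm_num)
  -- every partial derivative is nonnegative on the nonneg orthant
  have hpartial : ∀ (i j : Fin N) (x : Fin N → ℝ), (∀ k, 0 ≤ x k) →
      0 ≤ fderiv ℝ (fun z => fU z i) x (Pi.single j 1) := by
    intro i j x hx
    by_cases hE : ER i j
    · exact (hfUpos i j hE x hx).le
    · -- the function is constant in direction j, so the partial is 0
      have hconst : (fun s : ℝ => fU (x + s • (Pi.single j 1 : Fin N → ℝ)) i) =
          fun _ => fU x i := by
        funext s
        apply hfUdep i j hE
        intro k hk
        simp [Pi.single_apply, hk]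
      have h1 : HasDerivAt (fun s : ℝ => fU (x + s • (Pi.single j 1 : Fin N → ℝ)) i)
          (fderiv ℝ (fun z => fU z i) (x + (0:ℝ) • (Pi.single j 1 : Fin N → ℝ))
            (Pi.single j 1)) 0 :=
        urtu_hasDerivAt_comp_line (hFd i) x (Pi.single j 1) 0
      rw [hconst] at h1
      have h2 : HasDerivAt (fun _ : ℝ => fU x i) (0 : ℝ) 0 := hasDerivAt_const 0 _
      have h3 := h1.unique h2
      simp only [zero_smul, add_zero] at h3
      rw [h3]
  -- monotonicity of fU on the nonneg orthant
  have hmono : ∀ (x y : Fin N → ℝ), (∀ k, 0 ≤ x k) → (∀ k, x k ≤ y k) →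
      ∀ i, fU x i ≤ fU y i := by
    intro x y hx hxy i
    set w : Fin N → ℝ := fun k => y k - x k with hw_def
    have hw : ∀ k, 0 ≤ w k := fun k => sub_nonneg.2 (hxy k)
    have key : MonotoneOn (fun s : ℝ => fU (x + s • w) i) (Set.Icc 0 1) := by
      apply monotoneOn_of_deriv_nonneg (convex_Icc 0 1)
      · exact (((hFc i).continuous).comp
          (continuous_const.add (continuous_id.smul continuous_const))).continuousOn
      · intro t _
        exact (urtu_hasDerivAt_comp_line (hFd i) x w t).differentiableAt.differentiableWithinAt
      · intro t ht
        rw [interior_Icc] at ht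
        rw [(urtu_hasDerivAt_comp_line (hFd i) x w t).deriv]
        have hp : ∀ k, 0 ≤ (x + t • w) k := by
          intro k
          have : (x + t • w) k = x k + t * w k := rfl
          rw [this]
          exact add_nonneg (hx k) (mul_nonneg ht.1.le (hw k))
        rw [urtu_clm_apply_sum]
        exact Finset.sum_nonneg fun j _ =>
          smul_nonneg (hw j) (hpartial i j _ hp)
    have h01 := key (Set.left_mem_Icc.2 zero_le_one) (Set.right_mem_Icc.2 zero_le_one)
      zero_le_one
    have e0 : x + (0:ℝ) • w = x := by simp
    have e1 : x + (1:ℝ) • w = y := by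
      funext k
      simp [hw_def]
    have h01' : fU (x + (0:ℝ) • w) i ≤ fU (x + (1:ℝ) • w) i := h01
    rw [e0, e1] at h01'
    exact h01'
  -- nonnegativity of fU on the nonneg orthant
  have hF0 : ∀ (x : Fin N → ℝ), (∀ k, 0 ≤ x k) → ∀ i, 0 ≤ fU x i := by
    intro x hx i
    have := hmono 0 x (fun _ => le_rfl) (by simpa using hx) i
    rwa [hfUz] at this
  -- subhomogeneity : fU (θ • y) ≤ θ • fU y for θ ≥ 1, y ≥ 0
  have hsub : ∀ (y : Fin N → ℝ), (∀ k, 0 ≤ y k) → ∀ (θ : ℝ), 1 ≤ θ →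
      ∀ i, fU (θ • y) i ≤ θ * fU y i := by
    intro y hy θ hθ i
    set ψ : ℝ → ℝ := fun t => fU ((0 : Fin N → ℝ) + t • y) i with hψ_def
    have hψd : ∀ t, HasDerivAt ψ
        (fderiv ℝ (fun z => fU z i) ((0 : Fin N → ℝ) + t • y) y) t :=
      fun t => urtu_hasDerivAt_comp_line (hFd i) 0 y t
    have hderiv : deriv ψ = fun t =>
        fderiv ℝ (fun z => fU z i) ((0 : Fin N → ℝ) + t • y) y := by
      funext t
      exact (hψd t).deriv
    -- derivative of the derivative
    have hD1d : ∀ t, HasDerivAt (fun s =>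
        (fun z => fderiv ℝ (fun z' => fU z' i) z y) ((0 : Fin N → ℝ) + s • y))
        (fderiv ℝ (fun z => fderiv ℝ (fun z' => fU z' i) z y)
          ((0 : Fin N → ℝ) + t • y) y) t :=
      fun t => urtu_hasDerivAt_comp_line (urtu_diff_fderiv_apply (hFc i) y) 0 y t
    have hconc : ConcaveOn ℝ (Set.Ici 0) ψ := by
      apply concaveOn_of_deriv2_nonpos (convex_Ici 0)
      · exact (((hFc i).continuous).comp
          (continuous_const.add (continuous_id.smul continuous_const))).continuousOn
      · intro t _
        exact (hψd t).differentiableAt.differentiableWithinAt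
      · intro t _
        rw [hderiv]
        exact (hD1d t).differentiableAt.differentiableWithinAt
      · intro t ht
        rw [interior_Ici] at ht
        have hpt : ∀ k, 0 ≤ ((0 : Fin N → ℝ) + t • y) k := by
          intro k
          have : ((0 : Fin N → ℝ) + t • y) k = t * y k := by simp
          rw [this]
          exact mul_nonneg ht.le (hy k)
        show deriv (deriv ψ) t ≤ 0
        rw [hderiv, (hD1d t).deriv]
        set p := (0 : Fin N → ℝ) + t • y with hp_def
        set B := fderiv ℝ (fderiv ℝ (fun z => fU z i)) p with hB_def
        have hBvw : ∀ v w : Fin N → ℝ,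
            fderiv ℝ (fun z => fderiv ℝ (fun z' => fU z' i) z v) p w = B w v :=
          fun v w => urtu_fderiv_fderiv_apply (hFc i) p v w
        rw [hBvw y y]
        have hexp : B y y = ∑ k, y k * ∑ j, y j * (B (Pi.single k 1)) (Pi.single j 1) := by
          rw [urtu_clm_apply_sum B y]
          rw [ContinuousLinearMap.sum_apply]
          apply Finset.sum_congr rfl
          intro k _
          rw [ContinuousLinearMap.smul_apply, smul_eq_mul]
          congr 1
          rw [urtu_clm_apply_sum (B (Pi.single k 1)) y]
          apply Finset.sum_congr rfl
          intro j _
          rw [smul_eq_mul]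
        rw [hexp]
        apply Finset.sum_nonpos
        intro k _
        apply mul_nonpos_of_nonneg_of_nonpos (hy k)
        apply Finset.sum_nonpos
        intro j _
        apply mul_nonpos_of_nonneg_of_nonpos (hy j)
        have := hfUconc i j k p hpt
        rwa [hBvw (Pi.single j 1) (Pi.single k 1)] at this
    -- use concavity between 0, 1, θ
    have hθpos : 0 < θ := lt_of_lt_of_le one_pos hθ
    have h0 : ψ 0 = 0 := by simp [hψ_def, hfUz]
    have ha1 : (0:ℝ) ≤ 1/θ := by positivity
    have hb1 : (0:ℝ) ≤ 1 - 1/θ := by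
      have : 1/θ ≤ 1 := by
        rw [div_le_one hθpos]; exact hθ
      linarith
    have hab : (1/θ) + (1 - 1/θ) = (1:ℝ) := by ring
    have hc := hconc.2 (Set.mem_Ici.2 hθpos.le) (Set.mem_Ici.2 (le_refl (0:ℝ)))
      ha1 hb1 hab
    simp only [smul_eq_mul, mul_zero, h0, add_zero, mul_one] at hc
    have he : (1/θ) * θ = 1 := by field_simp
    rw [he] at hc
    have hψθ : ψ θ ≤ θ * ψ 1 := by
      have h2 : (1/θ) * ψ θ ≤ ψ 1 := by linarith [hc]
      have h3 := mul_le_mul_of_nonneg_left h2 hθpos.le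
      have h4 : ψ θ = θ * ((1/θ) * ψ θ) := by
        rw [← mul_assoc, mul_one_div_cancel (ne_of_gt hθpos), one_mul]
      linarith [h3, h4.le, h4.ge]
    have e1 : (0 : Fin N → ℝ) + (1:ℝ) • y = y := by simp
    have eθ : (0 : Fin N → ℝ) + θ • y = θ • y := by simp
    simpa [hψ_def, e1, eθ] using hψθ
  -- conclusion part 1: monotonicity of H
  refine ⟨?_, ?_⟩
  · intro x y hx hy hxy i
    exact urtu_g_mono (hδR i) (hF0 x (fun k => (hx k).1.le) i)
      (hmono x y (fun k => (hx k).1.le) hxy i)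
  · -- uniqueness
    intro x y hx hy hfx hfy
    have key : ∀ (x y : Fin N → ℝ), (∀ i, 0 < x i ∧ x i ≤ 1) →
        (∀ i, 0 < y i ∧ y i ≤ 1) →
        (∀ i : Fin N, x i = fU x i / (δR i + fU x i)) →
        (∀ i : Fin N, y i = fU y i / (δR i + fU y i)) →
        ∀ i, x i ≤ y i := by
      intro x y hx hy hfx hfy
      by_contra hcon
      push_neg at hcon
      obtain ⟨i₁, hi₁⟩ := hcon
      obtain ⟨i₀, -, hmax⟩ := Finset.exists_max_image Finset.univ
        (fun k => x k / y k) ⟨⟨0, hN⟩, Finset.mem_univ _⟩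
      set θ := x i₀ / y i₀ with hθ_def
      have hθ1 : 1 < θ := by
        have h1 : 1 < x i₁ / y i₁ := (one_lt_div (hy i₁).1).2 hi₁
        exact lt_of_lt_of_le h1 (hmax i₁ (Finset.mem_univ _))
      have hθpos : 0 < θ := lt_trans one_pos hθ1
      have hxle : ∀ k, x k ≤ θ * y k := by
        intro k
        have := hmax k (Finset.mem_univ _)
        rwa [div_le_iff₀ (hy k).1] at this
      have hx0 : ∀ k, 0 ≤ x k := fun k => (hx k).1.le
      have hy0 : ∀ k, 0 ≤ y k := fun k => (hy k).1.le
      -- fU y i₀ > 0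
      have hFy : 0 < fU y i₀ := by
        rcases (hF0 y hy0 i₀).lt_or_eq with h | h
        · exact h
        · exfalso
          have := hfy i₀
          rw [← h] at this
          simp at this
          exact absurd this (ne_of_gt (hy i₀).1)
      -- the chain of inequalities
      have hθy0 : ∀ k, 0 ≤ (θ • y) k := fun k =>
        mul_nonneg hθpos.le (hy0 k)
      have hxθy : ∀ k, x k ≤ (θ • y) k := fun k => hxle k
      have c1 : fU x i₀ ≤ fU (θ • y) i₀ := hmono x (θ • y) hx0 hxθy i₀
      have c2 : fU (θ • y) i₀ ≤ θ * fU y i₀ := hsub y hy0 θ hθ1.le i₀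
      have step1 : x i₀ ≤ (θ * fU y i₀) / (δR i₀ + θ * fU y i₀) := by
        rw [hfx i₀]
        exact urtu_g_mono (hδR i₀) (hF0 x hx0 i₀) (c1.trans c2)
      have step2 : (θ * fU y i₀) / (δR i₀ + θ * fU y i₀) <
          θ * (fU y i₀ / (δR i₀ + fU y i₀)) :=
        urtu_g_strict (hδR i₀) hθ1 hFy
      have step3 : θ * (fU y i₀ / (δR i₀ + fU y i₀)) = θ * y i₀ := by
        rw [← hfy i₀]
      have step4 : θ * y i₀ = x i₀ := div_mul_cancel₀ _ (ne_of_gt (hy i₀).1)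
      linarith [step1, step2]
    funext i
    exact le_antisymm (key x y hx hy hfx hfy i) (key y x hy hx hfy hfx i)
end

section
/- For the linear URTU model, if Σ_{i=1}^N β_ij^U < δ_j^R and Σ_{i=1}^N γ_ij^U < δ_j^T hold for every j = 1,…,N, then the uncertain equilibrium (0, 0) attracts Ω: every solution with initial value in Ω converges to (0,0) as t → ∞. -/
open Filter Topology Set

lemma neg_left_of_hasDerivAt_pos {ψ : ℝ → ℝ} {t₀ D : ℝ} (h : HasDerivAt ψ D t₀)
    (hD : 0 < D) (h0 : ψ t₀ = 0) (ht₀ : 0 < t₀) :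
    ∃ t, 0 < t ∧ t < t₀ ∧ ψ t < 0 := by
  have hs := hasDerivAt_iff_tendsto_slope.mp h
  have hmono : 𝓝[<] t₀ ≤ 𝓝[≠] t₀ :=
    nhdsWithin_mono _ (fun x hx => ne_of_lt hx)
  have h1 : ∀ᶠ t in 𝓝[<] t₀, 0 < slope ψ t₀ t :=
    (hs.mono_left hmono).eventually_const_lt hD
  have h2 : ∀ᶠ t in 𝓝[<] t₀, t ∈ Ioo 0 t₀ :=
    Ioo_mem_nhdsLT_of_mem ⟨ht₀, le_refl t₀⟩
  obtain ⟨t, hslope, htmem⟩ := (h1.and h2).exists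
  refine ⟨t, htmem.1, htmem.2, ?_⟩
  by_contra hcon
  push_neg at hcon
  have hden : t - t₀ < 0 := by linarith [htmem.2]
  have : slope ψ t₀ t ≤ 0 := by
    rw [slope_def_field, h0]
    exact div_nonpos_of_nonneg_of_nonpos (by linarith) (by linarith)
  linarith

lemma sum_mul_bounds {N : ℕ} (a x : Fin N → ℝ) (B E M : ℝ)
    (ha0 : ∀ j, 0 ≤ a j) (haB : (∑ j, a j) ≤ B)
    (hx1 : ∀ j, -E ≤ x j) (hx2 : ∀ j, x j ≤ M) (hE : 0 ≤ E) (hM : 0 ≤ M) :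
    -(E * B) ≤ (∑ j, a j * x j) ∧ (∑ j, a j * x j) ≤ B * M := by
  have hsum0 : (0:ℝ) ≤ ∑ j, a j := Finset.sum_nonneg fun j _ => ha0 j
  constructor
  · have h1 : (∑ j, a j * (-E)) ≤ ∑ j, a j * x j :=
      Finset.sum_le_sum fun j _ => mul_le_mul_of_nonneg_left (hx1 j) (ha0 j)
    have h2 : (∑ j, a j * (-E)) = (∑ j, a j) * (-E) := by rw [Finset.sum_mul]
    nlinarith
  · have h1 : (∑ j, a j * x j) ≤ ∑ j, a j * M :=
      Finset.sum_le_sum fun j _ => mul_le_mul_of_nonneg_left (hx2 j) (ha0 j)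
    have h2 : (∑ j, a j * M) = (∑ j, a j) * M := by rw [Finset.sum_mul]
    nlinarith

set_option maxHeartbeats 1000000 in
/-- Invariance of Ω for the linear URTU model. -/
lemma urtu_mem_Omega {N : ℕ}
    (δR δT : Fin N → ℝ) (hδR : ∀ i, 0 ≤ δR i) (hδT : ∀ i, 0 ≤ δT i)
    (βU βT γU γR : Fin N → Fin N → ℝ)
    (hβT0 : ∀ i j, 0 ≤ βT i j) (hβTU : ∀ i j, βT i j ≤ βU i j)
    (hγR0 : ∀ i j, 0 ≤ γR i j) (hγRU : ∀ i j, γR i j ≤ γU i j)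
    (R T : ℝ → Fin N → ℝ)
    (hsolR : ∀ (i : Fin N) (t : ℝ), 0 ≤ t → HasDerivAt (fun τ => R τ i)
      ((1 - R t i - T t i) * (∑ j, βU i j * R t j) - δR i * R t i
        + T t i * (∑ j, βT i j * R t j) - R t i * (∑ j, γR i j * T t j)) t)
    (hsolT : ∀ (i : Fin N) (t : ℝ), 0 ≤ t → HasDerivAt (fun τ => T τ i)
      ((1 - R t i - T t i) * (∑ j, γU i j * T t j) - δT i * T t i
        + R t i * (∑ j, γR i j * T t j) - T t i * (∑ j, βT i j * R t j)) t)
    (hinit : ∀ i : Fin N, 0 ≤ R 0 i ∧ 0 ≤ T 0 i ∧ R 0 i + T 0 i ≤ 1) :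
    ∀ t : ℝ, 0 ≤ t → ∀ i : Fin N, 0 ≤ R t i ∧ 0 ≤ T t i ∧ R t i + T t i ≤ 1 := by
  -- nonnegativity of coefficients
  have hβU0 : ∀ i j, 0 ≤ βU i j := fun i j => le_trans (hβT0 i j) (hβTU i j)
  have hγU0 : ∀ i j, 0 ≤ γU i j := fun i j => le_trans (hγR0 i j) (hγRU i j)
  -- continuity
  have hcR : ∀ i, ContinuousOn (fun t => R t i) (Ici (0:ℝ)) :=
    fun i t ht => ((hsolR i t ht).continuousAt).continuousWithinAt
  have hcT : ∀ i, ContinuousOn (fun t => T t i) (Ici (0:ℝ)) :=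
    fun i t ht => ((hsolT i t ht).continuousAt).continuousWithinAt
  intro A hA
  -- a bound M on [0, A]
  have hIcc : Icc (0:ℝ) A ⊆ Ici 0 := Icc_subset_Ici_self
  have hfc : ContinuousOn (fun t => ∑ i, (|R t i| + |T t i|)) (Icc (0:ℝ) A) := by
    refine continuousOn_finset_sum _ (fun i _ => ?_)
    exact (((hcR i).mono hIcc).abs.add ((hcT i).mono hIcc).abs)
  obtain ⟨tm, htm, hmax⟩ := isCompact_Icc.exists_isMaxOn (nonempty_Icc.mpr hA) hfc
  set M : ℝ := (∑ i, (|R tm i| + |T tm i|)) + 1 with hM_def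
  have hM1 : (1:ℝ) ≤ M := by
    have : (0:ℝ) ≤ ∑ i, (|R tm i| + |T tm i|) :=
      Finset.sum_nonneg fun i _ => by positivity
    simp only [hM_def]; linarith
  have hMR : ∀ t ∈ Icc (0:ℝ) A, ∀ i, |R t i| ≤ M ∧ |T t i| ≤ M := by
    intro t ht i
    have h1 : (∑ k, (|R t k| + |T t k|)) ≤ ∑ k, (|R tm k| + |T tm k|) := hmax ht
    have h2 : |R t i| + |T t i| ≤ ∑ k, (|R t k| + |T t k|) :=
      Finset.single_le_sum (f := fun k => |R t k| + |T t k|)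
        (fun k _ => by positivity) (Finset.mem_univ i)
    constructor <;> [skip; skip] <;>
      · simp only [hM_def]
        have := abs_nonneg (R t i); have := abs_nonneg (T t i); linarith
  -- master coefficient bound B
  set B : ℝ := 1 + ∑ i, ((∑ j, βU i j) + (∑ j, γU i j) + δR i + δT i) with hB_def
  have hrowsum_nonneg : ∀ i : Fin N,
      0 ≤ (∑ j, βU i j) + (∑ j, γU i j) + δR i + δT i := by
    intro i
    have h1 : (0:ℝ) ≤ ∑ j, βU i j := Finset.sum_nonneg fun j _ => hβU0 i j
    have h2 : (0:ℝ) ≤ ∑ j, γU i j := Finset.sum_nonneg fun j _ => hγU0 i j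
    linarith [hδR i, hδT i]
  have hB1 : (1:ℝ) ≤ B := by
    have := Finset.sum_nonneg (fun i (_ : i ∈ Finset.univ) => hrowsum_nonneg i)
    simp only [hB_def]; linarith
  have hrow_le : ∀ i : Fin N,
      (∑ j, βU i j) + (∑ j, γU i j) + δR i + δT i ≤ B := by
    intro i
    have := Finset.single_le_sum (f := fun i => (∑ j, βU i j) + (∑ j, γU i j) + δR i + δT i)
      (fun k _ => hrowsum_nonneg k) (Finset.mem_univ i)
    simp only [hB_def]; linarith
  have hβrow : ∀ i, (∑ j, βU i j) ≤ B := by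
    intro i
    have h2 : (0:ℝ) ≤ ∑ j, γU i j := Finset.sum_nonneg fun j _ => hγU0 i j
    linarith [hrow_le i, hδR i, hδT i]
  have hγrow : ∀ i, (∑ j, γU i j) ≤ B := by
    intro i
    have h1 : (0:ℝ) ≤ ∑ j, βU i j := Finset.sum_nonneg fun j _ => hβU0 i j
    linarith [hrow_le i, hδR i, hδT i]
  have hβTrow : ∀ i, (∑ j, βT i j) ≤ B := fun i =>
    le_trans (Finset.sum_le_sum fun j _ => hβTU i j) (hβrow i)
  have hγRrow : ∀ i, (∑ j, γR i j) ≤ B := fun i =>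
    le_trans (Finset.sum_le_sum fun j _ => hγRU i j) (hγrow i)
  have hδRB : ∀ i, δR i ≤ B := by
    intro i
    have h1 : (0:ℝ) ≤ ∑ j, βU i j := Finset.sum_nonneg fun j _ => hβU0 i j
    have h2 : (0:ℝ) ≤ ∑ j, γU i j := Finset.sum_nonneg fun j _ => hγU0 i j
    linarith [hrow_le i, hδT i]
  have hδTB : ∀ i, δT i ≤ B := by
    intro i
    have h1 : (0:ℝ) ≤ ∑ j, βU i j := Finset.sum_nonneg fun j _ => hβU0 i j
    have h2 : (0:ℝ) ≤ ∑ j, γU i j := Finset.sum_nonneg fun j _ => hγU0 i j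
    linarith [hrow_le i, hδR i]
  set K : ℝ := 6 * B * M with hK_def
  have hK0 : 0 < K := by simp only [hK_def]; nlinarith
  have hM0 : (0:ℝ) ≤ M := by linarith
  have hB0 : (0:ℝ) ≤ B := by linarith
  clear_value M B K
  clear hM_def hB_def
  -- The barrier claim
  have hbarrier : ∀ ε : ℝ, 0 < ε → ε * Real.exp (K * A) ≤ 1 →
      ∀ t ∈ Icc (0:ℝ) A, ∀ i,
        0 < R t i + ε * Real.exp (K * t) ∧
        0 < T t i + ε * Real.exp (K * t) ∧
        0 < 1 - R t i - T t i + ε * Real.exp (K * t) := by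
    intro ε hε hεA
    by_contra hcon
    push_neg at hcon
    -- the bad set
    set S : Set ℝ := ⋃ i : Fin N,
      ((Icc (0:ℝ) A ∩ (fun t => R t i + ε * Real.exp (K * t)) ⁻¹' Iic 0) ∪
       ((Icc (0:ℝ) A ∩ (fun t => T t i + ε * Real.exp (K * t)) ⁻¹' Iic 0) ∪
        (Icc (0:ℝ) A ∩ (fun t => 1 - R t i - T t i + ε * Real.exp (K * t)) ⁻¹' Iic 0))) with hS_def
    have hSchar : ∀ t, t ∈ S ↔ t ∈ Icc (0:ℝ) A ∧ ∃ i,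
        (R t i + ε * Real.exp (K * t) ≤ 0 ∨ T t i + ε * Real.exp (K * t) ≤ 0 ∨
          1 - R t i - T t i + ε * Real.exp (K * t) ≤ 0) := by
      intro t
      simp only [hS_def, Set.mem_iUnion, Set.mem_union, Set.mem_inter_iff, Set.mem_preimage,
        Set.mem_Iic]
      constructor
      · rintro ⟨i, (⟨ht, h⟩ | ⟨ht, h⟩ | ⟨ht, h⟩)⟩
        · exact ⟨ht, i, Or.inl h⟩
        · exact ⟨ht, i, Or.inr (Or.inl h)⟩
        · exact ⟨ht, i, Or.inr (Or.inr h)⟩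
      · rintro ⟨ht, i, (h | h | h)⟩
        · exact ⟨i, Or.inl ⟨ht, h⟩⟩
        · exact ⟨i, Or.inr (Or.inl ⟨ht, h⟩)⟩
        · exact ⟨i, Or.inr (Or.inr ⟨ht, h⟩)⟩
    have hec : Continuous (fun t : ℝ => ε * Real.exp (K * t)) :=
      continuous_const.mul (Real.continuous_exp.comp (continuous_const.mul continuous_id))
    have hSclosed : IsClosed S := by
      rw [hS_def]
      refine isClosed_iUnion_of_finite (fun i => (IsClosed.union ?_ (IsClosed.union ?_ ?_)))
      · exact ContinuousOn.preimage_isClosed_of_isClosed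
          (((hcR i).mono hIcc).add (hec.continuousOn)) isClosed_Icc isClosed_Iic
      · exact ContinuousOn.preimage_isClosed_of_isClosed
          (((hcT i).mono hIcc).add (hec.continuousOn)) isClosed_Icc isClosed_Iic
      · refine ContinuousOn.preimage_isClosed_of_isClosed ?_ isClosed_Icc isClosed_Iic
        exact ((((continuousOn_const).sub ((hcR i).mono hIcc)).sub
          ((hcT i).mono hIcc)).add (hec.continuousOn))
    have hSne : S.Nonempty := by
      obtain ⟨tb, htb, ib, hib⟩ := hcon
      refine ⟨tb, (hSchar tb).2 ⟨htb, ib, ?_⟩⟩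
      rcases le_or_gt (R tb ib + ε * Real.exp (K * tb)) 0 with h | h
      · exact Or.inl h
      rcases le_or_gt (T tb ib + ε * Real.exp (K * tb)) 0 with h' | h'
      · exact Or.inr (Or.inl h')
      exact Or.inr (Or.inr (hib h h'))
    have hbdd : BddBelow S := ⟨0, fun x hx => ((hSchar x).1 hx).1.1⟩
    set t₀ : ℝ := sInf S with ht₀_def
    have ht₀S : t₀ ∈ S := hSclosed.csInf_mem hSne hbdd
    obtain ⟨ht₀Icc, i, hi3⟩ := (hSchar t₀).1 ht₀S
    have ht₀0 : (0:ℝ) ≤ t₀ := ht₀Icc.1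
    have ht₀A : t₀ ≤ A := ht₀Icc.2
    have ht₀pos : 0 < t₀ := by
      rcases eq_or_lt_of_le ht₀0 with h0 | h0
      · exfalso
        rw [← h0] at hi3
        obtain ⟨hi1, hi2, hi3'⟩ := hinit i
        have hee : Real.exp (K * 0) = 1 := by rw [mul_zero, Real.exp_zero]
        rcases hi3 with h | h | h <;> rw [hee] at h <;> nlinarith
      · exact h0
    -- strict positivity before t₀
    have hstrict : ∀ t, 0 ≤ t → t < t₀ → ∀ k,
        0 < R t k + ε * Real.exp (K * t) ∧ 0 < T t k + ε * Real.exp (K * t) ∧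
        0 < 1 - R t k - T t k + ε * Real.exp (K * t) := by
      intro t ht htlt k
      have hnotS : t ∉ S := fun hmem => absurd (csInf_le hbdd hmem) (not_le.mpr htlt)
      have htIcc : t ∈ Icc (0:ℝ) A := ⟨ht, le_trans htlt.le ht₀A⟩
      refine ⟨?_, ?_, ?_⟩
      · by_contra hc; push_neg at hc
        exact hnotS ((hSchar t).2 ⟨htIcc, k, Or.inl hc⟩)
      · by_contra hc; push_neg at hc
        exact hnotS ((hSchar t).2 ⟨htIcc, k, Or.inr (Or.inl hc)⟩)
      · by_contra hc; push_neg at hc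
        exact hnotS ((hSchar t).2 ⟨htIcc, k, Or.inr (Or.inr hc)⟩)
    -- one-sided limits at t₀ from the left
    have hleft : ∀ f : ℝ → ℝ, ContinuousAt f t₀ →
        (∀ t, 0 < t → t < t₀ → 0 < f t) → 0 ≤ f t₀ := by
      intro f hf hpos
      have htend : Tendsto f (𝓝[<] t₀) (𝓝 (f t₀)) := hf.continuousWithinAt.tendsto
      refine ge_of_tendsto htend ?_
      filter_upwards [Ioo_mem_nhdsLT_of_mem (show t₀ ∈ Ioc 0 t₀ from ⟨ht₀pos, le_refl t₀⟩)]
        with t ht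
      exact (hpos t ht.1 ht.2).le
    set E : ℝ := ε * Real.exp (K * t₀) with hE_def
    have hE0 : 0 < E := by positivity
    have hE1 : E ≤ 1 := by
      have h1 : Real.exp (K * t₀) ≤ Real.exp (K * A) :=
        Real.exp_le_exp.mpr (mul_le_mul_of_nonneg_left ht₀A hK0.le)
      calc E = ε * Real.exp (K * t₀) := hE_def
        _ ≤ ε * Real.exp (K * A) := mul_le_mul_of_nonneg_left h1 hε.le
        _ ≤ 1 := hεA
    clear_value E
    have hR₀ : ∀ j, -E ≤ R t₀ j := by
      intro j
      have := hleft (fun t => R t j + ε * Real.exp (K * t))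
        (((hsolR j t₀ ht₀0).continuousAt).add (hec.continuousAt))
        (fun t ht1 ht2 => (hstrict t ht1.le ht2 j).1)
      linarith
    have hT₀ : ∀ j, -E ≤ T t₀ j := by
      intro j
      have := hleft (fun t => T t j + ε * Real.exp (K * t))
        (((hsolT j t₀ ht₀0).continuousAt).add (hec.continuousAt))
        (fun t ht1 ht2 => (hstrict t ht1.le ht2 j).2.1)
      linarith
    have hRT₀ : ∀ j, R t₀ j + T t₀ j ≤ 1 + E := by
      intro j
      have := hleft (fun t => 1 - R t j - T t j + ε * Real.exp (K * t))
        (((continuous_const.continuousAt.sub (hsolR j t₀ ht₀0).continuousAt).sub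
          (hsolT j t₀ ht₀0).continuousAt).add (hec.continuousAt))
        (fun t ht1 ht2 => (hstrict t ht1.le ht2 j).2.2)
      linarith
    have hRM : ∀ j, R t₀ j ≤ M := fun j => le_of_abs_le (hMR t₀ ht₀Icc j).1
    have hTM : ∀ j, T t₀ j ≤ M := fun j => le_of_abs_le (hMR t₀ ht₀Icc j).2
    clear_value t₀
    clear hSchar hSclosed hSne hbdd ht₀S hcon ht₀_def hleft hMR hmax hIcc hfc hec
    clear_value S
    clear hS_def S
    -- the derivative of the barrier
    have hde : HasDerivAt (fun t : ℝ => ε * Real.exp (K * t))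
        (ε * (Real.exp (K * t₀) * K)) t₀ := by
      have h1 : HasDerivAt (fun t : ℝ => K * t) K t₀ := by
        simpa using (hasDerivAt_id t₀).const_mul K
      exact ((Real.hasDerivAt_exp (K * t₀)).comp t₀ h1).const_mul ε
    have hEK : ε * (Real.exp (K * t₀) * K) = 6 * (B * M * E) := by
      rw [hE_def, hK_def]; ring
    have hBME : 0 < B * M * E := by positivity
    -- sums bounds
    have hS1 := sum_mul_bounds (βU i) (R t₀) B E M (hβU0 i) (hβrow i) hR₀ hRM hE0.le hM0
    have hS2 := sum_mul_bounds (βT i) (R t₀) B E M (hβT0 i) (hβTrow i) hR₀ hRM hE0.le hM0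
    have hS3 := sum_mul_bounds (γR i) (T t₀) B E M (hγR0 i) (hγRrow i) hT₀ hTM hE0.le hM0
    have hS4 := sum_mul_bounds (γU i) (T t₀) B E M (hγU0 i) (hγrow i) hT₀ hTM hE0.le hM0
    have hc₁l : -E ≤ 1 - R t₀ i - T t₀ i := by linarith [hRT₀ i]
    rcases hi3 with hzero | hzero | hzero
    · -- case R t₀ i = -E
      have hReq : R t₀ i = -E := le_antisymm (by linarith) (hR₀ i)
      have hc₁h : 1 - R t₀ i - T t₀ i ≤ 3 := by
        rw [hReq]; linarith [hT₀ i]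
      have hb1 : -(3 * (B * M * E)) ≤ (1 - R t₀ i - T t₀ i) * (∑ j, βU i j * R t₀ j) := by
        rcases le_or_gt 0 (∑ j, βU i j * R t₀ j) with h | h
        · nlinarith [mul_nonneg (by linarith : (0:ℝ) ≤ 1 - R t₀ i - T t₀ i + E) h,
            mul_le_mul_of_nonneg_left hS1.2 hE0.le]
        · nlinarith [mul_le_mul_of_nonpos_right hc₁h h.le, hS1.1]
      have hb2 : -(B * M * E) ≤ T t₀ i * (∑ j, βT i j * R t₀ j) := by
        rcases le_or_gt 0 (∑ j, βT i j * R t₀ j) with h | h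
        · nlinarith [mul_nonneg (by linarith [hT₀ i] : (0:ℝ) ≤ T t₀ i + E) h,
            mul_le_mul_of_nonneg_left hS2.2 hE0.le]
        · nlinarith [mul_le_mul_of_nonpos_right (hTM i) h.le,
            mul_le_mul_of_nonneg_left hS2.1 hM0]
      have hb3' : -(R t₀ i * (∑ j, γR i j * T t₀ j)) = E * (∑ j, γR i j * T t₀ j) := by
        rw [hReq]; ring
      have hb3 : -(B * M * E) ≤ E * (∑ j, γR i j * T t₀ j) := by
        nlinarith [mul_le_mul_of_nonneg_left hS3.1 hE0.le]
      have hbδ : -(δR i * R t₀ i) = δR i * E := by rw [hReq]; ring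
      have hδE : 0 ≤ δR i * E := mul_nonneg (hδR i) hE0.le
      have hψ := (hsolR i t₀ ht₀0).add hde
      have hD : 0 < ((1 - R t₀ i - T t₀ i) * (∑ j, βU i j * R t₀ j) - δR i * R t₀ i
          + T t₀ i * (∑ j, βT i j * R t₀ j) - R t₀ i * (∑ j, γR i j * T t₀ j))
          + ε * (Real.exp (K * t₀) * K) := by linarith
      have hψ0 : (fun t => R t i + ε * Real.exp (K * t)) t₀ = 0 := by
        show R t₀ i + ε * Real.exp (K * t₀) = 0
        rw [hReq, ← hE_def]; ring
      obtain ⟨t, ht0, htlt, hneg⟩ := neg_left_of_hasDerivAt_pos hψ hD hψ0 ht₀pos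
      have := (hstrict t ht0.le htlt i).1
      simp only [Pi.add_apply] at hneg
      linarith
    · -- case T t₀ i = -E
      have hTeq : T t₀ i = -E := le_antisymm (by linarith) (hT₀ i)
      have hc₁h : 1 - R t₀ i - T t₀ i ≤ 3 := by
        rw [hTeq]; linarith [hR₀ i]
      have hb1 : -(3 * (B * M * E)) ≤ (1 - R t₀ i - T t₀ i) * (∑ j, γU i j * T t₀ j) := by
        rcases le_or_gt 0 (∑ j, γU i j * T t₀ j) with h | h
        · nlinarith [mul_nonneg (by linarith : (0:ℝ) ≤ 1 - R t₀ i - T t₀ i + E) h,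
            mul_le_mul_of_nonneg_left hS4.2 hE0.le]
        · nlinarith [mul_le_mul_of_nonpos_right hc₁h h.le, hS4.1]
      have hb2 : -(B * M * E) ≤ R t₀ i * (∑ j, γR i j * T t₀ j) := by
        rcases le_or_gt 0 (∑ j, γR i j * T t₀ j) with h | h
        · nlinarith [mul_nonneg (by linarith [hR₀ i] : (0:ℝ) ≤ R t₀ i + E) h,
            mul_le_mul_of_nonneg_left hS3.2 hE0.le]
        · nlinarith [mul_le_mul_of_nonpos_right (hRM i) h.le,
            mul_le_mul_of_nonneg_left hS3.1 hM0]
      have hb3' : -(T t₀ i * (∑ j, βT i j * R t₀ j)) = E * (∑ j, βT i j * R t₀ j) := by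
        rw [hTeq]; ring
      have hb3 : -(B * M * E) ≤ E * (∑ j, βT i j * R t₀ j) := by
        nlinarith [mul_le_mul_of_nonneg_left hS2.1 hE0.le]
      have hbδ : -(δT i * T t₀ i) = δT i * E := by rw [hTeq]; ring
      have hδE : 0 ≤ δT i * E := mul_nonneg (hδT i) hE0.le
      have hψ := (hsolT i t₀ ht₀0).add hde
      have hD : 0 < ((1 - R t₀ i - T t₀ i) * (∑ j, γU i j * T t₀ j) - δT i * T t₀ i
          + R t₀ i * (∑ j, γR i j * T t₀ j) - T t₀ i * (∑ j, βT i j * R t₀ j))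
          + ε * (Real.exp (K * t₀) * K) := by linarith
      have hψ0 : (fun t => T t i + ε * Real.exp (K * t)) t₀ = 0 := by
        show T t₀ i + ε * Real.exp (K * t₀) = 0
        rw [hTeq, ← hE_def]; ring
      obtain ⟨t, ht0, htlt, hneg⟩ := neg_left_of_hasDerivAt_pos hψ hD hψ0 ht₀pos
      have := (hstrict t ht0.le htlt i).2.1
      simp only [Pi.add_apply] at hneg
      linarith
    · -- case 1 - R t₀ i - T t₀ i = -E
      have hceq : 1 - R t₀ i - T t₀ i = -E := le_antisymm (by linarith) hc₁l
      have hES1 : -(B * M * E) ≤ E * (∑ j, βU i j * R t₀ j) := by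
        nlinarith [mul_le_mul_of_nonneg_left hS1.1 hE0.le]
      have hES4 : -(B * M * E) ≤ E * (∑ j, γU i j * T t₀ j) := by
        nlinarith [mul_le_mul_of_nonneg_left hS4.1 hE0.le]
      have hBM1 : 0 ≤ B * (M - 1) * E :=
        mul_nonneg (mul_nonneg hB0 (by linarith)) hE0.le
      have hδRR : -(B * M * E) ≤ δR i * R t₀ i := by
        nlinarith [mul_le_mul_of_nonneg_left (hR₀ i) (hδR i),
          mul_le_mul_of_nonneg_right (hδRB i) hE0.le]
      have hδTT : -(B * M * E) ≤ δT i * T t₀ i := by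
        nlinarith [mul_le_mul_of_nonneg_left (hT₀ i) (hδT i),
          mul_le_mul_of_nonneg_right (hδTB i) hE0.le]
      have hcS1 : (1 - R t₀ i - T t₀ i) * (∑ j, βU i j * R t₀ j)
          = -(E * (∑ j, βU i j * R t₀ j)) := by rw [hceq]; ring
      have hcS4 : (1 - R t₀ i - T t₀ i) * (∑ j, γU i j * T t₀ j)
          = -(E * (∑ j, γU i j * T t₀ j)) := by rw [hceq]; ring
      have hψ : HasDerivAt (fun t => 1 - R t i - T t i + ε * Real.exp (K * t))
          (0 - ((1 - R t₀ i - T t₀ i) * (∑ j, βU i j * R t₀ j) - δR i * R t₀ i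
            + T t₀ i * (∑ j, βT i j * R t₀ j) - R t₀ i * (∑ j, γR i j * T t₀ j))
           - ((1 - R t₀ i - T t₀ i) * (∑ j, γU i j * T t₀ j) - δT i * T t₀ i
            + R t₀ i * (∑ j, γR i j * T t₀ j) - T t₀ i * (∑ j, βT i j * R t₀ j))
           + ε * (Real.exp (K * t₀) * K)) t₀ :=
        (((hasDerivAt_const t₀ (1:ℝ)).sub (hsolR i t₀ ht₀0)).sub (hsolT i t₀ ht₀0)).add hde
      have hD : 0 < (0 - ((1 - R t₀ i - T t₀ i) * (∑ j, βU i j * R t₀ j) - δR i * R t₀ i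
            + T t₀ i * (∑ j, βT i j * R t₀ j) - R t₀ i * (∑ j, γR i j * T t₀ j))
           - ((1 - R t₀ i - T t₀ i) * (∑ j, γU i j * T t₀ j) - δT i * T t₀ i
            + R t₀ i * (∑ j, γR i j * T t₀ j) - T t₀ i * (∑ j, βT i j * R t₀ j))
           + ε * (Real.exp (K * t₀) * K)) := by
        rw [hcS1, hcS4]
        linarith
      have hψ0 : (fun t => 1 - R t i - T t i + ε * Real.exp (K * t)) t₀ = 0 := by
        show 1 - R t₀ i - T t₀ i + ε * Real.exp (K * t₀) = 0
        rw [hceq, ← hE_def]; ring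
      obtain ⟨t, ht0, htlt, hneg⟩ := neg_left_of_hasDerivAt_pos hψ hD hψ0 ht₀pos
      have := (hstrict t ht0.le htlt i).2.2
      linarith
  -- pass to the limit ε → 0
  intro i
  have hkey : ∀ x : ℝ, (∀ ε : ℝ, 0 < ε → ε * Real.exp (K * A) ≤ 1 →
      0 < x + ε * Real.exp (K * A)) → 0 ≤ x := by
    intro x hx
    by_contra hc
    push_neg at hc
    have hexp : 0 < Real.exp (K * A) := Real.exp_pos _
    set ε : ℝ := min (Real.exp (K * A))⁻¹ (-x / (2 * Real.exp (K * A))) with hε_def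
    have hε0 : 0 < ε := lt_min (by positivity) (div_pos (by linarith) (by positivity))
    have hε1 : ε * Real.exp (K * A) ≤ 1 := by
      have : ε ≤ (Real.exp (K * A))⁻¹ := min_le_left _ _
      calc ε * Real.exp (K * A) ≤ (Real.exp (K * A))⁻¹ * Real.exp (K * A) :=
            mul_le_mul_of_nonneg_right this hexp.le
        _ = 1 := inv_mul_cancel₀ hexp.ne'
    have h2 : ε * Real.exp (K * A) ≤ -x / 2 := by
      have : ε ≤ -x / (2 * Real.exp (K * A)) := min_le_right _ _
      calc ε * Real.exp (K * A) ≤ (-x / (2 * Real.exp (K * A))) * Real.exp (K * A) :=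
            mul_le_mul_of_nonneg_right this hexp.le
        _ = -x / 2 := by field_simp
    have := hx ε hε0 hε1
    linarith
  have hmono : ∀ (ε : ℝ), 0 < ε → ∀ t ∈ Icc (0:ℝ) A,
      ε * Real.exp (K * t) ≤ ε * Real.exp (K * A) := by
    intro ε hε t ht
    exact mul_le_mul_of_nonneg_left (Real.exp_le_exp.mpr
      (mul_le_mul_of_nonneg_left ht.2 hK0.le)) hε.le
  have hAIcc : A ∈ Icc (0:ℝ) A := ⟨hA, le_refl A⟩
  refine ⟨?_, ?_, ?_⟩
  · refine hkey _ (fun ε hε hεA => ?_)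
    have h := (hbarrier ε hε hεA A hAIcc i).1
    have := hmono ε hε A hAIcc
    linarith
  · refine hkey _ (fun ε hε hεA => ?_)
    have h := (hbarrier ε hε hεA A hAIcc i).2.1
    have := hmono ε hε A hAIcc
    linarith
  · have h := hkey (1 - R A i - T A i) (fun ε hε hεA => ?_)
    · linarith
    · have h := (hbarrier ε hε hεA A hAIcc i).2.2
      have := hmono ε hε A hAIcc
      linarith


set_option maxHeartbeats 1000000 in
/-- Linear URTU model: if the column sums of the spreading rates are dominated
by the forgetting rates, the uncertain equilibrium attracts Ω. -/
theorem linearURTU_uncertain_attracts_of_column_sums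
    {N : ℕ} (hN : 0 < N)
    (ER ET : Fin N → Fin N → Prop)
    (hERconn : ∀ i j : Fin N, Relation.ReflTransGen ER i j)
    (hETconn : ∀ i j : Fin N, Relation.ReflTransGen ET i j)
    (δR δT : Fin N → ℝ) (hδR : ∀ i, 0 < δR i) (hδT : ∀ i, 0 < δT i)
    (βU βT γU γR : Fin N → Fin N → ℝ)
    (hβord : ∀ i j : Fin N, 0 ≤ βT i j ∧ βT i j ≤ βU i j)
    (hβU : ∀ i j : Fin N, 0 < βU i j ↔ ER i j)
    (hβT : ∀ i j : Fin N, 0 < βT i j ↔ ER i j)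
    (hγord : ∀ i j : Fin N, 0 ≤ γR i j ∧ γR i j ≤ γU i j)
    (hγU : ∀ i j : Fin N, 0 < γU i j ↔ ET i j)
    (hγR : ∀ i j : Fin N, 0 < γR i j ↔ ET i j)
    (R T : ℝ → Fin N → ℝ)
    (hsolR : ∀ (i : Fin N) (t : ℝ), 0 ≤ t → HasDerivAt (fun τ => R τ i)
      ((1 - R t i - T t i) * (∑ j, βU i j * R t j) - δR i * R t i
        + T t i * (∑ j, βT i j * R t j) - R t i * (∑ j, γR i j * T t j)) t)
    (hsolT : ∀ (i : Fin N) (t : ℝ), 0 ≤ t → HasDerivAt (fun τ => T τ i)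
      ((1 - R t i - T t i) * (∑ j, γU i j * T t j) - δT i * T t i
        + R t i * (∑ j, γR i j * T t j) - T t i * (∑ j, βT i j * R t j)) t)
    (hinit : ∀ i : Fin N, 0 ≤ R 0 i ∧ 0 ≤ T 0 i ∧ R 0 i + T 0 i ≤ 1)
    (hBcol : ∀ j : Fin N, (∑ i, βU i j) < δR j)
    (hCcol : ∀ j : Fin N, (∑ i, γU i j) < δT j) :
    ∀ i : Fin N, Tendsto (fun t => R t i) atTop (𝓝 0) ∧
      Tendsto (fun t => T t i) atTop (𝓝 0) := by
  clear hERconn hETconn hβU hβT hγU hγR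
  have hβT0 : ∀ i j, 0 ≤ βT i j := fun i j => (hβord i j).1
  have hβTU : ∀ i j, βT i j ≤ βU i j := fun i j => (hβord i j).2
  have hγR0 : ∀ i j, 0 ≤ γR i j := fun i j => (hγord i j).1
  have hγRU : ∀ i j, γR i j ≤ γU i j := fun i j => (hγord i j).2
  have hβU0 : ∀ i j, 0 ≤ βU i j := fun i j => le_trans (hβT0 i j) (hβTU i j)
  have hγU0 : ∀ i j, 0 ≤ γU i j := fun i j => le_trans (hγR0 i j) (hγRU i j)
  have hInv := urtu_mem_Omega δR δT (fun i => (hδR i).le) (fun i => (hδT i).le)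
    βU βT γU γR hβT0 hβTU hγR0 hγRU R T hsolR hsolT hinit
  haveI : Nonempty (Fin N) := ⟨⟨0, hN⟩⟩
  -- the decay rate
  set ε₁ : ℝ := Finset.univ.inf' Finset.univ_nonempty
    (fun j => min (δR j - ∑ i, βU i j) (δT j - ∑ i, γU i j)) with hε₁_def
  have hε₁pos : 0 < ε₁ := by
    rw [hε₁_def, Finset.lt_inf'_iff]
    intro j _
    exact lt_min (by linarith [hBcol j]) (by linarith [hCcol j])
  have hε₁min : ∀ j, ε₁ ≤ min (δR j - ∑ i, βU i j) (δT j - ∑ i, γU i j) := by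
    intro j
    rw [hε₁_def]
    exact Finset.inf'_le _ (Finset.mem_univ j)
  have hε₁R : ∀ j, (∑ i, βU i j) - δR j ≤ -ε₁ := by
    intro j
    have h := hε₁min j
    have := min_le_left (δR j - ∑ i, βU i j) (δT j - ∑ i, γU i j)
    linarith
  have hε₁T : ∀ j, (∑ i, γU i j) - δT j ≤ -ε₁ := by
    intro j
    have h := hε₁min j
    have := min_le_right (δR j - ∑ i, βU i j) (δT j - ∑ i, γU i j)
    linarith
  clear_value ε₁
  clear hε₁_def hBcol hCcol
  -- the Lyapunov function
  set W : ℝ → ℝ := fun t => ∑ i, (R t i + T t i) with hW_def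
  have hWderiv : ∀ t : ℝ, 0 ≤ t → HasDerivAt W
      (∑ i, ((1 - R t i - T t i) * ((∑ j, βU i j * R t j) + (∑ j, γU i j * T t j))
        - δR i * R t i - δT i * T t i)) t := by
    intro t ht
    have h := HasDerivAt.sum (u := Finset.univ)
      (A := fun i τ => R τ i + T τ i)
      (A' := fun i => ((1 - R t i - T t i) * (∑ j, βU i j * R t j) - δR i * R t i
        + T t i * (∑ j, βT i j * R t j) - R t i * (∑ j, γR i j * T t j))
        + ((1 - R t i - T t i) * (∑ j, γU i j * T t j) - δT i * T t i
        + R t i * (∑ j, γR i j * T t j) - T t i * (∑ j, βT i j * R t j)))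
      (fun i _ => (hsolR i t ht).add (hsolT i t ht))
    have heq : (∑ i, (((1 - R t i - T t i) * (∑ j, βU i j * R t j) - δR i * R t i
        + T t i * (∑ j, βT i j * R t j) - R t i * (∑ j, γR i j * T t j))
        + ((1 - R t i - T t i) * (∑ j, γU i j * T t j) - δT i * T t i
        + R t i * (∑ j, γR i j * T t j) - T t i * (∑ j, βT i j * R t j))))
        = ∑ i, ((1 - R t i - T t i) * ((∑ j, βU i j * R t j) + (∑ j, γU i j * T t j))
        - δR i * R t i - δT i * T t i) :=
      Finset.sum_congr rfl fun i _ => by ring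
    rw [hW_def]
    simp only [Finset.sum_fn] at h
    exact heq ▸ h
  -- the derivative bound
  have hWle : ∀ t : ℝ, 0 ≤ t →
      (∑ i, ((1 - R t i - T t i) * ((∑ j, βU i j * R t j) + (∑ j, γU i j * T t j))
        - δR i * R t i - δT i * T t i)) ≤ -(ε₁ * W t) := by
    intro t ht
    have hR0 : ∀ j, 0 ≤ R t j := fun j => (hInv t ht j).1
    have hT0 : ∀ j, 0 ≤ T t j := fun j => (hInv t ht j).2.1
    have step1 : (∑ i, ((1 - R t i - T t i) * ((∑ j, βU i j * R t j) + (∑ j, γU i j * T t j))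
        - δR i * R t i - δT i * T t i))
        ≤ ∑ i, (((∑ j, βU i j * R t j) + (∑ j, γU i j * T t j))
        - δR i * R t i - δT i * T t i) := by
      refine Finset.sum_le_sum fun i _ => ?_
      have h1 : 0 ≤ (∑ j, βU i j * R t j) + (∑ j, γU i j * T t j) :=
        add_nonneg (Finset.sum_nonneg fun j _ => mul_nonneg (hβU0 i j) (hR0 j))
          (Finset.sum_nonneg fun j _ => mul_nonneg (hγU0 i j) (hT0 j))
      have h2 := (hInv t ht i).2.2
      have h3 := hT0 i
      have h4 := hR0 i
      have := mul_le_of_le_one_left h1 (by linarith : 1 - R t i - T t i ≤ 1)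
      linarith
    have e1 : (∑ i, (∑ j, βU i j * R t j)) = ∑ j, (∑ i, βU i j) * R t j := by
      rw [Finset.sum_comm]
      exact Finset.sum_congr rfl fun j _ => (Finset.sum_mul _ _ _).symm
    have e4 : (∑ i, (∑ j, γU i j * T t j)) = ∑ j, (∑ i, γU i j) * T t j := by
      rw [Finset.sum_comm]
      exact Finset.sum_congr rfl fun j _ => (Finset.sum_mul _ _ _).symm
    have expand : (∑ i, (((∑ j, βU i j * R t j) + (∑ j, γU i j * T t j))
        - δR i * R t i - δT i * T t i))
        = ∑ j, ((∑ i, βU i j) * R t j + (∑ i, γU i j) * T t j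
            - δR j * R t j - δT j * T t j) := by
      rw [Finset.sum_sub_distrib, Finset.sum_sub_distrib, Finset.sum_add_distrib, e1, e4,
        Finset.sum_sub_distrib, Finset.sum_sub_distrib, Finset.sum_add_distrib]
    have final : -(ε₁ * W t) = ∑ j, -(ε₁ * (R t j + T t j)) := by
      rw [hW_def]
      show -(ε₁ * ∑ i, (R t i + T t i)) = _
      rw [Finset.mul_sum, ← Finset.sum_neg_distrib]
    have step2 : (∑ j, ((∑ i, βU i j) * R t j + (∑ i, γU i j) * T t j
            - δR j * R t j - δT j * T t j)) ≤ ∑ j, -(ε₁ * (R t j + T t j)) := by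
      refine Finset.sum_le_sum fun j _ => ?_
      have h1 := hε₁R j
      have h2 := hε₁T j
      nlinarith [mul_le_mul_of_nonneg_right h1 (hR0 j),
        mul_le_mul_of_nonneg_right h2 (hT0 j)]
    rw [final]
    calc _ ≤ _ := step1
      _ = _ := expand
      _ ≤ _ := step2
  -- continuity of W on [0, ∞)
  have hWc : ContinuousOn W (Ici (0:ℝ)) := by
    rw [hW_def]
    refine continuousOn_finset_sum _ fun i _ => ContinuousOn.add ?_ ?_
    · exact fun t ht => ((hsolR i t ht).continuousAt).continuousWithinAt
    · exact fun t ht => ((hsolT i t ht).continuousAt).continuousWithinAt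
  -- the rescaled Lyapunov function is antitone
  set g : ℝ → ℝ := fun t => W t * Real.exp (ε₁ * t) with hg_def
  have hgd : ∀ t : ℝ, 0 ≤ t → HasDerivAt g
      ((∑ i, ((1 - R t i - T t i) * ((∑ j, βU i j * R t j) + (∑ j, γU i j * T t j))
        - δR i * R t i - δT i * T t i)) * Real.exp (ε₁ * t)
        + W t * (Real.exp (ε₁ * t) * ε₁)) t := by
    intro t ht
    have h1 : HasDerivAt (fun s : ℝ => ε₁ * s) ε₁ t := by
      simpa using (hasDerivAt_id t).const_mul ε₁
    have h2 := (Real.hasDerivAt_exp (ε₁ * t)).comp t h1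
    exact (hWderiv t ht).mul h2
  have hgc : ContinuousOn g (Ici (0:ℝ)) := by
    rw [hg_def]
    refine hWc.mul (Continuous.continuousOn ?_)
    exact Real.continuous_exp.comp (continuous_const.mul continuous_id)
  have hganti : AntitoneOn g (Ici (0:ℝ)) := by
    refine antitoneOn_of_deriv_nonpos (convex_Ici 0) hgc ?_ ?_
    · intro x hx
      rw [interior_Ici] at hx
      exact ((hgd x (le_of_lt hx)).differentiableAt).differentiableWithinAt
    · intro x hx
      rw [interior_Ici] at hx
      rw [(hgd x (le_of_lt hx)).deriv]
      have h1 := hWle x (le_of_lt hx)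
      have h2 := Real.exp_pos (ε₁ * x)
      nlinarith [mul_le_mul_of_nonneg_right h1 h2.le]
  -- exponential decay of W
  have hdecay : ∀ t : ℝ, 0 ≤ t → W t ≤ W 0 * Real.exp (-(ε₁ * t)) := by
    intro t ht
    have h := hganti (self_mem_Ici) (mem_Ici.mpr ht) ht
    have hg0 : g 0 = W 0 := by
      rw [hg_def]
      show W 0 * Real.exp (ε₁ * 0) = W 0
      rw [mul_zero, Real.exp_zero, mul_one]
    have hgt : g t = W t * Real.exp (ε₁ * t) := rfl
    rw [hg0, hgt] at h
    have hexp := Real.exp_pos (ε₁ * t)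
    rw [Real.exp_neg, ← div_eq_mul_inv, le_div_iff₀ hexp]
    exact h
  -- squeeze
  have hWnonneg : ∀ t : ℝ, 0 ≤ t → ∀ i, R t i ≤ W t ∧ T t i ≤ W t := by
    intro t ht i
    have h1 : R t i + T t i ≤ W t := by
      rw [hW_def]
      exact Finset.single_le_sum
        (f := fun k => R t k + T t k)
        (fun k _ => add_nonneg (hInv t ht k).1 (hInv t ht k).2.1) (Finset.mem_univ i)
    exact ⟨by linarith [(hInv t ht i).2.1], by linarith [(hInv t ht i).1]⟩
  have htop : Tendsto (fun t : ℝ => W 0 * Real.exp (-(ε₁ * t))) atTop (𝓝 0) := by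
    have h1 : Tendsto (fun t : ℝ => ε₁ * t) atTop atTop :=
      Tendsto.const_mul_atTop hε₁pos tendsto_id
    have h2 : Tendsto (fun t : ℝ => Real.exp (-(ε₁ * t))) atTop (𝓝 0) :=
      Real.tendsto_exp_neg_atTop_nhds_zero.comp h1
    have := h2.const_mul (W 0)
    simpa using this
  intro i
  constructor
  · refine tendsto_of_tendsto_of_tendsto_of_le_of_le' tendsto_const_nhds htop ?_ ?_
    · filter_upwards [eventually_ge_atTop (0:ℝ)] with t ht
      exact (hInv t ht i).1
    · filter_upwards [eventually_ge_atTop (0:ℝ)] with t ht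
      exact le_trans (hWnonneg t ht i).1 (hdecay t ht)
  · refine tendsto_of_tendsto_of_tendsto_of_le_of_le' tendsto_const_nhds htop ?_ ?_
    · filter_upwards [eventually_ge_atTop (0:ℝ)] with t ht
      exact (hInv t ht i).2.1
    · filter_upwards [eventually_ge_atTop (0:ℝ)] with t ht
      exact le_trans (hWnonneg t ht i).2 (hdecay t ht)
end

section
/- For the linear URTU model, if Σ_{j=1}^N β_ij^U / δ_j^R < 1 and Σ_{j=1}^N γ_ij^U / δ_j^T < 1 hold for every i = 1,…,N, then the uncertain equilibrium (0, 0) attracts Ω: every solution with initial value in Ω converges to (0,0) as t → ∞. -/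
open Filter Topology

section URTUAux
open Real Set

lemma mul_le_pos_parts (x b : ℝ) : x * b ≤ max x 0 * |b| + max (-x) 0 * max (-b) 0 := by
  rcases le_or_gt 0 x with h | h
  · rw [max_eq_left h, max_eq_right (by linarith : -x ≤ 0)]
    nlinarith [le_abs_self b, abs_nonneg b]
  · rw [max_eq_right h.le, max_eq_left (by linarith : (0:ℝ) ≤ -x)]
    nlinarith [le_max_left (-b) 0, le_max_right (-b) 0]

lemma tendsto_slope_right {f : ℝ → ℝ} {f' x : ℝ} (hf : HasDerivAt f f' x) :
    Tendsto (fun z => (z - x)⁻¹ * (f z - f x)) (𝓝[>] x) (𝓝 f') := by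
  have h1 := hf.hasDerivWithinAt (s := Set.Ioi x)
  rw [hasDerivWithinAt_iff_tendsto_slope] at h1
  have h2 : Set.Ioi x \ {x} = Set.Ioi x := diff_singleton_eq_self (by simp)
  rw [h2] at h1
  refine h1.congr fun z => ?_
  rw [slope_def_field, div_eq_inv_mul]

lemma slope_posPart_lt {f : ℝ → ℝ} {f' x r : ℝ} (hf : HasDerivAt f f' x)
    (hr : (if 0 ≤ f x then max f' 0 else 0) < r) :
    ∀ᶠ z in 𝓝[>] x, (z - x)⁻¹ * (max (f z) 0 - max (f x) 0) < r := by
  have hs := tendsto_slope_right hf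
  by_cases h0 : 0 ≤ f x
  · rw [if_pos h0] at hr
    have hf'r : f' < r := lt_of_le_of_lt (le_max_left _ _) hr
    have h0r : (0:ℝ) < r := lt_of_le_of_lt (le_max_right _ _) hr
    rcases eq_or_lt_of_le h0 with he | hpos
    · -- f x = 0
      have h1 : ∀ᶠ z in 𝓝[>] x, (z - x)⁻¹ * (f z - f x) < r := hs.eventually_lt_const hf'r
      filter_upwards [h1, self_mem_nhdsWithin] with z hz hz'
      have hzx : (0:ℝ) < z - x := sub_pos.2 hz'
      rw [← he, max_eq_right le_rfl, sub_zero] at *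
      rcases le_or_gt (f z) 0 with hfz | hfz
      · rw [max_eq_right hfz]; simpa using h0r
      · rw [max_eq_left hfz.le]
        simpa [← he, sub_zero] using hz
    · have hcont : ∀ᶠ z in 𝓝[>] x, 0 < f z :=
        (hf.continuousAt.eventually (eventually_gt_nhds hpos)).filter_mono nhdsWithin_le_nhds
      have h1 : ∀ᶠ z in 𝓝[>] x, (z - x)⁻¹ * (f z - f x) < r := hs.eventually_lt_const hf'r
      filter_upwards [h1, hcont] with z hz hzpos
      rw [max_eq_left hzpos.le, max_eq_left hpos.le]
      exact hz
  · rw [if_neg h0] at hr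
    push_neg at h0
    have hcont : ∀ᶠ z in 𝓝[>] x, f z < 0 :=
      (hf.continuousAt.eventually (eventually_lt_nhds h0)).filter_mono nhdsWithin_le_nhds
    filter_upwards [hcont] with z hz
    rw [max_eq_right hz.le, max_eq_right h0.le]
    simpa using hr

lemma slope_sum_posPart_lt' {ι : Type*} [Fintype ι] [Nonempty ι]
    (f : ι → ℝ → ℝ) (f' : ι → ℝ) (x : ℝ)
    (hf : ∀ i, HasDerivAt (f i) (f' i) x) {r : ℝ}
    (hr : (∑ i, if 0 ≤ f i x then max (f' i) 0 else 0) < r) :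
    ∀ᶠ z in 𝓝[>] x, (z - x)⁻¹ * ((∑ i, max (f i z) 0) - ∑ i, max (f i x) 0) < r := by
  set D : ι → ℝ := fun i => if 0 ≤ f i x then max (f' i) 0 else 0 with hD
  have hn : (0:ℝ) < (Fintype.card ι : ℝ) := by
    exact_mod_cast Fintype.card_pos
  set e : ℝ := (r - ∑ i, D i) / Fintype.card ι with he
  have he0 : 0 < e := div_pos (by linarith [hr]) hn
  have key : ∀ i, ∀ᶠ z in 𝓝[>] x, (z - x)⁻¹ * (max (f i z) 0 - max (f i x) 0) < D i + e :=
    fun i => slope_posPart_lt (hf i) (by simpa [hD] using lt_add_of_pos_right (D i) he0)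
  filter_upwards [eventually_all.2 key, self_mem_nhdsWithin] with z hz hz'
  have hzx : (0:ℝ) < z - x := sub_pos.2 hz'
  have hsum : (z - x)⁻¹ * ((∑ i, max (f i z) 0) - ∑ i, max (f i x) 0)
      = ∑ i, (z - x)⁻¹ * (max (f i z) 0 - max (f i x) 0) := by
    rw [← Finset.sum_sub_distrib, ← Finset.mul_sum]
  rw [hsum]
  calc ∑ i, (z - x)⁻¹ * (max (f i z) 0 - max (f i x) 0)
      < ∑ i, (D i + e) := Finset.sum_lt_sum_of_nonempty Finset.univ_nonempty fun i _ => hz i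
    _ = r := by
        rw [Finset.sum_add_distrib, Finset.sum_const, Finset.card_univ, nsmul_eq_mul, he]
        field_simp
        ring

lemma abs_sum_mul_le {N : ℕ} (a v : Fin N → ℝ) {A : ℝ} (ha : ∀ j, 0 ≤ a j)
    (hv : ∀ j, |v j| ≤ A) : |∑ j, a j * v j| ≤ (∑ j, a j) * A := by
  calc |∑ j, a j * v j| ≤ ∑ j, |a j * v j| := Finset.abs_sum_le_sum_abs _ _
    _ ≤ ∑ j, a j * A := Finset.sum_le_sum fun j _ => by
        rw [abs_mul, abs_of_nonneg (ha j)]; exact mul_le_mul_of_nonneg_left (hv j) (ha j)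
    _ = (∑ j, a j) * A := by rw [← Finset.sum_mul]

lemma neg_sum_mul_le {N : ℕ} (a v : Fin N → ℝ) {W : ℝ} (ha : ∀ j, 0 ≤ a j)
    (hv : ∀ j, -v j ≤ W) : -(∑ j, a j * v j) ≤ (∑ j, a j) * W := by
  have h1 : -(∑ j, a j * v j) = ∑ j, a j * -v j := by
    rw [← Finset.sum_neg_distrib]; exact Finset.sum_congr rfl (by intros; ring)
  rw [h1, Finset.sum_mul]
  exact Finset.sum_le_sum fun j _ => mul_le_mul_of_nonneg_left (hv j) (ha j)

set_option maxHeartbeats 3200000 in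
lemma urtu_invariant {N : ℕ} (hN : 0 < N)
    (δR δT : Fin N → ℝ) (hδR : ∀ i, 0 < δR i) (hδT : ∀ i, 0 < δT i)
    (βU βT γU γR : Fin N → Fin N → ℝ)
    (hβord : ∀ i j : Fin N, 0 ≤ βT i j ∧ βT i j ≤ βU i j)
    (hγord : ∀ i j : Fin N, 0 ≤ γR i j ∧ γR i j ≤ γU i j)
    (R T : ℝ → Fin N → ℝ)
    (hsolR : ∀ (i : Fin N) (t : ℝ), 0 ≤ t → HasDerivAt (fun τ => R τ i)
      ((1 - R t i - T t i) * (∑ j, βU i j * R t j) - δR i * R t i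
        + T t i * (∑ j, βT i j * R t j) - R t i * (∑ j, γR i j * T t j)) t)
    (hsolT : ∀ (i : Fin N) (t : ℝ), 0 ≤ t → HasDerivAt (fun τ => T τ i)
      ((1 - R t i - T t i) * (∑ j, γU i j * T t j) - δT i * T t i
        + R t i * (∑ j, γR i j * T t j) - T t i * (∑ j, βT i j * R t j)) t)
    (hinit : ∀ i : Fin N, 0 ≤ R 0 i ∧ 0 ≤ T 0 i ∧ R 0 i + T 0 i ≤ 1) :
    ∀ t : ℝ, 0 ≤ t → ∀ i : Fin N, 0 ≤ R t i ∧ 0 ≤ T t i ∧ R t i + T t i ≤ 1 := by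
  intro b hb
  haveI : Nonempty (Fin N) := ⟨⟨0, hN⟩⟩
  have hβU0 : ∀ i j, 0 ≤ βU i j := fun i j => le_trans (hβord i j).1 (hβord i j).2
  have hβT0 : ∀ i j, 0 ≤ βT i j := fun i j => (hβord i j).1
  have hγU0 : ∀ i j, 0 ≤ γU i j := fun i j => le_trans (hγord i j).1 (hγord i j).2
  have hγR0 : ∀ i j, 0 ≤ γR i j := fun i j => (hγord i j).1
  -- derivative expressions
  set DR : ℝ → Fin N → ℝ := fun t i =>
    (1 - R t i - T t i) * (∑ j, βU i j * R t j) - δR i * R t i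
      + T t i * (∑ j, βT i j * R t j) - R t i * (∑ j, γR i j * T t j) with hDR
  set DT : ℝ → Fin N → ℝ := fun t i =>
    (1 - R t i - T t i) * (∑ j, γU i j * T t j) - δT i * T t i
      + R t i * (∑ j, γR i j * T t j) - T t i * (∑ j, βT i j * R t j) with hDT
  -- flattened families
  set F : (Fin N ⊕ Fin N ⊕ Fin N) → ℝ → ℝ :=
    Sum.elim (fun i t => -R t i) (Sum.elim (fun i t => -T t i)
      (fun i t => R t i + T t i - 1)) with hF
  set F' : ℝ → (Fin N ⊕ Fin N ⊕ Fin N) → ℝ :=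
    fun t => Sum.elim (fun i => -(DR t i)) (Sum.elim (fun i => -(DT t i))
      (fun i => DR t i + DT t i)) with hF'
  have hFderiv : ∀ p, ∀ x : ℝ, 0 ≤ x → HasDerivAt (F p) (F' x p) x := by
    rintro (i | i | i) x hx
    · exact (hsolR i x hx).neg
    · exact (hsolT i x hx).neg
    · exact ((hsolR i x hx).add (hsolT i x hx)).sub_const 1
  -- continuity
  have hcR : ∀ i, ContinuousOn (fun t => R t i) (Icc 0 b) := fun i t ht =>
    ((hsolR i t ht.1).continuousAt).continuousWithinAt
  have hcT : ∀ i, ContinuousOn (fun t => T t i) (Icc 0 b) := fun i t ht =>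
    ((hsolT i t ht.1).continuousAt).continuousWithinAt
  have hcF : ∀ p, ContinuousOn (F p) (Icc 0 b) := by
    rintro (i | i | i)
    · exact (hcR i).neg
    · exact (hcT i).neg
    · exact ((hcR i).add (hcT i)).sub continuousOn_const
  -- the Lyapunov function
  set V : ℝ → ℝ := fun t => ∑ p, max (F p t) 0 with hV
  have hV0 : ∀ t, 0 ≤ V t := fun t =>
    Finset.sum_nonneg fun p _ => le_max_right _ _
  have hterm : ∀ p t, max (F p t) 0 ≤ V t := fun p t =>
    Finset.single_le_sum (fun q _ => le_max_right (F q t) 0) (Finset.mem_univ p)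
  have hFV : ∀ p t, F p t ≤ V t := fun p t => le_trans (le_max_left _ _) (hterm p t)
  have hVc : ContinuousOn V (Icc 0 b) :=
    continuousOn_finset_sum _ fun p _ => (hcF p).sup continuousOn_const
  -- bounds on the state on [0, b]
  choose AR hAR using fun i => isCompact_Icc.exists_bound_of_continuousOn (hcR i)
  choose AT hAT using fun i => isCompact_Icc.exists_bound_of_continuousOn (hcT i)
  set A : ℝ := 1 + ∑ i, (|AR i| + |AT i|) with hA
  have hA1 : 1 ≤ A := le_add_of_nonneg_right
    (Finset.sum_nonneg fun i _ => by positivity)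
  have hRA : ∀ x ∈ Icc (0:ℝ) b, ∀ i, |R x i| ≤ A := by
    intro x hx i
    have h1 := hAR i x hx
    rw [Real.norm_eq_abs] at h1
    have h2 : |AR i| + |AT i| ≤ ∑ i, (|AR i| + |AT i|) :=
      Finset.single_le_sum (f := fun i => |AR i| + |AT i|) (fun j _ => by positivity)
        (Finset.mem_univ i)
    have := le_abs_self (AR i)
    have := abs_nonneg (AT i)
    linarith
  have hTA : ∀ x ∈ Icc (0:ℝ) b, ∀ i, |T x i| ≤ A := by
    intro x hx i
    have h1 := hAT i x hx
    rw [Real.norm_eq_abs] at h1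
    have h2 : |AR i| + |AT i| ≤ ∑ i, (|AR i| + |AT i|) :=
      Finset.single_le_sum (f := fun i => |AR i| + |AT i|) (fun j _ => by positivity)
        (Finset.mem_univ i)
    have := le_abs_self (AT i)
    have := abs_nonneg (AR i)
    linarith
  -- a uniform bound on all coefficient sums
  set P : ℝ := 1 + ((∑ i, ∑ j, (βU i j + γU i j)) + ∑ i, (δR i + δT i)) with hP
  have hsum2 : (0:ℝ) ≤ ∑ i, ∑ j, (βU i j + γU i j) :=
    Finset.sum_nonneg fun i _ => Finset.sum_nonneg fun j _ => by
      have := hβU0 i j; have := hγU0 i j; linarith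
  have hsumδ : (0:ℝ) ≤ ∑ i, (δR i + δT i) :=
    Finset.sum_nonneg fun i _ => by have := hδR i; have := hδT i; linarith
  have hP1 : 1 ≤ P := by simp only [hP]; linarith
  have hPβU : ∀ i, (∑ j, βU i j) ≤ P := by
    intro i
    have h1 : (∑ j, βU i j) ≤ ∑ j, (βU i j + γU i j) :=
      Finset.sum_le_sum fun j _ => by have := hγU0 i j; linarith
    have h2 : (∑ j, (βU i j + γU i j)) ≤ ∑ i, ∑ j, (βU i j + γU i j) :=
      Finset.single_le_sum (f := fun k => ∑ j, (βU k j + γU k j))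
        (fun k _ => Finset.sum_nonneg fun j _ => by
          have := hβU0 k j; have := hγU0 k j; linarith) (Finset.mem_univ i)
    simp only [hP]; linarith
  have hPβT : ∀ i, (∑ j, βT i j) ≤ P := fun i =>
    le_trans (Finset.sum_le_sum fun j _ => (hβord i j).2) (hPβU i)
  have hPγU : ∀ i, (∑ j, γU i j) ≤ P := by
    intro i
    have h1 : (∑ j, γU i j) ≤ ∑ j, (βU i j + γU i j) :=
      Finset.sum_le_sum fun j _ => by have := hβU0 i j; linarith
    have h2 : (∑ j, (βU i j + γU i j)) ≤ ∑ i, ∑ j, (βU i j + γU i j) :=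
      Finset.single_le_sum (f := fun k => ∑ j, (βU k j + γU k j))
        (fun k _ => Finset.sum_nonneg fun j _ => by
          have := hβU0 k j; have := hγU0 k j; linarith) (Finset.mem_univ i)
    simp only [hP]; linarith
  have hPγR : ∀ i, (∑ j, γR i j) ≤ P := fun i =>
    le_trans (Finset.sum_le_sum fun j _ => (hγord i j).2) (hPγU i)
  have hPδR : ∀ i, δR i ≤ P := by
    intro i
    have h2 : δR i + δT i ≤ ∑ i, (δR i + δT i) :=
      Finset.single_le_sum (f := fun k => δR k + δT k)
        (fun k _ => add_nonneg (hδR k).le (hδT k).le)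
        (Finset.mem_univ i)
    have := hδT i
    simp only [hP]; linarith
  have hPδT : ∀ i, δT i ≤ P := by
    intro i
    have h2 : δR i + δT i ≤ ∑ i, (δR i + δT i) :=
      Finset.single_le_sum (f := fun k => δR k + δT k)
        (fun k _ => add_nonneg (hδR k).le (hδT k).le)
        (Finset.mem_univ i)
    have := hδR i
    simp only [hP]; linarith
  have hP0 : (0:ℝ) ≤ P := by linarith
  have hA0 : (0:ℝ) ≤ A := by linarith
  have hFeq1 : ∀ i t, F (Sum.inl i) t = -R t i := fun i t => rfl
  have hFeq2 : ∀ i t, F (Sum.inr (Sum.inl i)) t = -T t i := fun i t => rfl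
  have hFeq3 : ∀ i t, F (Sum.inr (Sum.inr i)) t = R t i + T t i - 1 := fun i t => rfl
  have hF'eq1 : ∀ t i, F' t (Sum.inl i) = -(DR t i) := fun t i => rfl
  have hF'eq2 : ∀ t i, F' t (Sum.inr (Sum.inl i)) = -(DT t i) := fun t i => rfl
  have hF'eq3 : ∀ t i, F' t (Sum.inr (Sum.inr i)) = DR t i + DT t i := fun t i => rfl
  have hVeq : ∀ t, V t = ∑ p, max (F p t) 0 := fun t => rfl
  have hDReq : ∀ t i, DR t i
      = (1 - R t i - T t i) * (∑ j, βU i j * R t j) - δR i * R t i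
        + T t i * (∑ j, βT i j * R t j) - R t i * (∑ j, γR i j * T t j) := fun t i => rfl
  have hDTeq : ∀ t i, DT t i
      = (1 - R t i - T t i) * (∑ j, γU i j * T t j) - δT i * T t i
        + R t i * (∑ j, γR i j * T t j) - T t i * (∑ j, βT i j * R t j) := fun t i => rfl
  clear_value F F' V DR DT A P
  clear hF hF' hV hDR hDT hA hP hAR hAT
  set C : ℝ := 8 * P * A with hC
  have hC0 : (0:ℝ) ≤ C := by rw [hC]; positivity
  clear_value C
  set K : ℝ := (Fintype.card (Fin N ⊕ Fin N ⊕ Fin N) : ℝ) * C with hK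
  clear_value K
  have hbound : ∀ x ∈ Ico (0:ℝ) b,
      (∑ p, if 0 ≤ F p x then max (F' x p) 0 else 0) ≤ K * V x + 0 := by
    intro x hx
    have hxI : x ∈ Icc (0:ℝ) b := ⟨hx.1, hx.2.le⟩
    have hRA' : ∀ i, |R x i| ≤ A := hRA x hxI
    have hTA' : ∀ i, |T x i| ≤ A := hTA x hxI
    have hVx : 0 ≤ V x := hV0 x
    have hCV : 0 ≤ C * V x := mul_nonneg hC0 hVx
    have hPV : 0 ≤ P * V x := mul_nonneg hP0 hVx
    have hb1abs : ∀ i, |∑ j, βU i j * R x j| ≤ P * A := fun i =>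
      le_trans (abs_sum_mul_le _ _ (hβU0 i) hRA') (mul_le_mul_of_nonneg_right (hPβU i) hA0)
    have hb2abs : ∀ i, |∑ j, βT i j * R x j| ≤ P * A := fun i =>
      le_trans (abs_sum_mul_le _ _ (hβT0 i) hRA') (mul_le_mul_of_nonneg_right (hPβT i) hA0)
    have hc1abs : ∀ i, |∑ j, γU i j * T x j| ≤ P * A := fun i =>
      le_trans (abs_sum_mul_le _ _ (hγU0 i) hTA') (mul_le_mul_of_nonneg_right (hPγU i) hA0)
    have hc2abs : ∀ i, |∑ j, γR i j * T x j| ≤ P * A := fun i =>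
      le_trans (abs_sum_mul_le _ _ (hγR0 i) hTA') (mul_le_mul_of_nonneg_right (hPγR i) hA0)
    have hnR : ∀ j, -R x j ≤ V x := fun j => hFeq1 j x ▸ hFV (Sum.inl j) x
    have hnT : ∀ j, -T x j ≤ V x := fun j => hFeq2 j x ▸ hFV (Sum.inr (Sum.inl j)) x
    have hnS : ∀ j, R x j + T x j - 1 ≤ V x := fun j => hFeq3 j x ▸ hFV (Sum.inr (Sum.inr j)) x
    have hmR : ∀ j, max (-R x j) 0 ≤ V x := fun j => hFeq1 j x ▸ hterm (Sum.inl j) x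
    have hmT : ∀ j, max (-T x j) 0 ≤ V x := fun j => hFeq2 j x ▸ hterm (Sum.inr (Sum.inl j)) x
    have hmS : ∀ j, max (R x j + T x j - 1) 0 ≤ V x :=
      fun j => hFeq3 j x ▸ hterm (Sum.inr (Sum.inr j)) x
    have hb1neg : ∀ i, -(∑ j, βU i j * R x j) ≤ P * V x := fun i =>
      le_trans (neg_sum_mul_le _ _ (hβU0 i) hnR) (mul_le_mul_of_nonneg_right (hPβU i) hVx)
    have hb2neg : ∀ i, -(∑ j, βT i j * R x j) ≤ P * V x := fun i =>
      le_trans (neg_sum_mul_le _ _ (hβT0 i) hnR) (mul_le_mul_of_nonneg_right (hPβT i) hVx)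
    have hc1neg : ∀ i, -(∑ j, γU i j * T x j) ≤ P * V x := fun i =>
      le_trans (neg_sum_mul_le _ _ (hγU0 i) hnT) (mul_le_mul_of_nonneg_right (hPγU i) hVx)
    have hc2neg : ∀ i, -(∑ j, γR i j * T x j) ≤ P * V x := fun i =>
      le_trans (neg_sum_mul_le _ _ (hγR0 i) hnT) (mul_le_mul_of_nonneg_right (hPγR i) hVx)
    have claimR : ∀ i, R x i ≤ 0 → -(DR x i) ≤ C * V x := by
      intro i hρ
      have e1 : -(DR x i) = (R x i + T x i - 1) * (∑ j, βU i j * R x j)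
          + δR i * R x i + (-(T x i)) * (∑ j, βT i j * R x j)
          + R x i * (∑ j, γR i j * T x j) := by rw [hDReq]; ring
      have t1 : (R x i + T x i - 1) * (∑ j, βU i j * R x j)
          ≤ V x * (P * A) + (1 + 2 * A) * (P * V x) := by
        have h := mul_le_pos_parts (R x i + T x i - 1) (∑ j, βU i j * R x j)
        have h2 : max (-(R x i + T x i - 1)) 0 ≤ 1 + 2 * A := by
          refine max_le ?_ (by linarith)
          have := neg_abs_le (R x i); have := neg_abs_le (T x i)
          have := hRA' i; have := hTA' i; linarith
        have h3 : max (-(∑ j, βU i j * R x j)) 0 ≤ P * V x := max_le (hb1neg i) hPV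
        refine le_trans h (add_le_add (mul_le_mul (hmS i) (hb1abs i) (abs_nonneg _) hVx)
          (mul_le_mul h2 h3 (le_max_right _ _) (by linarith)))
      have t2 : δR i * R x i ≤ 0 := mul_nonpos_of_nonneg_of_nonpos (hδR i).le hρ
      have t3 : (-(T x i)) * (∑ j, βT i j * R x j) ≤ V x * (P * A) + A * (P * V x) := by
        have h := mul_le_pos_parts (-(T x i)) (∑ j, βT i j * R x j)
        have h2 : max (-(-(T x i))) 0 ≤ A := by
          rw [neg_neg]; exact max_le (le_trans (le_abs_self _) (hTA' i)) hA0
        have h3 : max (-(∑ j, βT i j * R x j)) 0 ≤ P * V x := max_le (hb2neg i) hPV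
        refine le_trans h (add_le_add (mul_le_mul (hmT i) (hb2abs i) (abs_nonneg _) hVx)
          (mul_le_mul h2 h3 (le_max_right _ _) hA0))
      have t4 : R x i * (∑ j, γR i j * T x j) ≤ V x * (P * A) := by
        have h1 : R x i * (∑ j, γR i j * T x j) ≤ (-(R x i)) * |∑ j, γR i j * T x j| := by
          nlinarith [le_abs_self (∑ j, γR i j * T x j), neg_abs_le (∑ j, γR i j * T x j)]
        exact le_trans h1 (mul_le_mul (hnR i) (hc2abs i) (abs_nonneg _) hVx)
      rw [e1, hC]
      nlinarith [mul_nonneg hPV (by linarith : (0:ℝ) ≤ 2 * A - 1)]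
    have claimT : ∀ i, T x i ≤ 0 → -(DT x i) ≤ C * V x := by
      intro i hτ
      have e1 : -(DT x i) = (R x i + T x i - 1) * (∑ j, γU i j * T x j)
          + δT i * T x i + (-(R x i)) * (∑ j, γR i j * T x j)
          + T x i * (∑ j, βT i j * R x j) := by rw [hDTeq]; ring
      have t1 : (R x i + T x i - 1) * (∑ j, γU i j * T x j)
          ≤ V x * (P * A) + (1 + 2 * A) * (P * V x) := by
        have h := mul_le_pos_parts (R x i + T x i - 1) (∑ j, γU i j * T x j)
        have h2 : max (-(R x i + T x i - 1)) 0 ≤ 1 + 2 * A := by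
          refine max_le ?_ (by linarith)
          have := neg_abs_le (R x i); have := neg_abs_le (T x i)
          have := hRA' i; have := hTA' i; linarith
        have h3 : max (-(∑ j, γU i j * T x j)) 0 ≤ P * V x := max_le (hc1neg i) hPV
        refine le_trans h (add_le_add (mul_le_mul (hmS i) (hc1abs i) (abs_nonneg _) hVx)
          (mul_le_mul h2 h3 (le_max_right _ _) (by linarith)))
      have t2 : δT i * T x i ≤ 0 := mul_nonpos_of_nonneg_of_nonpos (hδT i).le hτ
      have t3 : (-(R x i)) * (∑ j, γR i j * T x j) ≤ V x * (P * A) + A * (P * V x) := by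
        have h := mul_le_pos_parts (-(R x i)) (∑ j, γR i j * T x j)
        have h2 : max (-(-(R x i))) 0 ≤ A := by
          rw [neg_neg]; exact max_le (le_trans (le_abs_self _) (hRA' i)) hA0
        have h3 : max (-(∑ j, γR i j * T x j)) 0 ≤ P * V x := max_le (hc2neg i) hPV
        refine le_trans h (add_le_add (mul_le_mul (hmR i) (hc2abs i) (abs_nonneg _) hVx)
          (mul_le_mul h2 h3 (le_max_right _ _) hA0))
      have t4 : T x i * (∑ j, βT i j * R x j) ≤ V x * (P * A) := by
        have h1 : T x i * (∑ j, βT i j * R x j) ≤ (-(T x i)) * |∑ j, βT i j * R x j| := by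
          nlinarith [le_abs_self (∑ j, βT i j * R x j), neg_abs_le (∑ j, βT i j * R x j)]
        exact le_trans h1 (mul_le_mul (hnT i) (hb2abs i) (abs_nonneg _) hVx)
      rw [e1, hC]
      nlinarith [mul_nonneg hPV (by linarith : (0:ℝ) ≤ 2 * A - 1)]
    have claimS : ∀ i, 0 ≤ R x i + T x i - 1 → DR x i + DT x i ≤ C * V x := by
      intro i hS
      have e1 : DR x i + DT x i = -((R x i + T x i - 1)
            * ((∑ j, βU i j * R x j) + (∑ j, γU i j * T x j)))
          - δR i * R x i - δT i * T x i := by rw [hDReq, hDTeq]; ring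
      have t1 : -((R x i + T x i - 1) * ((∑ j, βU i j * R x j) + (∑ j, γU i j * T x j)))
          ≤ V x * (2 * (P * A)) := by
        have h1 : -((R x i + T x i - 1) * ((∑ j, βU i j * R x j) + (∑ j, γU i j * T x j)))
            ≤ (R x i + T x i - 1) * (|∑ j, βU i j * R x j| + |∑ j, γU i j * T x j|) := by
          nlinarith [le_abs_self (∑ j, βU i j * R x j), neg_abs_le (∑ j, βU i j * R x j),
            le_abs_self (∑ j, γU i j * T x j), neg_abs_le (∑ j, γU i j * T x j)]
        refine le_trans h1 ?_
        have h2 : |∑ j, βU i j * R x j| + |∑ j, γU i j * T x j| ≤ 2 * (P * A) := by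
          have := hb1abs i; have := hc1abs i; linarith
        exact mul_le_mul (hnS i) h2 (by positivity) hVx
      have t2 : -(δR i * R x i) ≤ P * V x := by
        have h1 : δR i * (-(R x i)) ≤ δR i * V x :=
          mul_le_mul_of_nonneg_left (hnR i) (hδR i).le
        have h2 : δR i * V x ≤ P * V x := mul_le_mul_of_nonneg_right (hPδR i) hVx
        nlinarith
      have t3 : -(δT i * T x i) ≤ P * V x := by
        have h1 : δT i * (-(T x i)) ≤ δT i * V x :=
          mul_le_mul_of_nonneg_left (hnT i) (hδT i).le
        have h2 : δT i * V x ≤ P * V x := mul_le_mul_of_nonneg_right (hPδT i) hVx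
        nlinarith
      rw [e1, hC]
      nlinarith [mul_nonneg hPV (by linarith : (0:ℝ) ≤ 3 * A - 1)]
    calc (∑ p, if 0 ≤ F p x then max (F' x p) 0 else 0)
        ≤ ∑ _p : (Fin N ⊕ Fin N ⊕ Fin N), C * V x := by
          refine Finset.sum_le_sum ?_
          rintro (i | i | i) _
          · rw [hFeq1, hF'eq1]
            by_cases h : (0:ℝ) ≤ -R x i
            · rw [if_pos h]
              exact max_le (claimR i (by linarith)) hCV
            · rw [if_neg h]; exact hCV
          · rw [hFeq2, hF'eq2]
            by_cases h : (0:ℝ) ≤ -T x i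
            · rw [if_pos h]
              exact max_le (claimT i (by linarith)) hCV
            · rw [if_neg h]; exact hCV
          · rw [hFeq3, hF'eq3]
            by_cases h : (0:ℝ) ≤ R x i + T x i - 1
            · rw [if_pos h]
              exact max_le (claimS i h) hCV
            · rw [if_neg h]; exact hCV
      _ = K * V x + 0 := by
          rw [Finset.sum_const, Finset.card_univ, nsmul_eq_mul, hK]; ring
  have hf' : ∀ x ∈ Ico (0:ℝ) b, ∀ r,
      (∑ p, if 0 ≤ F p x then max (F' x p) 0 else 0) < r →
      ∃ᶠ z in 𝓝[>] x, (z - x)⁻¹ * (V z - V x) < r := by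
    intro x hx r hr
    have h := (slope_sum_posPart_lt' F (F' x) x (fun p => hFderiv p x hx.1) hr).frequently
    simpa only [hVeq] using h
  have hV00 : V 0 ≤ 0 := by
    rw [hVeq]
    refine Finset.sum_nonpos ?_
    rintro (i | i | i) _
    · rw [hFeq1]; exact max_le (by linarith [(hinit i).1]) le_rfl
    · rw [hFeq2]; exact max_le (by linarith [(hinit i).2.1]) le_rfl
    · rw [hFeq3]; exact max_le (by linarith [(hinit i).2.2]) le_rfl
  have gron := le_gronwallBound_of_liminf_deriv_right_le (a := 0) (b := b)
    hVc hf' hV00 hbound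
  have hVb : V b = 0 := by
    have h1 := gron b ⟨hb, le_rfl⟩
    rw [gronwallBound_ε0_δ0] at h1
    exact le_antisymm h1 (hV0 b)
  intro i
  have h1 : -R b i ≤ V b := hFeq1 i b ▸ hFV (Sum.inl i) b
  have h2 : -T b i ≤ V b := hFeq2 i b ▸ hFV (Sum.inr (Sum.inl i)) b
  have h3 : R b i + T b i - 1 ≤ V b := hFeq3 i b ▸ hFV (Sum.inr (Sum.inr i)) b
  rw [hVb] at h1 h2 h3
  exact ⟨by linarith, by linarith, by linarith⟩

lemma continuousOn_finset_sup' {ι : Type*} {s : Finset ι} (hs : s.Nonempty)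
    (f : ι → ℝ → ℝ) {t : Set ℝ} (hf : ∀ i ∈ s, ContinuousOn (f i) t) :
    ContinuousOn (fun x => s.sup' hs (fun i => f i x)) t := by
  revert hf
  induction hs using Finset.Nonempty.cons_induction with
  | singleton a =>
      intro hf
      have h := hf a (Finset.mem_singleton_self a)
      have he : (fun x => Finset.sup' {a} (Finset.singleton_nonempty a) (fun i => f i x)) = f a :=
        funext fun x => Finset.sup'_singleton ..
      rw [he]
      exact h
  | cons a s ha hs ih =>
      intro hf
      simp only [Finset.sup'_cons hs]
      exact (hf a (by simp)).sup (ih (fun i hi => hf i (Finset.mem_cons_of_mem hi)))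

lemma decay_aux {N : ℕ} (hN : 0 < N) (δ : Fin N → ℝ) (hδ : ∀ i, 0 < δ i)
    (β : Fin N → Fin N → ℝ) (hβ : ∀ i j, 0 ≤ β i j)
    (hrow : ∀ i, (∑ j, β i j / δ j) < 1)
    (X X' : ℝ → Fin N → ℝ)
    (hX : ∀ i (t : ℝ), 0 ≤ t → HasDerivAt (fun τ => X τ i) (X' t i) t)
    (hpos : ∀ t : ℝ, 0 ≤ t → ∀ i, 0 ≤ X t i)
    (hle : ∀ t : ℝ, 0 ≤ t → ∀ i, X' t i ≤ (∑ j, β i j * X t j) - δ i * X t i) :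
    ∀ i, Tendsto (fun t => X t i) atTop (𝓝 0) := by
  haveI : Nonempty (Fin N) := ⟨⟨0, hN⟩⟩
  have hne : (Finset.univ : Finset (Fin N)).Nonempty := Finset.univ_nonempty
  set M : ℝ → ℝ := fun t => Finset.univ.sup' hne (fun i => δ i * X t i) with hM
  have hMle : ∀ t i, δ i * X t i ≤ M t := fun t i =>
    Finset.le_sup' (f := fun i => δ i * X t i) (Finset.mem_univ i)
  have hM0 : ∀ t : ℝ, 0 ≤ t → 0 ≤ M t := fun t ht =>
    le_trans (mul_nonneg (hδ ⟨0, hN⟩).le (hpos t ht ⟨0, hN⟩)) (hMle t ⟨0, hN⟩)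
  set c : ℝ := Finset.univ.inf' hne (fun i => δ i * (1 - ∑ j, β i j / δ j)) with hc
  have hc0 : 0 < c := by
    rw [hc, Finset.lt_inf'_iff]
    intro i _
    have := hrow i
    have := hδ i
    nlinarith
  have hcle : ∀ i, c ≤ δ i * (1 - ∑ j, β i j / δ j) := fun i =>
    Finset.inf'_le (f := fun i => δ i * (1 - ∑ j, β i j / δ j)) (Finset.mem_univ i)
  -- key drift estimate at a maximizing index
  have hdrift : ∀ x : ℝ, 0 ≤ x → ∀ i, δ i * X x i = M x → δ i * X' x i ≤ -c * M x := by
    intro x hx i hi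
    have h1 : (∑ j, β i j * X x j) ≤ (∑ j, β i j / δ j) * M x := by
      rw [Finset.sum_mul]
      refine Finset.sum_le_sum fun j _ => ?_
      have hj : β i j * X x j = (β i j / δ j) * (δ j * X x j) := by
        rw [div_mul_eq_mul_div, mul_div_assoc, mul_comm (δ j) (X x j), mul_div_assoc,
          div_self (hδ j).ne', mul_one]
      rw [hj]
      exact mul_le_mul_of_nonneg_left (hMle x j) (div_nonneg (hβ i j) (hδ j).le)
    have h2 := hle x hx i
    have h3 : X' x i ≤ (∑ j, β i j / δ j) * M x - M x := by
      linarith [h1, h2, hi]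
    have h4 := hcle i
    have h5 := hM0 x hx
    have h6 := hδ i
    nlinarith [mul_le_mul_of_nonneg_left h3 h6.le]
  -- continuity of M on [0, b]
  have hMc : ∀ b : ℝ, ContinuousOn M (Icc 0 b) := by
    intro b
    refine continuousOn_finset_sup' hne _ fun i _ => ?_
    intro t ht
    exact (continuousAt_const.mul (hX i t ht.1).continuousAt).continuousWithinAt
  -- Grönwall estimate
  have key : ∀ b : ℝ, 0 ≤ b → ∀ t ∈ Icc (0:ℝ) b, M t ≤ M 0 * exp (-c * t) := by
    intro b hb
    have hf' : ∀ x ∈ Ico (0:ℝ) b, ∀ r, -c * M x < r →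
        ∃ᶠ z in 𝓝[>] x, (z - x)⁻¹ * (M z - M x) < r := by
      intro x hx r hr
      refine Eventually.frequently ?_
      have hev : ∀ i : Fin N, ∀ᶠ z in 𝓝[>] x, δ i * X z i - M x < r * (z - x) := by
        intro i
        by_cases hi : δ i * X x i = M x
        · have hd : HasDerivAt (fun z => δ i * X z i) (δ i * X' x i) x :=
            (hX i x hx.1).const_mul (δ i)
          have hs := tendsto_slope_right hd
          have hlt : δ i * X' x i < r := lt_of_le_of_lt (hdrift x hx.1 i hi) hr
          filter_upwards [hs.eventually_lt_const hlt, self_mem_nhdsWithin] with z hz hz'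
          have hzx : (0:ℝ) < z - x := sub_pos.2 hz'
          have h7 := (inv_mul_lt_iff₀ hzx).mp hz
          have h8 : (z - x) * r = r * (z - x) := mul_comm _ _
          rw [← hi]
          linarith
        · have hlt2 : δ i * X x i < M x := lt_of_le_of_ne (hMle x i) hi
          have hcont : Tendsto (fun z => δ i * X z i - M x - r * (z - x)) (𝓝[>] x)
              (𝓝 (δ i * X x i - M x - r * (x - x))) := by
            refine Tendsto.sub (Tendsto.sub ?_ tendsto_const_nhds) ?_
            · exact ((continuousAt_const.mul (hX i x hx.1).continuousAt)).continuousWithinAt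
            · exact (tendsto_const_nhds.mul
                ((continuous_id.sub continuous_const).continuousAt)).mono_left
                nhdsWithin_le_nhds
          have hval : δ i * X x i - M x - r * (x - x) < 0 := by
            simp only [sub_self, mul_zero]
            linarith
          filter_upwards [hcont.eventually_lt_const hval] with z hz
          linarith
      filter_upwards [eventually_all.2 hev, self_mem_nhdsWithin] with z hz hz'
      have hzx : (0:ℝ) < z - x := sub_pos.2 hz'
      have hMz : M z < M x + r * (z - x) := by
        simp only [hM]
        rw [Finset.sup'_lt_iff]
        intro i _
        linarith [hz i]
      rw [inv_mul_lt_iff₀ hzx]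
      have h8 : (z - x) * r = r * (z - x) := mul_comm _ _
      linarith
    have gron := le_gronwallBound_of_liminf_deriv_right_le (f := M)
      (f' := fun x => -c * M x) (δ := M 0) (K := -c) (ε := 0) (a := 0) (b := b)
      (hMc b) hf' le_rfl (fun x _ => by simp)
    intro t ht
    have h1 := gron t ht
    rwa [sub_zero, gronwallBound_ε0] at h1
  -- conclusion
  intro i
  have hub : ∀ t : ℝ, 0 ≤ t → X t i ≤ (M 0 / δ i) * exp (-c * t) := by
    intro t ht
    have h1 := key t ht t ⟨ht, le_rfl⟩
    have h2 := hMle t i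
    have h3 := hδ i
    rw [div_mul_eq_mul_div, le_div_iff₀ h3]
    nlinarith
  have hlim : Tendsto (fun t : ℝ => (M 0 / δ i) * exp (-c * t)) atTop (𝓝 0) := by
    have h1 : Tendsto (fun t : ℝ => -c * t) atTop atBot :=
      Tendsto.const_mul_atTop_of_neg (by linarith) tendsto_id
    have h2 := (Real.tendsto_exp_atBot).comp h1
    have h3 := h2.const_mul (M 0 / δ i)
    simpa using h3
  refine tendsto_of_tendsto_of_tendsto_of_le_of_le' tendsto_const_nhds hlim ?_ ?_
  · filter_upwards [eventually_ge_atTop (0:ℝ)] with t ht using hpos t ht i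
  · filter_upwards [eventually_ge_atTop (0:ℝ)] with t ht using hub t ht

end URTUAux

/-- Linear URTU model: if `∑ⱼ βᵢⱼᵁ/δⱼᴿ < 1` and `∑ⱼ γᵢⱼᵁ/δⱼᵀ < 1` for every
`i`, the uncertain equilibrium attracts Ω. -/
theorem linearURTU_uncertain_attracts_of_row_sums
    {N : ℕ} (hN : 0 < N)
    (ER ET : Fin N → Fin N → Prop)
    (hERconn : ∀ i j : Fin N, Relation.ReflTransGen ER i j)
    (hETconn : ∀ i j : Fin N, Relation.ReflTransGen ET i j)
    (δR δT : Fin N → ℝ) (hδR : ∀ i, 0 < δR i) (hδT : ∀ i, 0 < δT i)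
    (βU βT γU γR : Fin N → Fin N → ℝ)
    (hβord : ∀ i j : Fin N, 0 ≤ βT i j ∧ βT i j ≤ βU i j)
    (hβU : ∀ i j : Fin N, 0 < βU i j ↔ ER i j)
    (hβT : ∀ i j : Fin N, 0 < βT i j ↔ ER i j)
    (hγord : ∀ i j : Fin N, 0 ≤ γR i j ∧ γR i j ≤ γU i j)
    (hγU : ∀ i j : Fin N, 0 < γU i j ↔ ET i j)
    (hγR : ∀ i j : Fin N, 0 < γR i j ↔ ET i j)
    (R T : ℝ → Fin N → ℝ)
    (hsolR : ∀ (i : Fin N) (t : ℝ), 0 ≤ t → HasDerivAt (fun τ => R τ i)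
      ((1 - R t i - T t i) * (∑ j, βU i j * R t j) - δR i * R t i
        + T t i * (∑ j, βT i j * R t j) - R t i * (∑ j, γR i j * T t j)) t)
    (hsolT : ∀ (i : Fin N) (t : ℝ), 0 ≤ t → HasDerivAt (fun τ => T τ i)
      ((1 - R t i - T t i) * (∑ j, γU i j * T t j) - δT i * T t i
        + R t i * (∑ j, γR i j * T t j) - T t i * (∑ j, βT i j * R t j)) t)
    (hinit : ∀ i : Fin N, 0 ≤ R 0 i ∧ 0 ≤ T 0 i ∧ R 0 i + T 0 i ≤ 1)
    (hBrow : ∀ i : Fin N, (∑ j, βU i j / δR j) < 1)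
    (hCrow : ∀ i : Fin N, (∑ j, γU i j / δT j) < 1) :
    ∀ i : Fin N, Tendsto (fun t => R t i) atTop (𝓝 0) ∧
      Tendsto (fun t => T t i) atTop (𝓝 0) := by
  have hβU0 : ∀ i j, 0 ≤ βU i j := fun i j => le_trans (hβord i j).1 (hβord i j).2
  have hβT0 : ∀ i j, 0 ≤ βT i j := fun i j => (hβord i j).1
  have hγU0 : ∀ i j, 0 ≤ γU i j := fun i j => le_trans (hγord i j).1 (hγord i j).2
  have hγR0 : ∀ i j, 0 ≤ γR i j := fun i j => (hγord i j).1
  have hinv := urtu_invariant hN δR δT hδR hδT βU βT γU γR hβord hγord R T hsolR hsolT hinit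
  have hleR : ∀ t : ℝ, 0 ≤ t → ∀ i,
      ((1 - R t i - T t i) * (∑ j, βU i j * R t j) - δR i * R t i
        + T t i * (∑ j, βT i j * R t j) - R t i * (∑ j, γR i j * T t j))
      ≤ (∑ j, βU i j * R t j) - δR i * R t i := by
    intro t ht i
    obtain ⟨hR0, hT0, hRT⟩ := hinv t ht i
    have hb1 : 0 ≤ ∑ j, βU i j * R t j := Finset.sum_nonneg fun j _ =>
      mul_nonneg (hβU0 i j) (hinv t ht j).1
    have hb2le : (∑ j, βT i j * R t j) ≤ ∑ j, βU i j * R t j :=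
      Finset.sum_le_sum fun j _ => mul_le_mul_of_nonneg_right (hβord i j).2 (hinv t ht j).1
    have hc20 : 0 ≤ ∑ j, γR i j * T t j := Finset.sum_nonneg fun j _ =>
      mul_nonneg (hγR0 i j) (hinv t ht j).2.1
    nlinarith [mul_nonneg hT0 (sub_nonneg.2 hb2le), mul_nonneg hR0 hb1,
      mul_nonneg hR0 hc20, mul_nonneg hT0 hb1]
  have hleT : ∀ t : ℝ, 0 ≤ t → ∀ i,
      ((1 - R t i - T t i) * (∑ j, γU i j * T t j) - δT i * T t i
        + R t i * (∑ j, γR i j * T t j) - T t i * (∑ j, βT i j * R t j))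
      ≤ (∑ j, γU i j * T t j) - δT i * T t i := by
    intro t ht i
    obtain ⟨hR0, hT0, hRT⟩ := hinv t ht i
    have hc1 : 0 ≤ ∑ j, γU i j * T t j := Finset.sum_nonneg fun j _ =>
      mul_nonneg (hγU0 i j) (hinv t ht j).2.1
    have hc2le : (∑ j, γR i j * T t j) ≤ ∑ j, γU i j * T t j :=
      Finset.sum_le_sum fun j _ => mul_le_mul_of_nonneg_right (hγord i j).2 (hinv t ht j).2.1
    have hb20 : 0 ≤ ∑ j, βT i j * R t j := Finset.sum_nonneg fun j _ =>
      mul_nonneg (hβT0 i j) (hinv t ht j).1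
    nlinarith [mul_nonneg hR0 (sub_nonneg.2 hc2le), mul_nonneg hT0 hc1,
      mul_nonneg hT0 hb20, mul_nonneg hR0 hc1]
  have hRdecay := decay_aux hN δR hδR βU hβU0 hBrow R
    (fun t i => (1 - R t i - T t i) * (∑ j, βU i j * R t j) - δR i * R t i
        + T t i * (∑ j, βT i j * R t j) - R t i * (∑ j, γR i j * T t j))
    (fun i t ht => hsolR i t ht) (fun t ht i => (hinv t ht i).1) hleR
  have hTdecay := decay_aux hN δT hδT γU hγU0 hCrow T
    (fun t i => (1 - R t i - T t i) * (∑ j, γU i j * T t j) - δT i * T t i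
        + R t i * (∑ j, γR i j * T t j) - T t i * (∑ j, βT i j * R t j))
    (fun i t ht => hsolT i t ht) (fun t ht i => (hinv t ht i).2.1) hleT
  exact fun i => ⟨hRdecay i, hTdecay i⟩
end

section
/- Let A be an N×N irreducible Metzler matrix and D an N×N positive definite diagonal matrix. If A D^{−1} is Hurwitz (i.e., s(A D^{−1}) < 0), then A is Hurwitz (i.e., s(A) < 0). -/
open Filter Topology

noncomputable def specAbscissa {n : ℕ} (A : Matrix (Fin n) (Fin n) ℝ) : ℝ :=
  sSup (Complex.re '' spectrum ℂ (A.map Complex.ofReal))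

noncomputable def spectralRadius' {n : ℕ} (A : Matrix (Fin n) (Fin n) ℝ) : ℝ :=
  sSup ((fun z : ℂ => ‖z‖) '' spectrum ℂ (A.map Complex.ofReal))

noncomputable def jacobianAtZero {n : ℕ} (f : (Fin n → ℝ) → (Fin n → ℝ)) :
    Matrix (Fin n) (Fin n) ℝ :=
  Matrix.of fun i j => fderiv ℝ (fun x => f x i) 0 (Pi.single j 1)

section MetzlerAux

open Pointwise

set_option linter.unusedVariables false
set_option linter.unnecessarySimpa false
set_option linter.unnecessarySeqFocus false

attribute [local instance] Matrix.linftyOpNormedRing Matrix.linftyOpNormedAlgebra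

private lemma exists_eigenvector {N : ℕ} (M : Matrix (Fin N) (Fin N) ℂ) {μ : ℂ}
    (hμ : μ ∈ spectrum ℂ M) : ∃ v : Fin N → ℂ, v ≠ 0 ∧ M.mulVec v = μ • v := by
  rw [spectrum.mem_iff] at hμ
  have hdet : (algebraMap ℂ (Matrix (Fin N) (Fin N) ℂ) μ - M).det = 0 := by
    by_contra h
    exact hμ ((Matrix.isUnit_iff_isUnit_det _).mpr (isUnit_iff_ne_zero.mpr h))
  obtain ⟨v, hv0, hv⟩ := Matrix.exists_mulVec_eq_zero_iff.mpr hdet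
  refine ⟨v, hv0, ?_⟩
  have h2 : (algebraMap ℂ (Matrix (Fin N) (Fin N) ℂ) μ - M).mulVec v
      = μ • v - M.mulVec v := by
    rw [Matrix.sub_mulVec, Algebra.algebraMap_eq_smul_one, Matrix.smul_mulVec,
      Matrix.one_mulVec]
  rw [h2] at hv
  exact (sub_eq_zero.mp hv).symm

/-- Key lemma A: a Metzler matrix admitting a positive vector `x` with `Mx < 0`
has all complex eigenvalues with negative real part. -/
private lemma re_neg_of_pos_vec {N : ℕ} (M : Matrix (Fin N) (Fin N) ℝ)
    (hM : ∀ i j, i ≠ j → 0 ≤ M i j) (x : Fin N → ℝ) (hx : ∀ i, 0 < x i)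
    (hMx : ∀ i, M.mulVec x i < 0) :
    ∀ μ ∈ spectrum ℂ (M.map Complex.ofReal), μ.re < 0 := by
  classical
  intro μ hμ
  obtain ⟨v, hv0, hv⟩ := exists_eigenvector _ hμ
  obtain ⟨j0, hj0⟩ := Function.ne_iff.mp hv0
  haveI : Nonempty (Fin N) := ⟨j0⟩
  set c : ℝ := 1 + ∑ i, |M i i| with hc
  have hcpos : 0 < c := by positivity
  have hdiag : ∀ i, 0 ≤ M i i + c := by
    intro i
    have h1 : |M i i| ≤ ∑ j, |M j j| :=
      Finset.single_le_sum (fun j _ => abs_nonneg (M j j)) (Finset.mem_univ i)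
    have h2 := neg_abs_le (M i i)
    simp only [hc]; linarith
  -- entries of B := M + c I
  set b : Fin N → Fin N → ℝ := fun i j => M i j + if i = j then c else 0 with hb
  have hbnn : ∀ i j, 0 ≤ b i j := by
    intro i j
    by_cases h : i = j
    · subst h; simpa [hb] using hdiag i
    · simpa [hb, h] using hM i j h
  have hMv : ∀ i, ∑ j, (M i j : ℂ) * v j = μ * v i := by
    intro i
    have := congrFun hv i
    simpa [Matrix.mulVec, dotProduct, Matrix.map_apply, smul_eq_mul] using this
  have hBv : ∀ i, ∑ j, (b i j : ℂ) * v j = (μ + c) * v i := by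
    intro i
    have : ∑ j, (b i j : ℂ) * v j
        = ∑ j, ((M i j : ℂ) * v j + (if i = j then (c : ℂ) else 0) * v j) := by
      refine Finset.sum_congr rfl fun j _ => ?_
      by_cases h : i = j <;> simp [hb, h] <;> ring
    rw [this, Finset.sum_add_distrib, hMv i]
    have h2 : ∑ j, (if i = j then (c : ℂ) else 0) * v j = (c : ℂ) * v i := by
      simp [Finset.sum_ite_eq]
    rw [h2]; ring
  obtain ⟨i, -, hi⟩ := Finset.exists_max_image Finset.univ
    (fun j => ‖v j‖ / x j) Finset.univ_nonempty
  set r : ℝ := ‖v i‖ / x i with hr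
  have hrj : ∀ j, ‖v j‖ ≤ r * x j := by
    intro j
    have := hi j (Finset.mem_univ j)
    rw [div_le_iff₀ (hx j)] at this
    linarith [this]
  have hvi : ‖v i‖ = r * x i := by
    rw [hr, div_mul_cancel₀ _ (ne_of_gt (hx i))]
  have hrpos : 0 < r := by
    have h1 : 0 < ‖v j0‖ / x j0 :=
      div_pos (norm_pos_iff.mpr (by simpa using hj0)) (hx j0)
    exact lt_of_lt_of_le h1 (hi j0 (Finset.mem_univ j0))
  -- key estimate
  have hest : ‖μ + c‖ * (r * x i) ≤ r * (M.mulVec x i + c * x i) := by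
    have h1 : ‖(μ + c) * v i‖ ≤ ∑ j, b i j * ‖v j‖ := by
      rw [← hBv i]
      refine le_trans (norm_sum_le _ _) ?_
      refine Finset.sum_le_sum fun j _ => ?_
      rw [norm_mul, Complex.norm_real, Real.norm_of_nonneg (hbnn i j)]
    have h2 : ∑ j, b i j * ‖v j‖ ≤ ∑ j, b i j * (r * x j) :=
      Finset.sum_le_sum fun j _ => mul_le_mul_of_nonneg_left (hrj j) (hbnn i j)
    have h3 : ∑ j, b i j * (r * x j) = r * (M.mulVec x i + c * x i) := by
      have hsplit : ∑ j, b i j * (r * x j)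
          = ∑ j, (M i j * (r * x j) + (if i = j then c else 0) * (r * x j)) := by
        refine Finset.sum_congr rfl fun j _ => ?_
        by_cases h : i = j <;> simp [hb, h] <;> ring
      rw [hsplit, Finset.sum_add_distrib]
      have h4 : ∑ j, (if i = j then c else 0) * (r * x j) = c * (r * x i) := by
        simp [Finset.sum_ite_eq]
      rw [h4, Matrix.mulVec, dotProduct, mul_add, Finset.mul_sum]
      have h5 : ∀ j : Fin N, M i j * (r * x j) = r * (M i j * x j) := fun j => by ring
      rw [Finset.sum_congr rfl fun j _ => h5 j]
      ring
    calc ‖μ + c‖ * (r * x i) = ‖(μ + c) * v i‖ := by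
          rw [norm_mul, hvi]
      _ ≤ ∑ j, b i j * ‖v j‖ := h1
      _ ≤ ∑ j, b i j * (r * x j) := h2
      _ = r * (M.mulVec x i + c * x i) := h3
  have habs : ‖μ + c‖ < c := by
    have h4 : r * (M.mulVec x i + c * x i) < r * (c * x i) := by
      have := hMx i
      nlinarith
    have h5 : ‖μ + c‖ * (r * x i) < c * (r * x i) := by
      calc ‖μ + c‖ * (r * x i) ≤ r * (M.mulVec x i + c * x i) := hest
        _ < r * (c * x i) := h4
        _ = c * (r * x i) := by ring
    have h6 : 0 < r * x i := mul_pos hrpos (hx i)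
    exact lt_of_mul_lt_mul_right h5 (le_of_lt h6)
  -- conclude re < 0
  have h7 : Complex.normSq (μ + c) < c ^ 2 := by
    have := Complex.sq_norm (μ + c)
    nlinarith [norm_nonneg (μ + c)]
  have h8 : (μ.re + c) ^ 2 + μ.im ^ 2 < c ^ 2 := by
    have h9 : Complex.normSq (μ + c) = (μ.re + c) ^ 2 + μ.im ^ 2 := by
      simp [Complex.normSq_apply]
      ring
    rw [← h9]
    exact h7
  nlinarith [sq_nonneg μ.im, sq_nonneg (μ.re + c)]

private lemma rowsum_le_norm {N : ℕ} (A : Matrix (Fin N) (Fin N) ℂ) (i : Fin N) :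
    ∑ j, ‖A i j‖ ≤ ‖A‖ := by
  rw [Matrix.linfty_opNorm_def]
  have h1 : (∑ j, ‖A i j‖₊) ≤ Finset.univ.sup fun i => ∑ j, ‖A i j‖₊ :=
    Finset.le_sup (f := fun i => ∑ j, ‖A i j‖₊) (Finset.mem_univ i)
  calc ∑ j, ‖A i j‖ = ((∑ j, ‖A i j‖₊ : NNReal) : ℝ) := by
        simp [NNReal.coe_sum]
    _ ≤ _ := by exact_mod_cast h1

private lemma exists_nonneg_vec {N : ℕ} (hN : 0 < N) (M : Matrix (Fin N) (Fin N) ℝ)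
    (hM : ∀ i j, i ≠ j → 0 ≤ M i j)
    (hs : ∀ μ ∈ spectrum ℂ (M.map Complex.ofReal), μ.re < 0) :
    ∃ x : Fin N → ℝ, (∀ i, 0 ≤ x i) ∧ ∀ i, M.mulVec x i < 0 := by
  classical
  haveI : Nonempty (Fin N) := Fin.pos_iff_nonempty.mp hN
  haveI : CompleteSpace (Matrix (Fin N) (Fin N) ℂ) :=
    FiniteDimensional.complete ℂ _
  set Mc := M.map Complex.ofReal with hMc
  have hfin : (spectrum ℂ Mc).Finite := Matrix.finite_spectrum Mc
  obtain ⟨ε, hε, hεs⟩ : ∃ ε : ℝ, 0 < ε ∧ ∀ μ ∈ spectrum ℂ Mc, μ.re ≤ -ε := by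
    rcases Set.eq_empty_or_nonempty (spectrum ℂ Mc) with h | h
    · exact ⟨1, one_pos, by simp [h]⟩
    · have hTne : (Complex.re '' spectrum ℂ Mc).Nonempty := h.image _
      have hTfin : (Complex.re '' spectrum ℂ Mc).Finite := hfin.image _
      obtain ⟨μ0, hμ0, hμ0e⟩ := hTne.csSup_mem hTfin
      refine ⟨-sSup (Complex.re '' spectrum ℂ Mc), ?_, ?_⟩
      · rw [← hμ0e]
        simpa using hs μ0 hμ0
      · intro μ hμ
        have := le_csSup hTfin.bddAbove ⟨μ, hμ, rfl⟩
        linarith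
  obtain ⟨K, hK⟩ : ∃ K : ℝ, ∀ μ ∈ spectrum ℂ Mc, Complex.normSq μ ≤ K := by
    obtain ⟨K, hK⟩ := (hfin.image Complex.normSq).bddAbove
    exact ⟨K, fun μ hμ => hK ⟨μ, hμ, rfl⟩⟩
  set c : ℝ := max (max (1 + ∑ i, |M i i|) (K / (2 * ε) + 1)) (2 * ε) with hc
  have hc1 : 1 + ∑ i, |M i i| ≤ c := le_trans (le_max_left _ _) (le_max_left _ _)
  have hc2 : K / (2 * ε) + 1 ≤ c := le_trans (le_max_right _ _) (le_max_left _ _)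
  have hc3 : 2 * ε ≤ c := le_max_right _ _
  have hsumnn : 0 ≤ ∑ i, |M i i| := Finset.sum_nonneg fun j _ => abs_nonneg _
  have hc1' : (1 : ℝ) ≤ c := by linarith
  have hcpos : 0 < c := by linarith
  have hc2e : 0 ≤ c ^ 2 - 2 * ε := by nlinarith
  have hdiag : ∀ i, 0 ≤ M i i + c := by
    intro i
    have h1 : |M i i| ≤ ∑ j, |M j j| :=
      Finset.single_le_sum (fun j _ => abs_nonneg (M j j)) (Finset.mem_univ i)
    have h2 := neg_abs_le (M i i)
    linarith
  have hshift : ∀ μ ∈ spectrum ℂ Mc, Complex.normSq (μ + c) ≤ c ^ 2 - 2 * ε := by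
    intro μ hμ
    have h1 := hεs μ hμ
    have h2 := hK μ hμ
    have h3 : K ≤ (c - 1) * (2 * ε) :=
      (div_le_iff₀ (by positivity : (0:ℝ) < 2 * ε)).mp (by linarith)
    have h4 : Complex.normSq (μ + c) = Complex.normSq μ + 2 * c * μ.re + c ^ 2 := by
      simp [Complex.normSq_apply]
      ring
    nlinarith [hcpos, hε]
  -- the shifted nonnegative matrix B
  set B : Matrix (Fin N) (Fin N) ℝ := M + c • (1 : Matrix (Fin N) (Fin N) ℝ) with hB
  have hBnn : ∀ i j, 0 ≤ B i j := by
    intro i j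
    by_cases h : i = j
    · subst h
      simpa [hB, Matrix.one_apply] using hdiag i
    · simpa [hB, Matrix.one_apply, h] using hM i j h
  set Bc := B.map Complex.ofReal with hBc
  have hBceq : Bc = algebraMap ℂ (Matrix (Fin N) (Fin N) ℂ) ((c : ℝ) : ℂ) + Mc := by
    ext i j
    by_cases h : i = j <;>
      simp [hBc, hB, hMc, Matrix.map_apply, Matrix.add_apply, Matrix.smul_apply,
        Matrix.one_apply, Matrix.algebraMap_matrix_apply, h, add_comm]
  have hspecB : spectrum ℂ Bc = ({((c : ℝ) : ℂ)} : Set ℂ) + spectrum ℂ Mc := by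
    rw [hBceq]
    exact (spectrum.singleton_add_eq Mc ((c : ℝ) : ℂ)).symm
  set ρ0 : ℝ := Real.sqrt (c ^ 2 - 2 * ε) with hρ0
  have hρ0nn : 0 ≤ ρ0 := Real.sqrt_nonneg _
  have hρ0lt : ρ0 < c := by
    have hsq : ρ0 ^ 2 = c ^ 2 - 2 * ε := by rw [hρ0, Real.sq_sqrt hc2e]
    nlinarith
  have hradius : spectralRadius ℂ Bc ≤ ENNReal.ofReal ρ0 := by
    rw [spectralRadius]
    refine iSup₂_le fun k hk => ?_
    rw [hspecB] at hk
    obtain ⟨a, ha, μ, hμ, rfl⟩ := Set.mem_add.mp hk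
    rw [Set.mem_singleton_iff] at ha
    subst ha
    have h1 : ‖((c : ℝ) : ℂ) + μ‖ ≤ ρ0 := by
      rw [Complex.norm_def]
      refine Real.sqrt_le_sqrt ?_
      simpa [add_comm] using hshift μ hμ
    rw [← ENNReal.ofReal_coe_nnreal, coe_nnnorm]
    exact ENNReal.ofReal_le_ofReal h1
  set ρ1 : ℝ := (ρ0 + c) / 2 with hρ1
  have hρ1a : ρ0 < ρ1 := by simp [hρ1]; linarith
  have hρ1b : ρ1 < c := by simp [hρ1]; linarith
  have hρ1pos : 0 < ρ1 := by simp [hρ1]; linarith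
  have hgel := spectrum.pow_nnnorm_pow_one_div_tendsto_nhds_spectralRadius Bc
  have hlt : spectralRadius ℂ Bc < ENNReal.ofReal ρ1 :=
    lt_of_le_of_lt hradius ((ENNReal.ofReal_lt_ofReal_iff hρ1pos).mpr hρ1a)
  have hev : ∀ᶠ n : ℕ in atTop, (‖Bc ^ n‖₊ : ENNReal) ^ (1 / (n : ℝ)) < ENNReal.ofReal ρ1 :=
    hgel.eventually_lt_const hlt
  have hev2 : ∀ᶠ n : ℕ in atTop, ‖Bc ^ n‖ ≤ ρ1 ^ n := by
    filter_upwards [hev, eventually_ge_atTop 1] with n hn hn1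
    have hn0 : (n : ℝ) ≠ 0 := by
      exact_mod_cast Nat.one_le_iff_ne_zero.mp hn1
    have h2 : (‖Bc ^ n‖₊ : ENNReal) = ((‖Bc ^ n‖₊ : ENNReal) ^ (1 / (n : ℝ))) ^ (n : ℝ) := by
      rw [← ENNReal.rpow_mul, one_div, inv_mul_cancel₀ hn0, ENNReal.rpow_one]
    have h3 : (‖Bc ^ n‖₊ : ENNReal) ≤ (ENNReal.ofReal ρ1) ^ (n : ℝ) := by
      rw [h2]
      exact ENNReal.rpow_le_rpow (le_of_lt hn) (by positivity)
    have h4 : (ENNReal.ofReal ρ1) ^ (n : ℝ) = ENNReal.ofReal (ρ1 ^ n) := by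
      rw [ENNReal.rpow_natCast, ← ENNReal.ofReal_pow (le_of_lt hρ1pos)]
    rw [h4, ← ENNReal.ofReal_coe_nnreal, coe_nnnorm] at h3
    exact (ENNReal.ofReal_le_ofReal_iff (by positivity)).mp h3
  have hmap : ∀ n : ℕ, (B ^ n).map Complex.ofReal = Bc ^ n := by
    intro n
    have := map_pow (RingHom.mapMatrix (m := Fin N) Complex.ofRealHom) B n
    exact (by simpa [RingHom.mapMatrix_apply] using this :
      ((B ^ n).map ⇑Complex.ofRealHom) = (B.map ⇑Complex.ofRealHom) ^ n)
  have hBn : ∀ n : ℕ, ∀ i j, 0 ≤ (B ^ n) i j := by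
    intro n
    induction n with
    | zero =>
      intro i j
      by_cases h : i = j <;> simp [Matrix.one_apply, h]
    | succ n ih =>
      intro i j
      rw [pow_succ, Matrix.mul_apply]
      exact Finset.sum_nonneg fun k _ => mul_nonneg (ih i k) (hBnn k j)
  have hrow : ∀ (n : ℕ) (i : Fin N), ∑ j, (B ^ n) i j ≤ ‖Bc ^ n‖ := by
    intro n i
    have h1 : ∑ j, (B ^ n) i j = ∑ j, ‖(Bc ^ n) i j‖ := by
      refine Finset.sum_congr rfl fun j _ => ?_
      rw [← hmap n]
      simp only [Matrix.map_apply, Complex.norm_real]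
      rw [Real.norm_of_nonneg (hBn n i j)]
    rw [h1]
    exact rowsum_le_norm _ i
  -- invertibility of M
  have h0spec : (0 : ℂ) ∉ spectrum ℂ Mc := fun h => absurd (hs 0 h) (by simp)
  have hMunit : IsUnit Mc := (spectrum.zero_notMem_iff ℂ).mp h0spec
  have hdetc : Mc.det ≠ 0 := by
    intro h
    have h1 := (Matrix.isUnit_iff_isUnit_det Mc).mp hMunit
    rw [h] at h1
    simpa using h1
  have hdet : M.det ≠ 0 := by
    intro h
    apply hdetc
    have h2 : Mc.det = Complex.ofRealHom M.det := (RingHom.map_det Complex.ofRealHom M).symm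
    rw [h2, h]
    simp
  have hunit : IsUnit (-M).det := by
    rw [Matrix.det_neg]
    exact isUnit_iff_ne_zero.mpr (by simp [hdet])
  set x : Fin N → ℝ := (-M)⁻¹.mulVec (fun _ => 1) with hx
  have hMinv : (-M).mulVec x = fun _ => 1 := by
    rw [hx, Matrix.mulVec_mulVec, Matrix.mul_nonsing_inv _ hunit, Matrix.one_mulVec]
  have hMx : M.mulVec x = fun _ => (-1 : ℝ) := by
    funext i
    have h2 := congrFun hMinv i
    rw [Matrix.neg_mulVec] at h2
    have h3 : -(M.mulVec x) i = 1 := h2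
    linarith
  have hkey : c • x = (fun _ => (1 : ℝ)) + B.mulVec x := by
    have h2 : B.mulVec x = M.mulVec x + c • x := by
      rw [hB, Matrix.add_mulVec, Matrix.smul_mulVec, Matrix.one_mulVec]
    rw [h2, hMx]
    funext i
    simp
  have hID : ∀ n : ℕ, x
      = (∑ k ∈ Finset.range n, ((c⁻¹) ^ (k + 1)) • ((B ^ k).mulVec (fun _ => 1)))
        + ((c⁻¹) ^ n) • ((B ^ n).mulVec x) := by
    intro n
    induction n with
    | zero => simp [Matrix.one_mulVec]
    | succ n ih =>
      rw [Finset.sum_range_succ]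
      have h4 : (B ^ n).mulVec (c • x)
          = (B ^ n).mulVec (fun _ => 1) + (B ^ (n + 1)).mulVec x := by
        rw [hkey, Matrix.mulVec_add]
        congr 1
        rw [pow_succ, ← Matrix.mulVec_mulVec]
      have h5 : (B ^ n).mulVec (c • x) = c • (B ^ n).mulVec x := Matrix.mulVec_smul _ _ _
      have hstep : ((c⁻¹) ^ n) • ((B ^ n).mulVec x)
          = ((c⁻¹) ^ (n + 1)) • ((B ^ n).mulVec (fun _ => 1))
            + ((c⁻¹) ^ (n + 1)) • ((B ^ (n + 1)).mulVec x) := by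
        calc ((c⁻¹) ^ n) • ((B ^ n).mulVec x)
            = ((c⁻¹) ^ (n + 1) * c) • ((B ^ n).mulVec x) := by
              congr 1
              rw [pow_succ, mul_assoc, inv_mul_cancel₀ (ne_of_gt hcpos), mul_one]
          _ = ((c⁻¹) ^ (n + 1)) • (c • (B ^ n).mulVec x) := by rw [mul_smul]
          _ = ((c⁻¹) ^ (n + 1)) • ((B ^ n).mulVec (c • x)) := by rw [h5]
          _ = _ := by rw [h4, smul_add]
      conv_lhs => rw [ih, hstep]
      abel
  refine ⟨x, ?_, fun i => by rw [hMx]; norm_num⟩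
  intro i
  set X : ℝ := ∑ j, |x j| with hX
  have hXj : ∀ j, |x j| ≤ X :=
    fun j => Finset.single_le_sum (fun j _ => abs_nonneg (x j)) (Finset.mem_univ j)
  have hXnn : 0 ≤ X := Finset.sum_nonneg fun j _ => abs_nonneg _
  set t : ℝ := ρ1 / c with ht
  have ht0 : 0 ≤ t := by positivity
  have ht1 : t < 1 := (div_lt_one hcpos).mpr hρ1b
  have hxi : ∀ᶠ n : ℕ in atTop, -(X * t ^ n) ≤ x i := by
    filter_upwards [hev2] with n hn
    have hSnn : 0 ≤ (∑ k ∈ Finset.range n,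
        ((c⁻¹) ^ (k + 1)) • ((B ^ k).mulVec (fun _ => 1))) i := by
      rw [Finset.sum_apply]
      refine Finset.sum_nonneg fun k _ => ?_
      have h6 : 0 ≤ (B ^ k).mulVec (fun _ => 1) i := by
        rw [Matrix.mulVec, dotProduct]
        exact Finset.sum_nonneg fun j _ => by simpa using hBn k i j
      have h7 : (0:ℝ) ≤ (c⁻¹) ^ (k + 1) := pow_nonneg (inv_nonneg.mpr hcpos.le) _
      simpa using mul_nonneg h7 h6
    have htailb : |((c⁻¹) ^ n) * ((B ^ n).mulVec x i)| ≤ X * t ^ n := by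
      rw [abs_mul, abs_of_nonneg (pow_nonneg (inv_nonneg.mpr hcpos.le) n)]
      have h8 : |(B ^ n).mulVec x i| ≤ X * (∑ j, (B ^ n) i j) := by
        rw [Matrix.mulVec, dotProduct]
        refine le_trans (Finset.abs_sum_le_sum_abs _ _) ?_
        rw [Finset.mul_sum]
        refine Finset.sum_le_sum fun j _ => ?_
        rw [abs_mul, abs_of_nonneg (hBn n i j)]
        calc (B ^ n) i j * |x j| ≤ (B ^ n) i j * X :=
              mul_le_mul_of_nonneg_left (hXj j) (hBn n i j)
          _ = X * (B ^ n) i j := by ring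
      have h9 : X * (∑ j, (B ^ n) i j) ≤ X * ρ1 ^ n :=
        mul_le_mul_of_nonneg_left (le_trans (hrow n i) hn) hXnn
      calc (c⁻¹) ^ n * |(B ^ n).mulVec x i| ≤ (c⁻¹) ^ n * (X * ρ1 ^ n) := by
            refine mul_le_mul_of_nonneg_left (le_trans h8 h9) ?_
            exact pow_nonneg (inv_nonneg.mpr hcpos.le) n
        _ = X * t ^ n := by
            have htn : t ^ n = c⁻¹ ^ n * ρ1 ^ n := by
              rw [ht, div_eq_inv_mul, mul_pow]
            rw [htn]
            ring
    have h10 := congrFun (hID n) i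
    have h11 : x i = (∑ k ∈ Finset.range n,
        ((c⁻¹) ^ (k + 1)) • ((B ^ k).mulVec (fun _ => 1))) i
        + ((c⁻¹) ^ n) * ((B ^ n).mulVec x i) := by
      simpa using h10
    have h12 := neg_abs_le (((c⁻¹) ^ n) * ((B ^ n).mulVec x i))
    linarith
  have hlim : Tendsto (fun n : ℕ => -(X * t ^ n)) atTop (𝓝 0) := by
    have h7 := tendsto_pow_atTop_nhds_zero_of_lt_one ht0 ht1
    have h8 := (h7.const_mul X).neg
    simpa using h8
  exact le_of_tendsto hlim hxi

/-- For an irreducible Metzler matrix `A` and a positive definite diagonal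
matrix `D`: if `A D⁻¹` is Hurwitz then `A` is Hurwitz. -/
theorem metzler_hurwitz_of_hurwitz_mul_diagonal_inv
    {N : ℕ} (hN : 0 < N) (A : Matrix (Fin N) (Fin N) ℝ) (d : Fin N → ℝ)
    (hd : ∀ i, 0 < d i)
    (hMetzler : ∀ i j : Fin N, i ≠ j → 0 ≤ A i j)
    (hIrr : ∀ i j : Fin N, Relation.ReflTransGen (fun a b => A a b ≠ 0) i j)
    (hHurwitz : specAbscissa (A * Matrix.diagonal (fun i => (d i)⁻¹)) < 0) :
    specAbscissa A < 0 := by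
  classical
  haveI : Nonempty (Fin N) := Fin.pos_iff_nonempty.mp hN
  haveI : CompleteSpace (Matrix (Fin N) (Fin N) ℂ) :=
    FiniteDimensional.complete ℂ _
  set M := A * Matrix.diagonal (fun i => (d i)⁻¹) with hMdef
  have hfinM : (spectrum ℂ (M.map Complex.ofReal)).Finite :=
    Matrix.finite_spectrum _
  have h1 : ∀ μ ∈ spectrum ℂ (M.map Complex.ofReal), μ.re < 0 := by
    intro μ hμ
    have h2 : μ.re ≤ specAbscissa M :=
      le_csSup (hfinM.image _).bddAbove ⟨μ, hμ, rfl⟩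
    linarith
  have hMmetz : ∀ i j : Fin N, i ≠ j → 0 ≤ M i j := by
    intro i j hij
    rw [hMdef, Matrix.mul_diagonal]
    exact mul_nonneg (hMetzler i j hij) (inv_nonneg.mpr (hd j).le)
  obtain ⟨x, hx0, hMx⟩ := exists_nonneg_vec hN M hMmetz h1
  set y : Fin N → ℝ := fun i => (d i)⁻¹ * x i with hy
  have hy0 : ∀ i, 0 ≤ y i := fun i => mul_nonneg (inv_nonneg.mpr (hd i).le) (hx0 i)
  have hdiagv : (Matrix.diagonal fun i => (d i)⁻¹).mulVec x = y := by
    funext i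
    rw [Matrix.mulVec_diagonal]
  have hAy : A.mulVec y = M.mulVec x := by
    rw [hMdef, ← Matrix.mulVec_mulVec, hdiagv]
  have hAyneg : ∀ i, A.mulVec y i < 0 := by
    intro i
    rw [hAy]
    exact hMx i
  have hypos : ∀ i, 0 < y i := by
    intro i
    rcases (hy0 i).lt_or_eq with h | h
    · exact h
    · exfalso
      have h3 : 0 ≤ A.mulVec y i := by
        rw [Matrix.mulVec, dotProduct]
        refine Finset.sum_nonneg fun j _ => ?_
        by_cases hj : j = i
        · subst hj
          rw [← h]
          simp
        · exact mul_nonneg (hMetzler i j (fun he => hj he.symm)) (hy0 j)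
      exact absurd (hAyneg i) (not_lt.mpr h3)
  have h4 := re_neg_of_pos_vec A hMetzler y hypos hAyneg
  -- conclude
  have hfinA : (spectrum ℂ (A.map Complex.ofReal)).Finite := Matrix.finite_spectrum _
  have hneA : (spectrum ℂ (A.map Complex.ofReal)).Nonempty := spectrum.nonempty _
  have h5 := (hneA.image Complex.re).csSup_mem (hfinA.image _)
  obtain ⟨μ, hμ, hμe⟩ := h5
  rw [specAbscissa, ← hμe]
  exact h4 μ hμ

end MetzlerAux
end

section
/- Let R* ∈ (0,1)^N satisfy R*_i = f_i^U(R*)/(δ_i^R + f_i^U(R*)) for all i, and let u(t) be a solution of du/dt = (E_N − diag u(t)) f^U(u(t)) − D_R u(t) with u(t) > 0 componentwise. Define Z(u(t)) = max_{1≤k≤N} u_k(t)/R*_k. Then for t > 0: if Z(u(t)) ≥ 1 then the upper-right Dini derivative D^+ Z(u(t)) ≤ 0, and if Z(u(t)) > 1 then D^+ Z(u(t)) < 0. -/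
open Filter Topology

/-- Upper-right Dini derivative. -/
noncomputable def diniUpper (φ : ℝ → ℝ) (t : ℝ) : ℝ :=
  Filter.limsup (fun h => (φ (t + h) - φ t) / h) (nhdsWithin 0 (Set.Ioi 0))

/-- Lower-right Dini derivative. -/
noncomputable def diniLower (φ : ℝ → ℝ) (t : ℝ) : ℝ :=
  Filter.liminf (fun h => (φ (t + h) - φ t) / h) (nhdsWithin 0 (Set.Ioi 0))

lemma clm_apply_eq_sum {N : ℕ} (T : (Fin N → ℝ) →L[ℝ] ℝ) (v : Fin N → ℝ) :
    T v = ∑ j, v j * T (Pi.single j 1) := by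
  have hx : v = ∑ j, v j • (Pi.single j 1 : Fin N → ℝ) := by
    funext k
    simp [Finset.sum_apply, Pi.single_apply]
  conv_lhs => rw [hx]
  rw [map_sum]
  simp [smul_eq_mul]

lemma line_hasDerivAt {N : ℕ} (g : (Fin N → ℝ) → ℝ) (hg : Differentiable ℝ g)
    (a v : Fin N → ℝ) (s : ℝ) :
    HasDerivAt (fun s : ℝ => g (a + s • v)) (fderiv ℝ g (a + s • v) v) s := by
  have hc : HasDerivAt (fun s : ℝ => a + s • v) v s := by
    simpa using ((hasDerivAt_id s).smul_const v).const_add a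
  exact ((hg (a + s • v)).hasFDerivAt.comp_hasDerivAt s hc)

lemma partial_zero {N : ℕ} (g : (Fin N → ℝ) → ℝ) (hg : Differentiable ℝ g) (j : Fin N)
    (hdep : ∀ x y : Fin N → ℝ, (∀ k, k ≠ j → x k = y k) → g x = g y) (z : Fin N → ℝ) :
    fderiv ℝ g z (Pi.single j 1) = 0 := by
  have h1 := line_hasDerivAt g hg z (Pi.single j 1) 0
  simp only [zero_smul, add_zero] at h1
  have h2 : (fun s : ℝ => g (z + s • (Pi.single j 1 : Fin N → ℝ))) = fun _ => g z := by
    funext s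
    exact hdep _ _ (fun k hk => by simp [Pi.single_apply, hk])
  rw [h2] at h1
  exact h1.unique (hasDerivAt_const _ _)

/-- Mean value theorem along a segment with nonnegative endpoints. -/
lemma segment_mvt {N : ℕ} (g : (Fin N → ℝ) → ℝ) (hg : Differentiable ℝ g)
    (x y : Fin N → ℝ) (hx : ∀ k, 0 ≤ x k) (hxy : ∀ k, x k ≤ y k) :
    ∃ z : Fin N → ℝ, (∀ k, 0 ≤ z k) ∧ fderiv ℝ g z (y - x) = g y - g x := by
  obtain ⟨c, hc, hceq⟩ := exists_hasDerivAt_eq_slope (fun s => g (x + s • (y - x)))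
      (fun s => fderiv ℝ g (x + s • (y - x)) (y - x)) (by norm_num : (0:ℝ) < 1)
      (hg.continuous.comp (by continuity)).continuousOn
      (fun s _ => line_hasDerivAt g hg x (y - x) s)
  refine ⟨x + c • (y - x), ?_, ?_⟩
  · intro k
    have h1 := hx k; have h2 := hxy k
    obtain ⟨hc1, hc2⟩ := hc
    simp only [Pi.add_apply, Pi.smul_apply, Pi.sub_apply, smul_eq_mul]
    nlinarith
  · rw [hceq]
    have he1 : x + (1:ℝ) • (y - x) = y := by
      funext k; simp only [Pi.add_apply, Pi.smul_apply, Pi.sub_apply, smul_eq_mul]; ring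
    have he0 : x + (0:ℝ) • (y - x) = x := by
      funext k; simp only [Pi.add_apply, Pi.smul_apply, Pi.sub_apply, smul_eq_mul]; ring
    rw [he1, he0]
    simp

/-- Dini derivative of a finite sup is bounded by derivatives at active indices. -/
lemma diniUpper_sup_le {N : ℕ} (hN : 0 < N) (g : Fin N → ℝ → ℝ) (d : Fin N → ℝ) (t B : ℝ)
    (hg : ∀ k, HasDerivAt (g k) (d k) t)
    (hB : ∀ k, g k t = (⨆ j, g j t) → d k ≤ B) :
    diniUpper (fun τ => ⨆ k, g k τ) t ≤ B := by
  haveI : Nonempty (Fin N) := Fin.pos_iff_nonempty.mp hN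
  set Z : ℝ → ℝ := fun τ => ⨆ k, g k τ with hZ
  have hbdd : ∀ τ, BddAbove (Set.range fun k => g k τ) :=
    fun τ => Set.Finite.bddAbove (Set.finite_range _)
  have hle : ∀ τ k, g k τ ≤ Z τ := fun τ k => le_ciSup (hbdd τ) k
  obtain ⟨m, hm⟩ := Finite.exists_max (fun k => g k t)
  have hmZ : Z t = g m t := le_antisymm (ciSup_le hm) (hle t m)
  have hadd : Tendsto (fun h : ℝ => t + h) (𝓝[>] 0) (𝓝 t) := by
    have : Tendsto (fun h : ℝ => t + h) (𝓝 0) (𝓝 (t + 0)) :=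
      (continuous_add_left t).tendsto 0
    simpa using this.mono_left nhdsWithin_le_nhds
  have hmap : Tendsto (fun h : ℝ => t + h) (𝓝[>] 0) (𝓝[≠] t) := by
    apply tendsto_nhdsWithin_of_tendsto_nhds_of_eventually_within _ hadd
    filter_upwards [self_mem_nhdsWithin] with h hh
    have h0 : (0:ℝ) < h := hh
    simp only [Set.mem_compl_iff, Set.mem_singleton_iff]
    intro hc
    have : h = 0 := by linarith [congrArg (fun x => x - t) hc]
    linarith
  have hslope : ∀ k, Tendsto (fun h : ℝ => (g k (t + h) - g k t) / h) (𝓝[>] 0) (𝓝 (d k)) := by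
    intro k
    have h1 := (hasDerivAt_iff_tendsto_slope.mp (hg k)).comp hmap
    refine h1.congr fun h => ?_
    simp only [Function.comp_apply]
    rw [slope_def_field]
    ring_nf
  have hev : ∀ ε, 0 < ε → ∀ᶠ h in 𝓝[>] (0:ℝ), (Z (t + h) - Z t) / h ≤ B + ε := by
    intro ε hε
    have hk : ∀ k, ∀ᶠ h in 𝓝[>] (0:ℝ), g k (t + h) ≤ Z t + (B + ε) * h := by
      intro k
      by_cases hact : g k t = Z t
      · have hdB : d k ≤ B := hB k hact
        have h1 : ∀ᶠ h in 𝓝[>] (0:ℝ), (g k (t + h) - g k t) / h < d k + ε :=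
          (hslope k).eventually_lt_const (by linarith)
        filter_upwards [h1, self_mem_nhdsWithin] with h h1 h2
        have hh : (0:ℝ) < h := h2
        have h3 := (div_lt_iff₀ hh).mp h1
        have h4 : (d k + ε) * h ≤ (B + ε) * h :=
          mul_le_mul_of_nonneg_right (by linarith) hh.le
        linarith [hact ▸ h3]
      · have hlt : g k t < Z t := lt_of_le_of_ne (hle t k) hact
        have hc1 : Tendsto (fun h : ℝ => g k (t + h)) (𝓝[>] 0) (𝓝 (g k t)) :=
          ((hg k).continuousAt.tendsto).comp hadd
        have h1 : ∀ᶠ h in 𝓝[>] (0:ℝ), g k (t + h) < (g k t + Z t) / 2 :=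
          hc1.eventually_lt_const (by linarith)
        have hc2 : Tendsto (fun h : ℝ => (B + ε) * h) (𝓝[>] (0:ℝ)) (𝓝 0) := by
          have : Tendsto (fun h : ℝ => (B + ε) * h) (𝓝 0) (𝓝 ((B + ε) * 0)) :=
            (continuous_const.mul continuous_id).tendsto 0
          simpa using this.mono_left nhdsWithin_le_nhds
        have h2 : ∀ᶠ h in 𝓝[>] (0:ℝ), (g k t - Z t) / 2 < (B + ε) * h :=
          hc2.eventually_const_lt (by linarith)
        filter_upwards [h1, h2] with h h1 h2
        linarith
    filter_upwards [eventually_all.mpr hk, self_mem_nhdsWithin] with h hall hh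
    have hh : (0:ℝ) < h := hh
    have hZh : Z (t + h) ≤ Z t + (B + ε) * h := ciSup_le fun k => hall k
    rw [div_le_iff₀ hh]
    linarith
  have hlow : ∀ᶠ h in 𝓝[>] (0:ℝ), d m - 1 ≤ (Z (t + h) - Z t) / h := by
    have h1 : ∀ᶠ h in 𝓝[>] (0:ℝ), d m - 1 < (g m (t + h) - g m t) / h :=
      (hslope m).eventually_const_lt (by linarith)
    filter_upwards [h1, self_mem_nhdsWithin] with h h1 hh
    have hh : (0:ℝ) < h := hh
    have h2 : (g m (t + h) - g m t) / h ≤ (Z (t + h) - Z t) / h := by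
      have hnum : g m (t + h) - g m t ≤ Z (t + h) - Z t := by
        have := hle (t + h) m
        linarith [hmZ.le, hmZ.ge]
      gcongr
    linarith
  rw [diniUpper]
  apply le_of_forall_pos_le_add
  intro ε hε
  exact Filter.limsup_le_of_le (isCoboundedUnder_le_of_eventually_le _ hlow) (hev ε hε)

set_option maxHeartbeats 1000000 in
/-- Claim 2: monotonicity of `Z(u(t)) = max_k u_k(t)/R*_k` along solutions. -/
theorem comparison_system_Z_decreasing
    {N : ℕ} (hN : 0 < N)
    (ER : Fin N → Fin N → Prop)
    (hERconn : ∀ i j : Fin N, Relation.ReflTransGen ER i j)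
    (δR : Fin N → ℝ) (hδR : ∀ i, 0 < δR i)
    (fU : (Fin N → ℝ) → (Fin N → ℝ))
    (hfUsm : ContDiff ℝ 2 fU)
    (hfUdep : ∀ (i j : Fin N), ¬ ER i j → ∀ x y : Fin N → ℝ,
      (∀ k, k ≠ j → x k = y k) → fU x i = fU y i)
    (hfUz : fU 0 = 0)
    (hfUpos : ∀ (i j : Fin N), ER i j → ∀ x : Fin N → ℝ, (∀ k, 0 ≤ x k) →
      0 < fderiv ℝ (fun z => fU z i) x (Pi.single j 1))
    (hfUconc : ∀ (i j k : Fin N), ∀ x : Fin N → ℝ, (∀ l, 0 ≤ x l) →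
      fderiv ℝ (fun z => fderiv ℝ (fun w => fU w i) z (Pi.single j 1)) x
        (Pi.single k 1) ≤ 0)
    (Rstar : Fin N → ℝ) (hRstar : ∀ i, 0 < Rstar i ∧ Rstar i < 1)
    (hfix : ∀ i : Fin N, Rstar i = fU Rstar i / (δR i + fU Rstar i))
    (u : ℝ → Fin N → ℝ)
    (hsol : ∀ (i : Fin N) (t : ℝ), 0 ≤ t → HasDerivAt (fun τ => u τ i)
      ((1 - u t i) * fU (u t) i - δR i * u t i) t)
    (hupos : ∀ t : ℝ, 0 ≤ t → ∀ k : Fin N, 0 < u t k) :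
    ∀ t : ℝ, 0 < t →
      ((1 ≤ ⨆ k, u t k / Rstar k) →
        diniUpper (fun τ => ⨆ k, u τ k / Rstar k) t ≤ 0) ∧
      ((1 < ⨆ k, u t k / Rstar k) →
        diniUpper (fun τ => ⨆ k, u τ k / Rstar k) t < 0) := by
  haveI : Nonempty (Fin N) := Fin.pos_iff_nonempty.mp hN
  have hRpos : ∀ k, 0 < Rstar k := fun k => (hRstar k).1
  have hRlt : ∀ k, Rstar k < 1 := fun k => (hRstar k).2
  -- smoothness facts
  have hfU1 : ∀ i, ContDiff ℝ 2 (fun z => fU z i) := fun i => contDiff_pi.mp hfUsm i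
  have hdiff : ∀ i, Differentiable ℝ (fun z => fU z i) :=
    fun i => (hfU1 i).differentiable (by norm_num)
  -- directional derivative nonnegative on the nonnegative orthant
  have dirnn : ∀ i (z : Fin N → ℝ), (∀ k, 0 ≤ z k) → ∀ v : Fin N → ℝ, (∀ k, 0 ≤ v k) →
      0 ≤ fderiv ℝ (fun w => fU w i) z v := by
    intro i z hz v hv
    rw [clm_apply_eq_sum]
    apply Finset.sum_nonneg
    intro j _
    by_cases hER : ER i j
    · exact mul_nonneg (hv j) (hfUpos i j hER z hz).le
    · rw [partial_zero _ (hdiff i) j (hfUdep i j hER)]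
      simp
  -- monotonicity
  have mono : ∀ i (x y : Fin N → ℝ), (∀ k, 0 ≤ x k) → (∀ k, x k ≤ y k) →
      fU x i ≤ fU y i := by
    intro i x y hx hxy
    obtain ⟨z, hz, hzeq⟩ := segment_mvt (fun w => fU w i) (hdiff i) x y hx hxy
    have := dirnn i z hz (y - x) (fun k => by simp only [Pi.sub_apply]; linarith [hxy k])
    rw [hzeq] at this
    linarith
  -- nonnegativity
  have fnn : ∀ i (x : Fin N → ℝ), (∀ k, 0 ≤ x k) → 0 ≤ fU x i := by
    intro i x hx
    have := mono i 0 x (fun k => le_rfl) (fun k => by simpa using hx k)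
    simpa [hfUz] using this
  -- partial derivatives are antitone on the nonnegative orthant
  have hDjdiff : ∀ i j, Differentiable ℝ
      (fun z => fderiv ℝ (fun w => fU w i) z (Pi.single j 1)) := by
    intro i j
    have h1 : ContDiff ℝ 1 (fun z => fderiv ℝ (fun w => fU w i) z) :=
      (hfU1 i).fderiv_right (by norm_num)
    exact (ContinuousLinearMap.apply ℝ ℝ (Pi.single j 1 : Fin N → ℝ)).differentiable.comp
      (h1.differentiable (by norm_num))
  have hDjanti : ∀ i j (p q : Fin N → ℝ), (∀ k, 0 ≤ p k) → (∀ k, p k ≤ q k) →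
      fderiv ℝ (fun w => fU w i) q (Pi.single j 1) ≤
        fderiv ℝ (fun w => fU w i) p (Pi.single j 1) := by
    intro i j p q hp hpq
    obtain ⟨z, hz, hzeq⟩ := segment_mvt
      (fun z => fderiv ℝ (fun w => fU w i) z (Pi.single j 1)) (hDjdiff i j) p q hp hpq
    have hneg : fderiv ℝ (fun z => fderiv ℝ (fun w => fU w i) z (Pi.single j 1)) z (q - p) ≤ 0 := by
      rw [clm_apply_eq_sum]
      apply Finset.sum_nonpos
      intro k _
      apply mul_nonpos_of_nonneg_of_nonpos
      · simp only [Pi.sub_apply]; linarith [hpq k]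
      · exact hfUconc i j k z hz
    rw [hzeq] at hneg
    linarith
  -- sublinearity: fU (θ • x) i ≤ θ * fU x i for θ ≥ 1, x ≥ 0
  have sub : ∀ i (x : Fin N → ℝ), (∀ k, 0 ≤ x k) → ∀ θ : ℝ, 1 ≤ θ →
      fU (θ • x) i ≤ θ * fU x i := by
    intro i x hx θ hθ
    rcases eq_or_lt_of_le hθ with h1 | h1
    · rw [← h1]; simp
    · set φ : ℝ → ℝ := fun s => fU (s • x) i with hφ
      have hφd : ∀ s : ℝ, HasDerivAt φ (fderiv ℝ (fun w => fU w i) (s • x) x) s := by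
        intro s
        have := line_hasDerivAt (fun w => fU w i) (hdiff i) 0 x s
        simpa [zero_add] using this
      have hφcont : Continuous φ := (hdiff i).continuous.comp (by continuity)
      obtain ⟨c₁, hc₁, he₁⟩ := exists_hasDerivAt_eq_slope φ _ (by norm_num : (0:ℝ) < 1)
        hφcont.continuousOn (fun s _ => hφd s)
      obtain ⟨c₂, hc₂, he₂⟩ := exists_hasDerivAt_eq_slope φ _ h1
        hφcont.continuousOn (fun s _ => hφd s)
      have hmono2 : fderiv ℝ (fun w => fU w i) (c₂ • x) x ≤
          fderiv ℝ (fun w => fU w i) (c₁ • x) x := by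
        rw [clm_apply_eq_sum, clm_apply_eq_sum]
        apply Finset.sum_le_sum
        intro j _
        refine mul_le_mul_of_nonneg_left ?_ (hx j)
        apply hDjanti i j (c₁ • x) (c₂ • x)
        · intro k
          simp only [Pi.smul_apply, smul_eq_mul]
          exact mul_nonneg hc₁.1.le (hx k)
        · intro k
          simp only [Pi.smul_apply, smul_eq_mul]
          have hcc : c₁ ≤ c₂ := le_trans hc₁.2.le hc₂.1.le
          exact mul_le_mul_of_nonneg_right hcc (hx k)
      have hφ0 : φ 0 = 0 := by
        simp only [hφ, zero_smul, hfUz, Pi.zero_apply]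
      have hφ1 : φ 1 = fU x i := by simp only [hφ, one_smul]
      rw [he₁, he₂] at hmono2
      have hθ1 : (0:ℝ) < θ - 1 := by linarith
      rw [div_le_iff₀ hθ1] at hmono2
      have : fU (θ • x) i = φ θ := rfl
      rw [this]
      simp only [hφ0, sub_zero, div_one] at hmono2
      nlinarith [hmono2, hφ1.le, hφ1.ge]
  -- positivity of fU at the fixed point and the key identity
  have hFnn : ∀ k, 0 ≤ fU Rstar k := fun k => fnn k Rstar (fun j => (hRpos j).le)
  have hkey : ∀ k, δR k * Rstar k = (1 - Rstar k) * fU Rstar k := by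
    intro k
    have hpos : 0 < δR k + fU Rstar k := by linarith [hFnn k, hδR k]
    have h2 : Rstar k * (δR k + fU Rstar k) = fU Rstar k := by
      rw [hfix k]
      field_simp
    linear_combination h2
  have hFpos : ∀ k, 0 < fU Rstar k := by
    intro k
    rcases lt_or_eq_of_le (hFnn k) with h | h
    · exact h
    · exfalso
      have := hkey k
      rw [← h] at this
      nlinarith [hδR k, hRpos k]
  -- the uniform gap constants
  set q : Fin N → ℝ := fun k => min (Rstar k * fU Rstar k) ((1 - Rstar k) * fU Rstar k)
    with hqdef
  have hqpos : ∀ k, 0 < q k := fun k =>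
    lt_min (mul_pos (hRpos k) (hFpos k))
      (mul_pos (by linarith [hRlt k]) (hFpos k))
  set Q : ℝ := ⨅ k, q k / Rstar k with hQdef
  have hQpos : 0 < Q := by
    obtain ⟨m, hm⟩ := Finite.exists_min (fun k => q k / Rstar k)
    exact lt_of_lt_of_le (div_pos (hqpos m) (hRpos m)) (le_ciInf (fun k => hm k))
  have hQle : ∀ k, Q ≤ q k / Rstar k :=
    fun k => ciInf_le (Set.Finite.bddBelow (Set.finite_range _)) k
  -- main bound
  have main : ∀ t : ℝ, 0 < t → 1 ≤ (⨆ k, u t k / Rstar k) →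
      diniUpper (fun τ => ⨆ k, u τ k / Rstar k) t ≤ (1 - (⨆ k, u t k / Rstar k)) * Q := by
    intro t ht hθ
    set θ : ℝ := ⨆ k, u t k / Rstar k with hθdef
    have ht0 : (0:ℝ) ≤ t := ht.le
    have hbdd : BddAbove (Set.range fun k => u t k / Rstar k) :=
      Set.Finite.bddAbove (Set.finite_range _)
    have hub : ∀ j, u t j ≤ θ * Rstar j := by
      intro j
      have h1 : u t j / Rstar j ≤ θ := le_ciSup hbdd j
      rwa [div_le_iff₀ (hRpos j)] at h1
    apply diniUpper_sup_le hN (fun k τ => u τ k / Rstar k)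
      (fun k => ((1 - u t k) * fU (u t) k - δR k * u t k) / Rstar k) t _
      (fun k => (hsol k t ht0).div_const _)
    intro k hact
    -- hact : u t k / Rstar k = θ
    have hutk : u t k = θ * Rstar k := by
      calc u t k = (u t k / Rstar k) * Rstar k := (div_mul_cancel₀ _ (hRpos k).ne').symm
      _ = θ * Rstar k := by rw [hact]
    have hX1 : fU (u t) k ≤ θ * fU Rstar k := by
      have h1 : fU (u t) k ≤ fU (θ • Rstar) k :=
        mono k (u t) (θ • Rstar) (fun j => (hupos t ht0 j).le)
          (fun j => by simpa [smul_eq_mul] using hub j)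
      have h2 : fU (θ • Rstar) k ≤ θ * fU Rstar k :=
        sub k Rstar (fun j => (hRpos j).le) θ hθ
      linarith
    have hX0 : 0 ≤ fU (u t) k := fnn k (u t) (fun j => (hupos t ht0 j).le)
    have hq1 : q k ≤ Rstar k * fU Rstar k := min_le_left _ _
    have hq2 : q k ≤ (1 - Rstar k) * fU Rstar k := min_le_right _ _
    have hnum : (1 - u t k) * fU (u t) k - δR k * u t k ≤ (1 - θ) * q k := by
      rw [hutk]
      have hk1 := hkey k
      rcases le_or_gt (θ * Rstar k) 1 with hcase | hcase
      · have h3 : (1 - θ * Rstar k) * fU (u t) k ≤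
            (1 - θ * Rstar k) * (θ * fU Rstar k) :=
          mul_le_mul_of_nonneg_left hX1 (by linarith)
        have e3 : θ * (1 - θ) * (Rstar k * fU Rstar k) ≤ (1 - θ) * q k := by
          nlinarith [mul_nonneg (sub_nonneg.mpr hθ)
            (sub_nonneg.mpr (le_trans hq1
              (le_mul_of_one_le_left (mul_pos (hRpos k) (hFpos k)).le hθ)))]
        nlinarith [h3, e3, hk1]
      · have h3 : (1 - θ * Rstar k) * fU (u t) k ≤ 0 :=
          mul_nonpos_of_nonpos_of_nonneg (by linarith) hX0
        have e3 : -(θ * ((1 - Rstar k) * fU Rstar k)) ≤ (1 - θ) * q k := by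
          nlinarith [hqpos k, mul_nonneg (by linarith : (0:ℝ) ≤ θ) (sub_nonneg.mpr hq2)]
        nlinarith [h3, e3, hk1]
    have hdle : ((1 - u t k) * fU (u t) k - δR k * u t k) / Rstar k ≤
        (1 - θ) * q k / Rstar k := by
      have := hRpos k
      gcongr
    have h5 : (1 - θ) * (q k / Rstar k) ≤ (1 - θ) * Q :=
      mul_le_mul_of_nonpos_left (hQle k) (by linarith)
    have h6 : (1 - θ) * q k / Rstar k = (1 - θ) * (q k / Rstar k) := by ring
    linarith [hdle, h6.le, h6.ge, h5]
  intro t ht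
  constructor
  · intro h1
    have h2 := main t ht h1
    have hB : (1 - (⨆ k, u t k / Rstar k)) * Q ≤ 0 :=
      mul_nonpos_of_nonpos_of_nonneg (by linarith) hQpos.le
    linarith
  · intro h1
    have h2 := main t ht h1.le
    have hB : (1 - (⨆ k, u t k / Rstar k)) * Q < 0 :=
      mul_neg_of_neg_of_pos (by linarith) hQpos
    linarith
end

section
/- Let R* ∈ (0,1)^N satisfy R*_i = f_i^U(R*)/(δ_i^R + f_i^U(R*)) for all i, and let u(t) be a solution of du/dt = (E_N − diag u(t)) f^U(u(t)) − D_R u(t) with u(t) > 0 componentwise and u(t) ≤ 1 componentwise. Define z(u(t)) = min_{1≤k≤N} u_k(t)/R*_k. Then for t > 0: if z(u(t)) ≤ 1 then the lower-right Dini derivative D_+ z(u(t)) ≥ 0, and if z(u(t)) < 1 then D_+ z(u(t)) > 0. -/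
open Filter Topology

section Aux

lemma clm_sum {N : ℕ} (f' : (Fin N → ℝ) →L[ℝ] ℝ) (v : Fin N → ℝ) :
    f' v = ∑ j, v j * f' (Pi.single j 1) := by
  conv_lhs => rw [← Finset.univ_sum_single v]
  rw [map_sum]
  refine Finset.sum_congr rfl fun j _ => ?_
  have h : (Pi.single j (v j) : Fin N → ℝ) = v j • (Pi.single j (1:ℝ) : Fin N → ℝ) := by
    rw [← Pi.single_smul, smul_eq_mul, mul_one]
  rw [h, map_smul, smul_eq_mul]

lemma zero_partial {N : ℕ} {g : (Fin N → ℝ) → ℝ} {x : Fin N → ℝ} {j : Fin N}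
    (hg : DifferentiableAt ℝ g x)
    (hdep : ∀ y : Fin N → ℝ, (∀ k, k ≠ j → y k = x k) → g y = g x) :
    fderiv ℝ g x (Pi.single j 1) = 0 := by
  set w : Fin N → ℝ := Pi.single j 1 with hw
  have hc : HasDerivAt (fun s : ℝ => x + s • w) w 0 := by
    simpa using ((hasDerivAt_id (0:ℝ)).smul_const w).const_add x
  have hgf : HasFDerivAt g (fderiv ℝ g x) (x + (0:ℝ) • w) := by
    simpa using hg.hasFDerivAt
  have h1 : HasDerivAt (g ∘ fun s : ℝ => x + s • w) (fderiv ℝ g x w) 0 :=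
    hgf.comp_hasDerivAt (0:ℝ) hc
  have h2 : (g ∘ fun s : ℝ => x + s • w) = fun _ => g x := by
    funext s
    exact hdep _ (fun k hk => by simp [hw, Pi.single_eq_of_ne hk])
  rw [h2] at h1
  exact h1.unique (hasDerivAt_const _ _)

lemma mono_orthant {N : ℕ} {g : (Fin N → ℝ) → ℝ}
    (hg : Differentiable ℝ g)
    (hpar : ∀ p : Fin N → ℝ, (∀ l, 0 ≤ p l) → ∀ j, 0 ≤ fderiv ℝ g p (Pi.single j 1))
    {x y : Fin N → ℝ} (hx : ∀ l, 0 ≤ x l) (hxy : ∀ l, x l ≤ y l) :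
    g x ≤ g y := by
  set c : ℝ → Fin N → ℝ := fun s => x + s • (y - x) with hcdef
  have hcd : ∀ s : ℝ, HasDerivAt c (y - x) s := fun s => by
    simpa [hcdef] using ((hasDerivAt_id s).smul_const (y - x)).const_add x
  have hφd : ∀ s : ℝ, HasDerivAt (g ∘ c) (fderiv ℝ g (c s) (y - x)) s := fun s =>
    (hg (c s)).hasFDerivAt.comp_hasDerivAt s (hcd s)
  have hccont : Continuous c := by
    apply Continuous.add continuous_const
    exact (continuous_id.smul continuous_const)
  have hmono : MonotoneOn (g ∘ c) (Set.Icc (0:ℝ) 1) := by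
    apply monotoneOn_of_deriv_nonneg (convex_Icc 0 1)
    · exact (hg.continuous.comp hccont).continuousOn
    · exact fun s _ => ((hφd s).differentiableAt).differentiableWithinAt
    · intro s hs
      rw [interior_Icc] at hs
      rw [(hφd s).deriv, clm_sum]
      apply Finset.sum_nonneg
      intro j _
      have hcs : ∀ l, 0 ≤ c s l := by
        intro l
        have : c s l = x l + s * (y l - x l) := rfl
        rw [this]
        have := hxy l
        nlinarith [hx l, hs.1.le]
      exact mul_nonneg (by simpa using sub_nonneg.mpr (hxy j)) (hpar (c s) hcs j)
  have h0 : c 0 = x := by simp [hcdef]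
  have h1 : c 1 = y := by simp [hcdef]
  have := hmono (Set.left_mem_Icc.mpr zero_le_one) (Set.right_mem_Icc.mpr zero_le_one) zero_le_one
  simpa [h0, h1] using this

lemma scale_concave {N : ℕ} {g : (Fin N → ℝ) → ℝ}
    (hg : ContDiff ℝ 2 g) (hg0 : g 0 = 0)
    (hconc : ∀ (j k : Fin N) (p : Fin N → ℝ), (∀ l, 0 ≤ p l) →
      fderiv ℝ (fun w => fderiv ℝ g w (Pi.single j 1)) p (Pi.single k 1) ≤ 0)
    {x : Fin N → ℝ} (hx : ∀ l, 0 ≤ x l) {z : ℝ} (hz0 : 0 ≤ z) (hz1 : z ≤ 1) :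
    z * g x ≤ g (z • x) := by
  have hg1 : Differentiable ℝ g := hg.differentiable (by norm_num)
  have hF1 : ContDiff ℝ 1 (fderiv ℝ g) := hg.fderiv_right (by norm_num)
  have hF : Differentiable ℝ (fderiv ℝ g) := hF1.differentiable one_ne_zero
  have hj : ∀ j : Fin N, Differentiable ℝ (fun p => fderiv ℝ g p (Pi.single j 1)) :=
    fun j => hF.clm_apply (differentiable_const _)
  have hcurve : ∀ s : ℝ, HasDerivAt (fun s : ℝ => s • x) x s := fun s => by
    simpa using (hasDerivAt_id s).smul_const x
  set G : ℝ → ℝ := fun s => g (s • x) with hGdef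
  have hGd : ∀ s : ℝ, HasDerivAt G (fderiv ℝ g (s • x) x) s := fun s =>
    (hg1 (s • x)).hasFDerivAt.comp_hasDerivAt s (hcurve s)
  set ψ : ℝ → ℝ := fun s => ∑ j, x j * fderiv ℝ g (s • x) (Pi.single j 1) with hψdef
  have hψeq : ∀ s : ℝ, fderiv ℝ g (s • x) x = ψ s := fun s => clm_sum _ x
  have hψd : ∀ s : ℝ, HasDerivAt ψ
      (∑ j, x j * (fderiv ℝ (fun p => fderiv ℝ g p (Pi.single j 1)) (s • x) x)) s := by
    intro s
    apply HasDerivAt.fun_sum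
    intro j _
    exact (((hj j (s • x)).hasFDerivAt.comp_hasDerivAt s (hcurve s))).const_mul (x j)
  have hψ'np : ∀ s : ℝ, 0 ≤ s →
      (∑ j, x j * (fderiv ℝ (fun p => fderiv ℝ g p (Pi.single j 1)) (s • x) x)) ≤ 0 := by
    intro s hs
    apply Finset.sum_nonpos
    intro j _
    apply mul_nonpos_of_nonneg_of_nonpos (hx j)
    rw [clm_sum]
    apply Finset.sum_nonpos
    intro k _
    apply mul_nonpos_of_nonneg_of_nonpos (hx k)
    exact hconc j k (s • x) (fun l => by simpa using mul_nonneg hs (hx l))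
  have hψcont : Continuous ψ := by
    rw [continuous_iff_continuousAt]; exact fun s => (hψd s).continuousAt
  have hψanti : AntitoneOn ψ (Set.Icc (0:ℝ) 1) := by
    apply antitoneOn_of_deriv_nonpos (convex_Icc 0 1) hψcont.continuousOn
    · exact fun s _ => (hψd s).differentiableAt.differentiableWithinAt
    · intro s hs
      rw [interior_Icc] at hs
      rw [(hψd s).deriv]
      exact hψ'np s hs.1.le
  have hGcont : Continuous G := by
    rw [continuous_iff_continuousAt]; exact fun s => (hGd s).continuousAt
  have hGderiv : ∀ s : ℝ, deriv G s = ψ s := fun s => by rw [(hGd s).deriv, hψeq]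
  have hGconc : ConcaveOn ℝ (Set.Icc (0:ℝ) 1) G := by
    apply AntitoneOn.concaveOn_of_deriv (convex_Icc 0 1) hGcont.continuousOn
    · exact fun s _ => (hGd s).differentiableAt.differentiableWithinAt
    · intro a ha b hb hab
      rw [interior_Icc] at ha hb
      rw [hGderiv, hGderiv]
      exact hψanti ⟨ha.1.le, ha.2.le⟩ ⟨hb.1.le, hb.2.le⟩ hab
  have key := hGconc.2 (Set.right_mem_Icc.mpr zero_le_one) (Set.left_mem_Icc.mpr zero_le_one)
    hz0 (by linarith : (0:ℝ) ≤ 1 - z) (by ring)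
  have hG1 : G 1 = g x := by simp [hGdef]
  have hG0 : G 0 = 0 := by simp [hGdef, hg0]
  have harg : z • (1:ℝ) + (1 - z) • (0:ℝ) = z := by simp
  rw [harg, hG1, hG0] at key
  simpa [hGdef] using key

lemma diniLower_iInf_ge {N : ℕ} (hN : 0 < N) (v : Fin N → ℝ → ℝ) (d : Fin N → ℝ)
    (t c : ℝ) (hd : ∀ k, HasDerivAt (v k) (d k) t)
    (hc : ∀ k, v k t = (⨅ j, v j t) → c ≤ d k) :
    c ≤ diniLower (fun τ => ⨅ k, v k τ) t := by
  haveI : Nonempty (Fin N) := ⟨⟨0, hN⟩⟩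
  set z : ℝ → ℝ := fun τ => ⨅ k, v k τ with hzdef
  have hbdd : ∀ τ, BddBelow (Set.range fun k => v k τ) := fun τ => Finite.bddBelow_range _
  obtain ⟨m, hm⟩ := Finite.exists_min (fun k => v k t)
  have hzt : z t = v m t := le_antisymm (ciInf_le (hbdd t) m) (le_ciInf hm)
  have hmap : Tendsto (fun h : ℝ => t + h) (𝓝[>] (0:ℝ)) (𝓝[≠] t) := by
    rw [tendsto_nhdsWithin_iff]
    constructor
    · have : Tendsto (fun h : ℝ => t + h) (𝓝 (0:ℝ)) (𝓝 (t + 0)) :=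
        (continuous_add_left t).tendsto 0
      simpa using this.mono_left nhdsWithin_le_nhds
    · filter_upwards [self_mem_nhdsWithin] with h (hh : h ∈ Set.Ioi 0)
      simp only [Set.mem_compl_iff, Set.mem_singleton_iff]
      intro habs
      have : h = 0 := by linarith [habs]
      exact absurd this (ne_of_gt hh)
  have hslope : ∀ k, Tendsto (fun h => (v k (t + h) - v k t) / h) (𝓝[>] (0:ℝ)) (𝓝 (d k)) := by
    intro k
    have h1 : Tendsto (slope (v k) t) (𝓝[≠] t) (𝓝 (d k)) :=
      hasDerivAt_iff_tendsto_slope.mp (hd k)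
    have h2 := h1.comp hmap
    have h3 : (slope (v k) t ∘ fun h : ℝ => t + h) = fun h => (v k (t + h) - v k t) / h := by
      funext h
      simp [slope_def_field, Function.comp]
    rwa [h3] at h2
  have hcobdd : IsCoboundedUnder (· ≥ ·) (𝓝[>] (0:ℝ))
      (fun h => (z (t + h) - z t) / h) := by
    apply Filter.IsBoundedUnder.isCoboundedUnder_ge
    refine ⟨d m + 1, ?_⟩
    rw [eventually_map]
    filter_upwards [self_mem_nhdsWithin,
      (hslope m).eventually_lt_const (lt_add_one (d m))] with h hh hlt
    have hh0 : (0:ℝ) < h := hh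
    have hle : z (t + h) ≤ v m (t + h) := ciInf_le (hbdd _) m
    have hq : (z (t + h) - z t) / h ≤ (v m (t + h) - v m t) / h := by
      gcongr
      · rw [hzt]
    linarith
  apply le_of_forall_sub_le
  intro ε hε
  apply Filter.le_liminf_of_le hcobdd
  have hev : ∀ k : Fin N, ∀ᶠ h in 𝓝[>] (0:ℝ), (c - ε) * h ≤ v k (t + h) - z t := by
    intro k
    by_cases hk : v k t = z t
    · have hck : c ≤ d k := hc k (by rw [hk])
      filter_upwards [self_mem_nhdsWithin,
        (hslope k).eventually_const_lt (by linarith : c - ε < d k)] with h hh hlt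
      have hh0 : (0:ℝ) < h := hh
      rw [← hk]
      calc (c - ε) * h ≤ ((v k (t + h) - v k t) / h) * h := by
            apply mul_le_mul_of_nonneg_right hlt.le hh0.le
        _ = v k (t + h) - v k t := by field_simp
    · have hklt : z t < v k t := lt_of_le_of_ne (ciInf_le (hbdd t) k) (Ne.symm hk)
      set η := v k t - z t with hη
      have hη0 : 0 < η := by simp [hη]; linarith
      have hcont : Tendsto (fun h : ℝ => v k (t + h)) (𝓝[>] (0:ℝ)) (𝓝 (v k t)) := by
        have h1 : Tendsto (v k) (𝓝 t) (𝓝 (v k t)) := (hd k).continuousAt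
        have h2 : Tendsto (fun h : ℝ => t + h) (𝓝[>] (0:ℝ)) (𝓝 t) := by
          have : Tendsto (fun h : ℝ => t + h) (𝓝 (0:ℝ)) (𝓝 (t + 0)) :=
            (continuous_add_left t).tendsto 0
          simpa using this.mono_left nhdsWithin_le_nhds
        exact h1.comp h2
      have hev1 : ∀ᶠ h in 𝓝[>] (0:ℝ), v k t - η / 2 < v k (t + h) :=
        hcont.eventually_const_lt (by linarith)
      have hsmall : Set.Ioo (0:ℝ) (η / 2 / (|c - ε| + 1)) ∈ 𝓝[>] (0:ℝ) := by
        apply Ioo_mem_nhdsGT_of_mem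
        exact ⟨le_refl 0, by positivity⟩
      filter_upwards [hev1, hsmall] with h h1 h2
      have hh0 : 0 < h := h2.1
      have hhlt : h < η / 2 / (|c - ε| + 1) := h2.2
      have key1 : (c - ε) * h ≤ |c - ε| * h := by
        apply mul_le_mul_of_nonneg_right (le_abs_self _) hh0.le
      have key2 : |c - ε| * h < η / 2 := by
        have habs : 0 ≤ |c - ε| := abs_nonneg _
        calc |c - ε| * h ≤ (|c - ε| + 1) * h := by nlinarith
          _ < η / 2 := by
            rw [← lt_div_iff₀' (by positivity)]
            exact hhlt
      have key3 : η / 2 ≤ v k (t + h) - z t := by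
        have heq : v k t - η / 2 = z t + η / 2 := by rw [hη]; ring
        rw [heq] at h1
        linarith
      linarith
  rw [← Filter.eventually_all] at hev
  filter_upwards [hev, self_mem_nhdsWithin] with h hall (hh : h ∈ Set.Ioi 0)
  have hh0 : (0:ℝ) < h := hh
  have hzle : z t + (c - ε) * h ≤ z (t + h) := by
    apply le_ciInf
    intro k
    linarith [hall k]
  rw [le_div_iff₀ hh0]
  linarith

end Aux

/-- Claim 3: monotonicity of `z(u(t)) = min_k u_k(t)/R*_k` along solutions. -/
theorem comparison_system_z_increasing
    {N : ℕ} (hN : 0 < N)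
    (ER : Fin N → Fin N → Prop)
    (hERconn : ∀ i j : Fin N, Relation.ReflTransGen ER i j)
    (δR : Fin N → ℝ) (hδR : ∀ i, 0 < δR i)
    (fU : (Fin N → ℝ) → (Fin N → ℝ))
    (hfUsm : ContDiff ℝ 2 fU)
    (hfUdep : ∀ (i j : Fin N), ¬ ER i j → ∀ x y : Fin N → ℝ,
      (∀ k, k ≠ j → x k = y k) → fU x i = fU y i)
    (hfUz : fU 0 = 0)
    (hfUpos : ∀ (i j : Fin N), ER i j → ∀ x : Fin N → ℝ, (∀ k, 0 ≤ x k) →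
      0 < fderiv ℝ (fun z => fU z i) x (Pi.single j 1))
    (hfUconc : ∀ (i j k : Fin N), ∀ x : Fin N → ℝ, (∀ l, 0 ≤ x l) →
      fderiv ℝ (fun z => fderiv ℝ (fun w => fU w i) z (Pi.single j 1)) x
        (Pi.single k 1) ≤ 0)
    (Rstar : Fin N → ℝ) (hRstar : ∀ i, 0 < Rstar i ∧ Rstar i < 1)
    (hfix : ∀ i : Fin N, Rstar i = fU Rstar i / (δR i + fU Rstar i))
    (u : ℝ → Fin N → ℝ)
    (hsol : ∀ (i : Fin N) (t : ℝ), 0 ≤ t → HasDerivAt (fun τ => u τ i)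
      ((1 - u t i) * fU (u t) i - δR i * u t i) t)
    (hupos : ∀ t : ℝ, 0 ≤ t → ∀ k : Fin N, 0 < u t k ∧ u t k ≤ 1) :
    ∀ t : ℝ, 0 < t →
      ((⨅ k, u t k / Rstar k) ≤ 1 →
        0 ≤ diniLower (fun τ => ⨅ k, u τ k / Rstar k) t) ∧
      ((⨅ k, u t k / Rstar k) < 1 →
        0 < diniLower (fun τ => ⨅ k, u τ k / Rstar k) t) := by
  haveI : Nonempty (Fin N) := ⟨⟨0, hN⟩⟩
  have hgsm : ∀ i : Fin N, ContDiff ℝ 2 (fun x => fU x i) := fun i =>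
    (ContinuousLinearMap.proj i : (Fin N → ℝ) →L[ℝ] ℝ).contDiff.comp hfUsm
  have hgdiff : ∀ i : Fin N, Differentiable ℝ (fun x => fU x i) := fun i =>
    (hgsm i).differentiable (by norm_num)
  have hg0 : ∀ i : Fin N, fU (0 : Fin N → ℝ) i = 0 := fun i => by
    rw [hfUz]; rfl
  have hpar : ∀ (i : Fin N) (p : Fin N → ℝ), (∀ l, 0 ≤ p l) →
      ∀ j, 0 ≤ fderiv ℝ (fun x => fU x i) p (Pi.single j 1) := by
    intro i p hp j
    by_cases hE : ER i j
    · exact (hfUpos i j hE p hp).le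
    · rw [zero_partial (hgdiff i p) (fun y hy => hfUdep i j hE y p hy)]
  have hmono : ∀ (i : Fin N) (x y : Fin N → ℝ), (∀ l, 0 ≤ x l) → (∀ l, x l ≤ y l) →
      fU x i ≤ fU y i :=
    fun i x y hx hxy => mono_orthant (hgdiff i) (hpar i) hx hxy
  have hscale : ∀ (i : Fin N) (x : Fin N → ℝ), (∀ l, 0 ≤ x l) →
      ∀ z : ℝ, 0 ≤ z → z ≤ 1 → z * fU x i ≤ fU (z • x) i :=
    fun i x hx z h0 h1 =>
      scale_concave (hgsm i) (hg0 i) (fun j k p hp => hfUconc i j k p hp) hx h0 h1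
  have hRpos : ∀ l, (0:ℝ) ≤ Rstar l := fun l => (hRstar l).1.le
  have hFnn : ∀ i, 0 ≤ fU Rstar i := by
    intro i
    have h := hmono i 0 Rstar (fun l => le_refl 0) hRpos
    rw [hg0 i] at h
    exact h
  have hFpos : ∀ i, 0 < fU Rstar i := by
    intro i
    rcases (hFnn i).lt_or_eq with h | h
    · exact h
    · exfalso
      have hx := hfix i
      rw [← h] at hx
      simp at hx
      exact absurd hx (hRstar i).1.ne'
  have hfixid : ∀ i, δR i * Rstar i = (1 - Rstar i) * fU Rstar i := by
    intro i
    have hne : δR i + fU Rstar i ≠ 0 := ne_of_gt (by linarith [hδR i, hFpos i])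
    have hx := hfix i
    field_simp at hx
    nlinarith [hx]
  intro t ht
  have ht0 : (0:ℝ) ≤ t := ht.le
  set v : Fin N → ℝ → ℝ := fun k τ => u τ k / Rstar k with hvdef
  set d : Fin N → ℝ := fun k => ((1 - u t k) * fU (u t) k - δR k * u t k) / Rstar k with hddef
  have hdk : ∀ k, HasDerivAt (v k) (d k) t := fun k => (hsol k t ht0).div_const _
  have hbdd : BddBelow (Set.range fun k => v k t) := Finite.bddBelow_range _
  set zt : ℝ := ⨅ k, u t k / Rstar k with hztdef
  have hztv : zt = ⨅ k, v k t := rfl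
  obtain ⟨m0, hm0⟩ := Finite.exists_min (fun k => v k t)
  have hztm : zt = v m0 t := by
    rw [hztv]
    exact le_antisymm (ciInf_le hbdd m0) (le_ciInf hm0)
  have hzpos : 0 < zt := by
    rw [hztm]
    exact div_pos (hupos t ht0 m0).1 (hRstar m0).1
  have hkey : zt ≤ 1 → ∀ k : Fin N, v k t = zt →
      zt * (1 - zt) * fU Rstar k ≤ d k := by
    intro hz1 k hk
    have hRk : 0 < Rstar k := (hRstar k).1
    have hutk : u t k = zt * Rstar k := by
      have : u t k / Rstar k = zt := hk
      field_simp at this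
      linarith [this]
    have hge : ∀ l, zt * Rstar l ≤ u t l := by
      intro l
      have h1 : zt ≤ v l t := by rw [hztv]; exact ciInf_le hbdd l
      have h2 : zt ≤ u t l / Rstar l := h1
      calc zt * Rstar l ≤ (u t l / Rstar l) * Rstar l :=
            mul_le_mul_of_nonneg_right h2 (hRstar l).1.le
        _ = u t l := div_mul_cancel₀ _ (hRstar l).1.ne'
    have horth : ∀ l, (0:ℝ) ≤ (zt • Rstar) l := fun l => by
      simpa using mul_nonneg hzpos.le (hRpos l)
    have hle2 : ∀ l, (zt • Rstar) l ≤ u t l := fun l => by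
      simpa using hge l
    have step1 : zt * fU Rstar k ≤ fU (zt • Rstar) k :=
      hscale k Rstar hRpos zt hzpos.le hz1
    have step2 : fU (zt • Rstar) k ≤ fU (u t) k := hmono k _ _ horth hle2
    have hfk : zt * fU Rstar k ≤ fU (u t) k := step1.trans step2
    have h1u : (0:ℝ) ≤ 1 - u t k := by linarith [(hupos t ht0 k).2]
    have hmul : (1 - u t k) * (zt * fU Rstar k) ≤ (1 - u t k) * fU (u t) k :=
      mul_le_mul_of_nonneg_left hfk h1u
    have hfx := hfixid k
    have hnum : zt * (1 - zt) * fU Rstar k * Rstar k ≤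
        (1 - u t k) * fU (u t) k - δR k * u t k := by
      rw [hutk] at hmul ⊢
      nlinarith [hmul, hfx, hzpos.le]
    have hdkeq : d k = ((1 - u t k) * fU (u t) k - δR k * u t k) / Rstar k := rfl
    rw [hdkeq, le_div_iff₀ hRk]
    exact hnum
  constructor
  · intro hz1
    apply diniLower_iInf_ge hN v d t 0 hdk
    intro k hk
    have hb := hkey hz1 k (by rw [hk, ← hztv])
    have h0 : 0 ≤ zt * (1 - zt) * fU Rstar k :=
      mul_nonneg (mul_nonneg hzpos.le (by linarith)) (hFpos k).le
    linarith
  · intro hzlt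
    obtain ⟨k0, hk0⟩ := Finite.exists_min (fun k => fU Rstar k)
    have hcpos : 0 < zt * (1 - zt) * fU Rstar k0 :=
      mul_pos (mul_pos hzpos (by linarith)) (hFpos k0)
    refine lt_of_lt_of_le hcpos (diniLower_iInf_ge hN v d t _ hdk ?_)
    intro k hk
    have hb := hkey hzlt.le k (by rw [hk, ← hztv])
    calc zt * (1 - zt) * fU Rstar k0 ≤ zt * (1 - zt) * fU Rstar k := by
          apply mul_le_mul_of_nonneg_left (hk0 k)
          exact mul_nonneg hzpos.le (by linarith)
      _ ≤ d k := hb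
end
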